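/- arXiv:2302.12136 — 5 statements merged into one kernel-verified Lean document; each statement's English description precedes it below -/
import Mathlib

section
/- Let (x̄, ȳ, s̄, w̄, z̄) with w̄, z̄ ∈ {0,1}^T. Then (x̄, ȳ, s̄, w̄, z̄) is an extreme point of the polytope P1 = conv(Q1) if and only if (x̄, ȳ, s̄) is an extreme point of the polytope P(w̄,z̄) = conv(Q(w̄,z̄)). -/
noncomputable section

/-- Membership in the feasible region `Q1` of the warehouse problem with
time-dependent bounds, fixed costs and complementarity constraints.  Vectors
are encoded as `ℕ`-indexed real sequences that vanish outside the planning
horizon `{1,…,T}` (the stock `s` carries the initial stock at index `0`). -/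
def Q1mem (T : ℕ) (s0 : ℝ) (Ls Us Lx Ux Ly Uy : ℕ → ℝ)
    (x y s w z : ℕ → ℝ) : Prop :=
  s 0 = s0 ∧
  (∀ t, 1 ≤ t → t ≤ T →
    s t = s (t - 1) - y t + x t ∧
    x t * y t = 0 ∧
    Ls t ≤ s t ∧ s t ≤ Us t ∧
    Ly t * z t ≤ y t ∧ y t ≤ Uy t * z t ∧
    Lx t * w t ≤ x t ∧ x t ≤ Ux t * w t ∧
    (w t = 0 ∨ w t = 1) ∧ (z t = 0 ∨ z t = 1)) ∧
  (∀ t, ¬(1 ≤ t ∧ t ≤ T) →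
    x t = 0 ∧ y t = 0 ∧ w t = 0 ∧ z t = 0 ∧ (t ≠ 0 → s t = 0))

def Q1 (T : ℕ) (s0 : ℝ) (Ls Us Lx Ux Ly Uy : ℕ → ℝ) :
    Set ((ℕ → ℝ) × (ℕ → ℝ) × (ℕ → ℝ) × (ℕ → ℝ) × (ℕ → ℝ)) :=
  {p | Q1mem T s0 Ls Us Lx Ux Ly Uy p.1 p.2.1 p.2.2.1 p.2.2.2.1 p.2.2.2.2}

/-- The primed bound `L'` obtained from a bound `L` and a fixed binary vector `b`:
it equals `L t` when `b t = 1` and `0` when `b t = 0`. -/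
def primedBound (L : ℕ → ℝ) (b : ℕ → ℝ) : ℕ → ℝ := fun t => if b t = 1 then L t else 0

/-- Membership in the auxiliary feasible region `Q(w̄,z̄)` (binary variables
eliminated, with the primed bounds supplied as data). -/
def Qwzmem (T : ℕ) (s0 : ℝ) (Ls Us Lx' Ux' Ly' Uy' : ℕ → ℝ)
    (x y s : ℕ → ℝ) : Prop :=
  s 0 = s0 ∧
  (∀ t, 1 ≤ t → t ≤ T →
    s t = s (t - 1) - y t + x t ∧
    x t * y t = 0 ∧
    Ls t ≤ s t ∧ s t ≤ Us t ∧
    Ly' t ≤ y t ∧ y t ≤ Uy' t ∧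
    Lx' t ≤ x t ∧ x t ≤ Ux' t) ∧
  (∀ t, ¬(1 ≤ t ∧ t ≤ T) → x t = 0 ∧ y t = 0 ∧ (t ≠ 0 → s t = 0))

def Qwz (T : ℕ) (s0 : ℝ) (Ls Us Lx' Ux' Ly' Uy' : ℕ → ℝ) :
    Set ((ℕ → ℝ) × (ℕ → ℝ) × (ℕ → ℝ)) :=
  {p | Qwzmem T s0 Ls Us Lx' Ux' Ly' Uy' p.1 p.2.1 p.2.2}

abbrev E5 := (ℕ → ℝ) × (ℕ → ℝ) × (ℕ → ℝ) × (ℕ → ℝ) × (ℕ → ℝ)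
abbrev E3 := (ℕ → ℝ) × (ℕ → ℝ) × (ℕ → ℝ)

lemma face2 {a b p q v : ℝ} (ha : 0 < a) (hb : 0 < b)
    (hv : v = 0 ∨ v = 1) (hp0 : 0 ≤ p) (hp1 : p ≤ 1) (hq0 : 0 ≤ q) (hq1 : q ≤ 1)
    (h : a * p + b * q = v) (hab : a + b = 1) : p = v := by
  rcases hv with rfl | rfl
  · refine le_antisymm ?_ hp0
    nlinarith [mul_nonneg hb.le hq0]
  · refine le_antisymm hp1 ?_
    nlinarith [mul_nonneg hb.le (sub_nonneg.2 hq1)]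

lemma face_sum {ι : Type*} (t : Finset ι) (lam v : ι → ℝ) {c : ℝ}
    (hlam : ∀ i ∈ t, 0 ≤ lam i) (hsum : ∑ i ∈ t, lam i = 1)
    (hv : ∀ i ∈ t, v i = 0 ∨ v i = 1) (hc : c = 0 ∨ c = 1)
    (h : ∑ i ∈ t, lam i * v i = c) :
    ∀ i ∈ t, 0 < lam i → v i = c := by
  intro i hi hpos
  rcases hc with rfl | rfl
  · have h0 : ∀ j ∈ t, lam j * v j = 0 :=
      (Finset.sum_eq_zero_iff_of_nonneg (fun j hj => mul_nonneg (hlam j hj)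
        (by rcases hv j hj with h'|h' <;> simp [h']))).1 h
    rcases mul_eq_zero.1 (h0 i hi) with h' | h'
    · exact absurd h' hpos.ne'
    · exact h'
  · have key : ∑ j ∈ t, lam j * (1 - v j) = 0 := by
      simp only [mul_sub, mul_one, Finset.sum_sub_distrib, hsum, h, sub_self]
    have h0 : ∀ j ∈ t, lam j * (1 - v j) = 0 :=
      (Finset.sum_eq_zero_iff_of_nonneg (fun j hj => mul_nonneg (hlam j hj)
        (by rcases hv j hj with h'|h' <;> simp [h']))).1 key
    rcases mul_eq_zero.1 (h0 i hi) with h' | h'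
    · exact absurd h' hpos.ne'
    · linarith

lemma primedBound_eq (L β : ℕ → ℝ) (t : ℕ) (hβ : β t = 0 ∨ β t = 1) :
    primedBound L β t = L t * β t := by
  rcases hβ with h | h <;> simp [primedBound, h]

section Main

variable {T : ℕ} {s0 : ℝ} {Ls Us Lx Ux Ly Uy wb zb : ℕ → ℝ}
variable (hwb : ∀ t, 1 ≤ t → t ≤ T → wb t = 0 ∨ wb t = 1)
variable (hzb : ∀ t, 1 ≤ t → t ≤ T → zb t = 0 ∨ zb t = 1)
variable (hout : ∀ t, ¬(1 ≤ t ∧ t ≤ T) → wb t = 0 ∧ zb t = 0)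

include hwb hzb hout

lemma mem_Q1_of_Qwz {u : E3}
    (hu : u ∈ Qwz T s0 Ls Us (primedBound Lx wb) (primedBound Ux wb)
      (primedBound Ly zb) (primedBound Uy zb)) :
    (u.1, u.2.1, u.2.2, wb, zb) ∈ Q1 T s0 Ls Us Lx Ux Ly Uy := by
  obtain ⟨h0, hin, hext⟩ := hu
  refine ⟨h0, ?_, ?_⟩
  · intro t h1 h2
    obtain ⟨hs, hxy, hls, hus, hly, huy, hlx, hux⟩ := hin t h1 h2
    rw [primedBound_eq Ly zb t (hzb t h1 h2)] at hly
    rw [primedBound_eq Uy zb t (hzb t h1 h2)] at huy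
    rw [primedBound_eq Lx wb t (hwb t h1 h2)] at hlx
    rw [primedBound_eq Ux wb t (hwb t h1 h2)] at hux
    exact ⟨hs, hxy, hls, hus, hly, huy, hlx, hux, hwb t h1 h2, hzb t h1 h2⟩
  · intro t ht
    obtain ⟨hx, hy, hs⟩ := hext t ht
    exact ⟨hx, hy, (hout t ht).1, (hout t ht).2, hs⟩

omit hout in
lemma mem_Qwz_of_Q1 {q : E5}
    (hq : q ∈ Q1 T s0 Ls Us Lx Ux Ly Uy)
    (hw : q.2.2.2.1 = wb) (hz : q.2.2.2.2 = zb) :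
    (q.1, q.2.1, q.2.2.1) ∈ Qwz T s0 Ls Us (primedBound Lx wb) (primedBound Ux wb)
      (primedBound Ly zb) (primedBound Uy zb) := by
  obtain ⟨h0, hin, hext⟩ := hq
  refine ⟨h0, ?_, ?_⟩
  · intro t h1 h2
    obtain ⟨hs, hxy, hls, hus, hly, huy, hlx, hux, _, _⟩ := hin t h1 h2
    rw [hw] at hlx hux
    rw [hz] at hly huy
    rw [primedBound_eq Ly zb t (hzb t h1 h2), primedBound_eq Uy zb t (hzb t h1 h2),
      primedBound_eq Lx wb t (hwb t h1 h2), primedBound_eq Ux wb t (hwb t h1 h2)]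
    exact ⟨hs, hxy, hls, hus, hly, huy, hlx, hux⟩
  · intro t ht
    obtain ⟨hx, hy, _, _, hs⟩ := hext t ht
    exact ⟨hx, hy, hs⟩

omit hwb hzb hout in
lemma embed_combo' (a b : ℝ) (hab : a + b = 1) (u v : E3) :
    a • ((u.1, u.2.1, u.2.2, wb, zb) : E5) + b • (v.1, v.2.1, v.2.2, wb, zb)
      = ((a • u + b • v).1, (a • u + b • v).2.1, (a • u + b • v).2.2, wb, zb) := by
  have hwbe : a • wb + b • wb = wb := by
    funext t
    simp only [Pi.add_apply, Pi.smul_apply, smul_eq_mul]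
    rw [← add_mul, hab, one_mul]
  have hzbe : a • zb + b • zb = zb := by
    funext t
    simp only [Pi.add_apply, Pi.smul_apply, smul_eq_mul]
    rw [← add_mul, hab, one_mul]
  refine Prod.ext rfl (Prod.ext rfl (Prod.ext rfl (Prod.ext ?_ ?_)))
  · exact hwbe
  · exact hzbe

lemma embed_mem_convexHull_Q1 {u : E3}
    (hu : u ∈ convexHull ℝ (Qwz T s0 Ls Us (primedBound Lx wb) (primedBound Ux wb)
      (primedBound Ly zb) (primedBound Uy zb))) :
    (u.1, u.2.1, u.2.2, wb, zb) ∈ convexHull ℝ (Q1 T s0 Ls Us Lx Ux Ly Uy) := by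
  have hS : Convex ℝ {v : E3 |
      (v.1, v.2.1, v.2.2, wb, zb) ∈ convexHull ℝ (Q1 T s0 Ls Us Lx Ux Ly Uy)} := by
    intro p hp q hq a b ha hb hab
    have key := embed_combo' (wb := wb) (zb := zb) a b hab p q
    show ((a • p + b • q).1, (a • p + b • q).2.1, (a • p + b • q).2.2, wb, zb)
      ∈ convexHull ℝ (Q1 T s0 Ls Us Lx Ux Ly Uy)
    rw [← key]
    exact (convex_convexHull ℝ _) hp hq ha hb hab
  have hsub : Qwz T s0 Ls Us (primedBound Lx wb) (primedBound Ux wb)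
      (primedBound Ly zb) (primedBound Uy zb) ⊆ {v : E3 |
      (v.1, v.2.1, v.2.2, wb, zb) ∈ convexHull ℝ (Q1 T s0 Ls Us Lx Ux Ly Uy)} :=
    fun v hv => subset_convexHull ℝ _ (mem_Q1_of_Qwz hwb hzb hout hv)
  exact convexHull_min hsub hS hu

lemma proj_mem_convexHull_Qwz {p : E5}
    (hp : p ∈ convexHull ℝ (Q1 T s0 Ls Us Lx Ux Ly Uy))
    (hw : p.2.2.2.1 = wb) (hz : p.2.2.2.2 = zb) :
    (p.1, p.2.1, p.2.2.1) ∈ convexHull ℝ (Qwz T s0 Ls Us (primedBound Lx wb)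
      (primedBound Ux wb) (primedBound Ly zb) (primedBound Uy zb)) := by
  classical
  rw [convexHull_eq] at hp
  obtain ⟨ι, t, lam, q, hlam, hsum, hq, hcm⟩ := hp
  rw [Finset.centerMass_eq_of_sum_1 _ _ hsum] at hcm
  have hwcomp : ∀ s, ∑ i ∈ t, lam i * (q i).2.2.2.1 s = wb s := by
    intro s
    have h1 : (∑ i ∈ t, lam i • q i).2.2.2.1 s = ∑ i ∈ t, lam i * (q i).2.2.2.1 s := by
      simp [Prod.fst_sum, Prod.snd_sum, Finset.sum_apply]
    rw [← h1, hcm, hw]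
  have hzcomp : ∀ s, ∑ i ∈ t, lam i * (q i).2.2.2.2 s = zb s := by
    intro s
    have h1 : (∑ i ∈ t, lam i • q i).2.2.2.2 s = ∑ i ∈ t, lam i * (q i).2.2.2.2 s := by
      simp [Prod.fst_sum, Prod.snd_sum, Finset.sum_apply]
    rw [← h1, hcm, hz]
  have hqw : ∀ i ∈ t, 0 < lam i → (q i).2.2.2.1 = wb := by
    intro i hi hpos
    funext s
    by_cases hs : 1 ≤ s ∧ s ≤ T
    · exact face_sum t lam (fun j => (q j).2.2.2.1 s) hlam hsum
        (fun j hj => ((hq j hj).2.1 s hs.1 hs.2).2.2.2.2.2.2.2.2.1)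
        (hwb s hs.1 hs.2) (hwcomp s) i hi hpos
    · rw [((hq i hi).2.2 s hs).2.2.1, (hout s hs).1]
  have hqz : ∀ i ∈ t, 0 < lam i → (q i).2.2.2.2 = zb := by
    intro i hi hpos
    funext s
    by_cases hs : 1 ≤ s ∧ s ≤ T
    · exact face_sum t lam (fun j => (q j).2.2.2.2 s) hlam hsum
        (fun j hj => ((hq j hj).2.1 s hs.1 hs.2).2.2.2.2.2.2.2.2.2)
        (hzb s hs.1 hs.2) (hzcomp s) i hi hpos
    · rw [((hq i hi).2.2 s hs).2.2.2.1, (hout s hs).2]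
  have hproj : (p.1, p.2.1, p.2.2.1)
      = ∑ i ∈ t, lam i • (((q i).1, (q i).2.1, (q i).2.2.1) : E3) := by
    subst hcm
    refine Prod.ext ?_ (Prod.ext ?_ ?_) <;>
      simp [Prod.fst_sum, Prod.snd_sum]
  rw [hproj]
  have hfil : ∀ i ∈ t, (lam i • (((q i).1, (q i).2.1, (q i).2.2.1) : E3)) ≠ 0 → 0 < lam i := by
    intro i hi hne
    refine (hlam i hi).lt_of_ne fun h0 => hne ?_
    rw [← h0, zero_smul]
  rw [← Finset.sum_filter_of_ne hfil]
  refine Convex.sum_mem (convex_convexHull ℝ _)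
    (fun i hi => hlam i (Finset.mem_filter.1 hi).1) ?_ ?_
  · rw [Finset.sum_filter_of_ne (fun i hi hne => (hlam i hi).lt_of_ne (Ne.symm hne))]
    exact hsum
  · intro i hi
    obtain ⟨hit, hipos⟩ := Finset.mem_filter.1 hi
    exact subset_convexHull ℝ _
      (mem_Qwz_of_Q1 hwb hzb (hq i hit) (hqw i hit hipos) (hqz i hit hipos))

omit hwb hzb hout in
lemma comp_bounds {ι : Type*} (t : Finset ι) (lam v : ι → ℝ)
    (hlam : ∀ i ∈ t, 0 ≤ lam i) (hsum : ∑ i ∈ t, lam i = 1)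
    (hv : ∀ i ∈ t, v i = 0 ∨ v i = 1) :
    0 ≤ ∑ i ∈ t, lam i * v i ∧ ∑ i ∈ t, lam i * v i ≤ 1 := by
  constructor
  · refine Finset.sum_nonneg fun i hi => mul_nonneg (hlam i hi) ?_
    rcases hv i hi with h | h <;> simp [h]
  · rw [← hsum]
    refine Finset.sum_le_sum fun i hi => ?_
    rcases hv i hi with h | h <;> simp [h, hlam i hi]

omit hwb hzb hout in
lemma convexHull_Q1_bounds {p : E5}
    (hp : p ∈ convexHull ℝ (Q1 T s0 Ls Us Lx Ux Ly Uy)) :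
    ∀ t, (0 ≤ p.2.2.2.1 t ∧ p.2.2.2.1 t ≤ 1 ∧ 0 ≤ p.2.2.2.2 t ∧ p.2.2.2.2 t ≤ 1) ∧
      (¬(1 ≤ t ∧ t ≤ T) → p.2.2.2.1 t = 0 ∧ p.2.2.2.2 t = 0) := by
  rw [convexHull_eq] at hp
  obtain ⟨ι, t, lam, q, hlam, hsum, hq, hcm⟩ := hp
  rw [Finset.centerMass_eq_of_sum_1 _ _ hsum] at hcm
  subst hcm
  intro s
  have hw1 : (∑ i ∈ t, lam i • q i).2.2.2.1 s = ∑ i ∈ t, lam i * (q i).2.2.2.1 s := by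
    simp [Prod.fst_sum, Prod.snd_sum, Finset.sum_apply]
  have hz1 : (∑ i ∈ t, lam i • q i).2.2.2.2 s = ∑ i ∈ t, lam i * (q i).2.2.2.2 s := by
    simp [Prod.fst_sum, Prod.snd_sum, Finset.sum_apply]
  by_cases hs : 1 ≤ s ∧ s ≤ T
  · have bw := comp_bounds t lam (fun j => (q j).2.2.2.1 s) hlam hsum
      (fun j hj => ((hq j hj).2.1 s hs.1 hs.2).2.2.2.2.2.2.2.2.1)
    have bz := comp_bounds t lam (fun j => (q j).2.2.2.2 s) hlam hsum
      (fun j hj => ((hq j hj).2.1 s hs.1 hs.2).2.2.2.2.2.2.2.2.2)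
    rw [hw1, hz1]
    exact ⟨⟨bw.1, bw.2, bz.1, bz.2⟩, fun h => absurd hs h⟩
  · have hw0 : ∑ i ∈ t, lam i * (q i).2.2.2.1 s = 0 :=
      Finset.sum_eq_zero fun i hi => by rw [((hq i hi).2.2 s hs).2.2.1, mul_zero]
    have hz0 : ∑ i ∈ t, lam i * (q i).2.2.2.2 s = 0 :=
      Finset.sum_eq_zero fun i hi => by rw [((hq i hi).2.2 s hs).2.2.2.1, mul_zero]
    rw [hw1, hz1, hw0, hz0]
    norm_num

end Main

/-- **Lemma 1**: `(x̄,ȳ,s̄,w̄,z̄)` (with `w̄,z̄ ∈ {0,1}^T`) is an extreme point of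
`P1 = conv(Q1)` iff `(x̄,ȳ,s̄)` is an extreme point of `P(w̄,z̄) = conv(Q(w̄,z̄))`. -/
theorem extremePoint_Q1_iff_extremePoint_Qwz
    (T : ℕ) (hT : 1 ≤ T) (s0 : ℝ) (Ls Us Lx Ux Ly Uy : ℕ → ℝ)
    (hnn : ∀ t, 1 ≤ t → t ≤ T →
      0 ≤ Ls t ∧ 0 ≤ Us t ∧ 0 ≤ Lx t ∧ 0 ≤ Ux t ∧ 0 ≤ Ly t ∧ 0 ≤ Uy t)
    (xb yb sb wb zb : ℕ → ℝ)
    (hwb : ∀ t, 1 ≤ t → t ≤ T → wb t = 0 ∨ wb t = 1)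
    (hzb : ∀ t, 1 ≤ t → t ≤ T → zb t = 0 ∨ zb t = 1)
    (hout : ∀ t, ¬(1 ≤ t ∧ t ≤ T) → wb t = 0 ∧ zb t = 0) :
    (xb, yb, sb, wb, zb) ∈
        Set.extremePoints ℝ (convexHull ℝ (Q1 T s0 Ls Us Lx Ux Ly Uy)) ↔
      (xb, yb, sb) ∈
        Set.extremePoints ℝ (convexHull ℝ (Qwz T s0 Ls Us
          (primedBound Lx wb) (primedBound Ux wb)
          (primedBound Ly zb) (primedBound Uy zb))) := by
  constructor
  · intro h
    rw [mem_extremePoints] at h ⊢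
    obtain ⟨hmem, hext⟩ := h
    refine ⟨proj_mem_convexHull_Qwz hwb hzb hout hmem rfl rfl, ?_⟩
    rintro u1 hu1 u2 hu2 ⟨a, b, ha, hb, hab, heq⟩
    have e1 := embed_mem_convexHull_Q1 hwb hzb hout hu1
    have e2 := embed_mem_convexHull_Q1 hwb hzb hout hu2
    have hbig : ((xb, yb, sb, wb, zb) : E5) ∈ openSegment ℝ
        (u1.1, u1.2.1, u1.2.2, wb, zb) (u2.1, u2.2.1, u2.2.2, wb, zb) := by
      refine ⟨a, b, ha, hb, hab, ?_⟩
      rw [embed_combo' (wb := wb) (zb := zb) a b hab u1 u2, heq]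
    obtain ⟨g1, g2⟩ := hext _ e1 _ e2 hbig
    constructor
    · have h1 : u1.1 = xb := by exact congrArg (fun r : E5 => r.1) g1
      have h2 : u1.2.1 = yb := by exact congrArg (fun r : E5 => r.2.1) g1
      have h3 : u1.2.2 = sb := by exact congrArg (fun r : E5 => r.2.2.1) g1
      exact Prod.ext h1 (Prod.ext h2 h3)
    · have h1 : u2.1 = xb := by exact congrArg (fun r : E5 => r.1) g2
      have h2 : u2.2.1 = yb := by exact congrArg (fun r : E5 => r.2.1) g2
      have h3 : u2.2.2 = sb := by exact congrArg (fun r : E5 => r.2.2.1) g2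
      exact Prod.ext h1 (Prod.ext h2 h3)
  · intro h
    rw [mem_extremePoints] at h ⊢
    obtain ⟨hmem, hext⟩ := h
    refine ⟨embed_mem_convexHull_Q1 hwb hzb hout hmem, ?_⟩
    rintro p1 hp1 p2 hp2 ⟨a, b, ha, hb, hab, heq⟩
    have hbnd1 := convexHull_Q1_bounds hp1
    have hbnd2 := convexHull_Q1_bounds hp2
    have hcomp : ∀ s : ℕ, a * p1.2.2.2.1 s + b * p2.2.2.2.1 s = wb s ∧
        a * p1.2.2.2.2 s + b * p2.2.2.2.2 s = zb s := by
      intro s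
      constructor
      · have := congrArg (fun r : E5 => r.2.2.2.1 s) heq
        simpa using this
      · have := congrArg (fun r : E5 => r.2.2.2.2 s) heq
        simpa using this
    have hw1 : p1.2.2.2.1 = wb := funext fun s => by
      by_cases hs : 1 ≤ s ∧ s ≤ T
      · exact face2 ha hb (hwb s hs.1 hs.2) (hbnd1 s).1.1 (hbnd1 s).1.2.1
          (hbnd2 s).1.1 (hbnd2 s).1.2.1 (hcomp s).1 hab
      · rw [((hbnd1 s).2 hs).1, (hout s hs).1]
    have hz1 : p1.2.2.2.2 = zb := funext fun s => by
      by_cases hs : 1 ≤ s ∧ s ≤ T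
      · exact face2 ha hb (hzb s hs.1 hs.2) (hbnd1 s).1.2.2.1 (hbnd1 s).1.2.2.2
          (hbnd2 s).1.2.2.1 (hbnd2 s).1.2.2.2 (hcomp s).2 hab
      · rw [((hbnd1 s).2 hs).2, (hout s hs).2]
    have hw2 : p2.2.2.2.1 = wb := funext fun s => by
      by_cases hs : 1 ≤ s ∧ s ≤ T
      · refine face2 hb ha (hwb s hs.1 hs.2) (hbnd2 s).1.1 (hbnd2 s).1.2.1
          (hbnd1 s).1.1 (hbnd1 s).1.2.1 ?_ (by linarith)
        linarith [(hcomp s).1]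
      · rw [((hbnd2 s).2 hs).1, (hout s hs).1]
    have hz2 : p2.2.2.2.2 = zb := funext fun s => by
      by_cases hs : 1 ≤ s ∧ s ≤ T
      · refine face2 hb ha (hzb s hs.1 hs.2) (hbnd2 s).1.2.2.1 (hbnd2 s).1.2.2.2
          (hbnd1 s).1.2.2.1 (hbnd1 s).1.2.2.2 ?_ (by linarith)
        linarith [(hcomp s).2]
      · rw [((hbnd2 s).2 hs).2, (hout s hs).2]
    have hq1 := proj_mem_convexHull_Qwz hwb hzb hout hp1 hw1 hz1
    have hq2 := proj_mem_convexHull_Qwz hwb hzb hout hp2 hw2 hz2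
    have hsegsmall : ((xb, yb, sb) : E3) ∈ openSegment ℝ
        (p1.1, p1.2.1, p1.2.2.1) (p2.1, p2.2.1, p2.2.2.1) := by
      refine ⟨a, b, ha, hb, hab, ?_⟩
      have h1 : a • p1.1 + b • p2.1 = xb := by exact congrArg (fun r : E5 => r.1) heq
      have h2 : a • p1.2.1 + b • p2.2.1 = yb := by exact congrArg (fun r : E5 => r.2.1) heq
      have h3 : a • p1.2.2.1 + b • p2.2.2.1 = sb := by
        exact congrArg (fun r : E5 => r.2.2.1) heq
      exact Prod.ext h1 (Prod.ext h2 h3)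
    obtain ⟨g1, g2⟩ := hext _ hq1 _ hq2 hsegsmall
    constructor
    · have h1 : p1.1 = xb := by exact congrArg (fun r : E3 => r.1) g1
      have h2 : p1.2.1 = yb := by exact congrArg (fun r : E3 => r.2.1) g1
      have h3 : p1.2.2.1 = sb := by exact congrArg (fun r : E3 => r.2.2) g1
      exact Prod.ext h1 (Prod.ext h2 (Prod.ext h3 (Prod.ext hw1 hz1)))
    · have h1 : p2.1 = xb := by exact congrArg (fun r : E3 => r.1) g2
      have h2 : p2.2.1 = yb := by exact congrArg (fun r : E3 => r.2.1) g2
      have h3 : p2.2.2.1 = sb := by exact congrArg (fun r : E3 => r.2.2) g2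
      exact Prod.ext h1 (Prod.ext h2 (Prod.ext h3 (Prod.ext hw2 hz2)))
end
end

section
/- A point p = (x, y, s) ∈ Q(w̄,z̄) is an extreme point of the polytope P(w̄,z̄) = conv(Q(w̄,z̄)) if and only if p is a critical point of Q(w̄,z̄); that is, the set of extreme points of P(w̄,z̄) equals the set of critical points of Q(w̄,z̄). -/
noncomputable section

/-- The set `ET(p)` of stock-extreme time periods (together with `0`). -/
def stockExtremeTimes (T : ℕ) (Ls Us : ℕ → ℝ) (s : ℕ → ℝ) : Set ℕ :=
  {0} ∪ {t | 1 ≤ t ∧ t ≤ T ∧ (s t = Ls t ∨ s t = Us t)}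

/-- The set `ST(p)` of sub-extreme time periods. -/
def subExtremeTimes (T : ℕ) (Lx' Ux' Ly' Uy' : ℕ → ℝ) (x y : ℕ → ℝ) : Set ℕ :=
  {t | 1 ≤ t ∧ t ≤ T ∧
    ((Ly' t < y t ∧ y t < Uy' t) ∨ (Lx' t < x t ∧ x t < Ux' t))}

/-- `p = (x,y,s)` is a critical point: every stock-extreme interval `(a,b]`
(with `a,b` consecutive elements of `ET(p)`) contains at most one sub-extreme
time period, and the last interval `(max ET(p), T]` contains none. -/
def IsCriticalPoint (T : ℕ) (Ls Us Lx' Ux' Ly' Uy' : ℕ → ℝ)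
    (x y s : ℕ → ℝ) : Prop :=
  (∀ a ∈ stockExtremeTimes T Ls Us s, ∀ b ∈ stockExtremeTimes T Ls Us s,
    a < b → (∀ c ∈ stockExtremeTimes T Ls Us s, ¬(a < c ∧ c < b)) →
    (subExtremeTimes T Lx' Ux' Ly' Uy' x y ∩ Set.Ioc a b).Subsingleton) ∧
  subExtremeTimes T Lx' Ux' Ly' Uy' x y ∩
      Set.Ioc (sSup (stockExtremeTimes T Ls Us s)) T = ∅

/-!
A critical point is extreme already in the linear relaxation obtained by dropping
complementarity, which contains `P(w̄,z̄)`. Along a segment through the point, every coordinate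
sitting at one of its bounds is frozen, so flows can only move at sub-extreme periods. Each such
period `t` is the only one in its stock-extreme interval, whose end stocks are frozen, so the net
flow `x t - y t` is frozen too; as one of `x t`, `y t` is zero at its (nonnegative) lower bound,
both flows are.

Conversely, if a stock-extreme interval contains two sub-extreme periods `t₁ < t₂` (or the last
interval contains one, `t₁`, and `t₂ = T + 1`), moving a little net flow from `t₂` to `t₁` changes
the stock only on `[t₁, t₂)`, where it is strictly between its bounds. Both directions of this
move stay in `Q(w̄,z̄)`, so the point is a midpoint.
-/

open Set Filter Topology

lemma eq_of_mem_openSegment_of_mem_Icc {a b c L U : ℝ} (hseg : a ∈ openSegment ℝ b c)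
    (hb : b ∈ Icc L U) (hc : c ∈ Icc L U) (ha : a = L ∨ a = U) : b = a := by
  have hext : a ∈ extremePoints ℝ (Icc L U) := by
    rw [extremePoints_Icc (hb.1.trans hb.2)]
    exact ha
  exact ((mem_extremePoints.1 hext).2 b hb c hc hseg).1

lemma eventually_add_mul_mem_Icc {a d L U : ℝ} (ha : a ∈ Icc L U) (hd : d ≠ 0 → a ∈ Ioo L U) :
    ∀ᶠ δ in 𝓝 (0 : ℝ), a + δ * d ∈ Icc L U := by
  rcases eq_or_ne d 0 with rfl | hd0
  · simpa using ha
  · have hlim : Tendsto (fun δ : ℝ => a + δ * d) (𝓝 0) (𝓝 a) := by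
      have hcont : Continuous fun δ : ℝ => a + δ * d := by fun_prop
      simpa using hcont.tendsto 0
    exact (hlim.eventually (isOpen_Ioo.mem_nhds (hd hd0))).mono fun _ h => Ioo_subset_Icc_self h

lemma notMem_extremePoints_of_eventually_add_smul_mem {E : Type*} [AddCommGroup E] [Module ℝ E]
    {B : Set E} {p d : E} (hd : d ≠ 0) (h : ∀ᶠ δ in 𝓝 (0 : ℝ), p + δ • d ∈ B) :
    p ∉ extremePoints ℝ B := by
  obtain ⟨ε, hε, hball⟩ := Metric.eventually_nhds_iff.1 h
  have hδ : dist (ε / 2) 0 < ε := by rw [Real.dist_0_eq_abs, abs_of_pos (by positivity)]; linarith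
  have hδ' : dist (-(ε / 2)) 0 < ε := by rwa [Real.dist_0_eq_abs, abs_neg, ← Real.dist_0_eq_abs]
  have hadd : p + (ε / 2) • d ∈ B := hball hδ
  have hsub : p - (ε / 2) • d ∈ B := by simpa [neg_smul, ← sub_eq_add_neg] using hball hδ'
  intro hp
  have hfix := ((mem_extremePoints.1 hp).2 _ hsub _ hadd (mem_openSegment_sub_add p _)).1
  rw [sub_eq_self, smul_eq_zero] at hfix
  exact hfix.elim (by positivity) hd

lemma Nat.exists_consecutive_mem_around {S : Set ℕ} {t : ℕ} (hlt : ∃ a ∈ S, a < t)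
    (hge : ∃ b ∈ S, t ≤ b) :
    ∃ a ∈ S, ∃ b ∈ S, a < t ∧ t ≤ b ∧ ∀ c ∈ S, ¬(a < c ∧ c < b) := by
  classical
  obtain ⟨a₀, ha₀, ha₀t⟩ := hlt
  have hge' : ∃ b, b ∈ S ∧ t ≤ b := by simpa using hge
  refine ⟨Nat.findGreatest (· ∈ S) (t - 1), Nat.findGreatest_spec (by omega) ha₀,
    Nat.find hge', (Nat.find_spec hge').1, ?_, (Nat.find_spec hge').2, ?_⟩
  · have := Nat.findGreatest_le (P := (· ∈ S)) (t - 1)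
    omega
  · rintro c hc ⟨hac, hcb⟩
    rcases lt_or_ge c t with hct | hct
    · exact (Nat.le_findGreatest (P := (· ∈ S)) (by omega) hc).not_gt hac
    · exact (Nat.find_min' hge' ⟨hc, hct⟩).not_gt hcb

lemma stock_eq_add_sum_Ioc {x y s : ℕ → ℝ} {a b : ℕ} (hab : a ≤ b)
    (hrec : ∀ t ∈ Finset.Ioc a b, s t = s (t - 1) - y t + x t) :
    s b = s a + ∑ t ∈ Finset.Ioc a b, (x t - y t) := by
  induction b, hab using Nat.le_induction with
  | base => simp
  | succ b hab ih =>
    rw [Finset.sum_Ioc_succ_top hab, hrec (b + 1) (Finset.mem_Ioc.2 ⟨by omega, le_rfl⟩),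
      Nat.add_sub_cancel,
      ih fun t ht => hrec t (Finset.Ioc_subset_Ioc_right (Nat.le_succ b) ht)]
    ring

def QwzRelaxation (T : ℕ) (s0 : ℝ) (Ls Us Lx' Ux' Ly' Uy' : ℕ → ℝ) :
    Set ((ℕ → ℝ) × (ℕ → ℝ) × (ℕ → ℝ)) :=
  {p | p.2.2 0 = s0 ∧
    (∀ t, 1 ≤ t → t ≤ T →
      p.2.2 t = p.2.2 (t - 1) - p.2.1 t + p.1 t ∧
      p.2.2 t ∈ Icc (Ls t) (Us t) ∧ p.2.1 t ∈ Icc (Ly' t) (Uy' t) ∧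
      p.1 t ∈ Icc (Lx' t) (Ux' t)) ∧
    (∀ t, ¬(1 ≤ t ∧ t ≤ T) → p.1 t = 0 ∧ p.2.1 t = 0 ∧ (t ≠ 0 → p.2.2 t = 0))}

section

variable {T : ℕ} {s0 : ℝ} {Ls Us Lx Ux Ly Uy : ℕ → ℝ}

lemma Qwz_subset_QwzRelaxation :
    Qwz T s0 Ls Us Lx Ux Ly Uy ⊆ QwzRelaxation T s0 Ls Us Lx Ux Ly Uy := by
  rintro p ⟨h0, hmid, hout⟩
  refine ⟨h0, fun t h1 h2 => ?_, hout⟩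
  obtain ⟨hrec, -, hs, hs', hy, hy', hx, hx'⟩ := hmid t h1 h2
  exact ⟨hrec, ⟨hs, hs'⟩, ⟨hy, hy'⟩, ⟨hx, hx'⟩⟩

lemma convex_QwzRelaxation : Convex ℝ (QwzRelaxation T s0 Ls Us Lx Ux Ly Uy) := by
  rintro p ⟨hp0, hp, hpout⟩ q ⟨hq0, hq, hqout⟩ a b ha hb hab
  simp only [QwzRelaxation, mem_ofPred_eq, Prod.fst_add, Prod.snd_add, Prod.smul_fst,
    Prod.smul_snd, Pi.add_apply, Pi.smul_apply]
  refine ⟨by rw [hp0, hq0, Convex.combo_self hab], fun t h1 h2 => ?_, fun t ht => ?_⟩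
  · obtain ⟨hprec, hps, hpy, hpx⟩ := hp t h1 h2
    obtain ⟨hqrec, hqs, hqy, hqx⟩ := hq t h1 h2
    refine ⟨by rw [hprec, hqrec]; module, convex_Icc _ _ hps hqs ha hb hab,
      convex_Icc _ _ hpy hqy ha hb hab, convex_Icc _ _ hpx hqx ha hb hab⟩
  · obtain ⟨hpx, hpy, hps⟩ := hpout t ht
    obtain ⟨hqx, hqy, hqs⟩ := hqout t ht
    exact ⟨by simp [hpx, hqx], by simp [hpy, hqy], fun h => by simp [hps h, hqs h]⟩

lemma QwzRelaxation.eq_of_flows_eq {p q : (ℕ → ℝ) × (ℕ → ℝ) × (ℕ → ℝ)}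
    (hp : p ∈ QwzRelaxation T s0 Ls Us Lx Ux Ly Uy) (hq : q ∈ QwzRelaxation T s0 Ls Us Lx Ux Ly Uy)
    (h : ∀ t, 1 ≤ t → t ≤ T → q.1 t = p.1 t ∧ q.2.1 t = p.2.1 t) : q = p := by
  have hx : q.1 = p.1 := funext fun t =>
    if ht : 1 ≤ t ∧ t ≤ T then (h t ht.1 ht.2).1 else (hq.2.2 t ht).1.trans (hp.2.2 t ht).1.symm
  have hy : q.2.1 = p.2.1 := funext fun t =>
    if ht : 1 ≤ t ∧ t ≤ T then (h t ht.1 ht.2).2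
    else (hq.2.2 t ht).2.1.trans (hp.2.2 t ht).2.1.symm
  have hs : q.2.2 = p.2.2 := funext fun t => by
    induction t with
    | zero => rw [hq.1, hp.1]
    | succ n ih =>
      by_cases hn : n + 1 ≤ T
      · rw [(hq.2.1 _ (by omega) hn).1, (hp.2.1 _ (by omega) hn).1, Nat.add_sub_cancel, ih, hx, hy]
      · rw [(hq.2.2 _ (by omega)).2.2 (by omega), (hp.2.2 _ (by omega)).2.2 (by omega)]
  exact Prod.ext hx (Prod.ext hy hs)

lemma QwzRelaxation.eq_of_mem_openSegment_of_bound {p q r : (ℕ → ℝ) × (ℕ → ℝ) × (ℕ → ℝ)}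
    (hq : q ∈ QwzRelaxation T s0 Ls Us Lx Ux Ly Uy) (hr : r ∈ QwzRelaxation T s0 Ls Us Lx Ux Ly Uy)
    (hseg : p ∈ openSegment ℝ q r) {t : ℕ} (h1 : 1 ≤ t) (hT : t ≤ T) :
    ((p.1 t = Lx t ∨ p.1 t = Ux t) → q.1 t = p.1 t) ∧
      ((p.2.1 t = Ly t ∨ p.2.1 t = Uy t) → q.2.1 t = p.2.1 t) ∧
      ((p.2.2 t = Ls t ∨ p.2.2 t = Us t) → q.2.2 t = p.2.2 t) := by
  obtain ⟨hsegx, hsegys⟩ := Prod.openSegment_subset _ _ hseg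
  obtain ⟨hsegy, hsegs⟩ := Prod.openSegment_subset _ _ hsegys
  obtain ⟨-, hqs, hqy, hqx⟩ := hq.2.1 t h1 hT
  obtain ⟨-, hrs, hry, hrx⟩ := hr.2.1 t h1 hT
  exact ⟨eq_of_mem_openSegment_of_mem_Icc (Pi.openSegment_subset (s := univ) _ _ hsegx t trivial)
      hqx hrx,
    eq_of_mem_openSegment_of_mem_Icc (Pi.openSegment_subset (s := univ) _ _ hsegy t trivial)
      hqy hry,
    eq_of_mem_openSegment_of_mem_Icc (Pi.openSegment_subset (s := univ) _ _ hsegs t trivial)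
      hqs hrs⟩

lemma zero_mem_stockExtremeTimes (s : ℕ → ℝ) : 0 ∈ stockExtremeTimes T Ls Us s := Or.inl rfl

lemma le_of_mem_stockExtremeTimes {s : ℕ → ℝ} {t : ℕ} (ht : t ∈ stockExtremeTimes T Ls Us s) :
    t ≤ T := by
  rcases ht with rfl | ⟨-, htT, -⟩
  exacts [Nat.zero_le T, htT]

lemma bddAbove_stockExtremeTimes (s : ℕ → ℝ) : BddAbove (stockExtremeTimes T Ls Us s) :=
  ⟨T, fun _ => le_of_mem_stockExtremeTimes⟩

lemma sSup_stockExtremeTimes_mem (s : ℕ → ℝ) :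
    sSup (stockExtremeTimes T Ls Us s) ∈ stockExtremeTimes T Ls Us s :=
  Nat.sSup_mem ⟨0, zero_mem_stockExtremeTimes s⟩ (bddAbove_stockExtremeTimes s)

lemma mem_Ioo_of_notMem_stockExtremeTimes {x y s : ℕ → ℝ} (hp : Qwzmem T s0 Ls Us Lx Ux Ly Uy x y s)
    {t : ℕ} (h1 : 1 ≤ t) (hT : t ≤ T) (ht : t ∉ stockExtremeTimes T Ls Us s) :
    s t ∈ Ioo (Ls t) (Us t) := by
  obtain ⟨-, -, hL, hU, -⟩ := hp.2.1 t h1 hT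
  have hne : s t ≠ Ls t ∧ s t ≠ Us t := not_or.1 fun h => ht (Or.inr ⟨h1, hT, h⟩)
  exact ⟨hL.lt_of_ne hne.1.symm, hU.lt_of_ne hne.2⟩

lemma bounds_of_notMem_subExtremeTimes {x y s : ℕ → ℝ} (hp : Qwzmem T s0 Ls Us Lx Ux Ly Uy x y s)
    {t : ℕ} (h1 : 1 ≤ t) (hT : t ≤ T) (ht : t ∉ subExtremeTimes T Lx Ux Ly Uy x y) :
    (x t = Lx t ∨ x t = Ux t) ∧ (y t = Ly t ∨ y t = Uy t) := by
  obtain ⟨-, -, -, -, hyL, hyU, hxL, hxU⟩ := hp.2.1 t h1 hT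
  have hnot : ¬(Ly t < y t ∧ y t < Uy t) ∧ ¬(Lx t < x t ∧ x t < Ux t) :=
    not_or.1 fun h => ht ⟨h1, hT, h⟩
  constructor
  · rcases hxL.eq_or_lt with h | h
    exacts [Or.inl h.symm, Or.inr (hxU.antisymm (not_lt.1 fun h' => hnot.2 ⟨h, h'⟩))]
  · rcases hyL.eq_or_lt with h | h
    exacts [Or.inl h.symm, Or.inr (hyU.antisymm (not_lt.1 fun h' => hnot.1 ⟨h, h'⟩))]

lemma subExtremeTimes_cases (hLx : ∀ t, 1 ≤ t → t ≤ T → 0 ≤ Lx t)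
    (hLy : ∀ t, 1 ≤ t → t ≤ T → 0 ≤ Ly t) {x y s : ℕ → ℝ}
    (hp : Qwzmem T s0 Ls Us Lx Ux Ly Uy x y s) {t : ℕ}
    (ht : t ∈ subExtremeTimes T Lx Ux Ly Uy x y) :
    (0 < x t ∧ y t = 0 ∧ x t ∈ Ioo (Lx t) (Ux t)) ∨
      (0 < y t ∧ x t = 0 ∧ y t ∈ Ioo (Ly t) (Uy t)) := by
  obtain ⟨h1, hT, hfrac⟩ := ht
  have hxy := (hp.2.1 t h1 hT).2.1
  rcases hfrac with hy | hx
  · have hy0 : 0 < y t := (hLy t h1 hT).trans_lt hy.1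
    exact Or.inr ⟨hy0, (mul_eq_zero.1 hxy).resolve_right hy0.ne', hy⟩
  · have hx0 : 0 < x t := (hLx t h1 hT).trans_lt hx.1
    exact Or.inl ⟨hx0, (mul_eq_zero.1 hxy).resolve_left hx0.ne', hx⟩

lemma IsCriticalPoint.exists_stockExtreme_around {x y s : ℕ → ℝ}
    (hc : IsCriticalPoint T Ls Us Lx Ux Ly Uy x y s) {t : ℕ}
    (ht : t ∈ subExtremeTimes T Lx Ux Ly Uy x y) :
    ∃ a ∈ stockExtremeTimes T Ls Us s, ∃ b ∈ stockExtremeTimes T Ls Us s, a < t ∧ t ≤ b ∧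
      ∀ c ∈ subExtremeTimes T Lx Ux Ly Uy x y, c ∈ Ioc a b → c = t := by
  have htM : t ≤ sSup (stockExtremeTimes T Ls Us s) := by
    by_contra! h
    have hmem : t ∈ subExtremeTimes T Lx Ux Ly Uy x y ∩
        Ioc (sSup (stockExtremeTimes T Ls Us s)) T := ⟨ht, h, ht.2.1⟩
    rw [hc.2] at hmem
    exact hmem
  obtain ⟨a, ha, b, hb, hat, htb, hcons⟩ := Nat.exists_consecutive_mem_around
    ⟨0, zero_mem_stockExtremeTimes s, ht.1⟩ ⟨_, sSup_stockExtremeTimes_mem s, htM⟩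
  exact ⟨a, ha, b, hb, hat, htb, fun c hc' hcI =>
    hc.1 a ha b hb (by omega) hcons ⟨hc', hcI⟩ ⟨ht, hat, htb⟩⟩

lemma IsCriticalPoint.netFlow_eq {x y s x' y' s' : ℕ → ℝ}
    (hc : IsCriticalPoint T Ls Us Lx Ux Ly Uy x y s)
    (hrec : ∀ t, 1 ≤ t → t ≤ T → s t = s (t - 1) - y t + x t)
    (hrec' : ∀ t, 1 ≤ t → t ≤ T → s' t = s' (t - 1) - y' t + x' t)
    (hstock : ∀ c ∈ stockExtremeTimes T Ls Us s, s' c = s c)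
    (hflow : ∀ c, 1 ≤ c → c ≤ T → c ∉ subExtremeTimes T Lx Ux Ly Uy x y →
      x' c - y' c = x c - y c)
    {t : ℕ} (ht : t ∈ subExtremeTimes T Lx Ux Ly Uy x y) : x' t - y' t = x t - y t := by
  obtain ⟨a, ha, b, hb, hat, htb, honly⟩ := hc.exists_stockExtreme_around ht
  have hbT := le_of_mem_stockExtremeTimes hb
  have hsum := stock_eq_add_sum_Ioc (x := x) (y := y) (s := s) (a := a) (b := b) (by omega)
    fun c hcI => have := Finset.mem_Ioc.1 hcI; hrec c (by omega) (by omega)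
  have hsum' := stock_eq_add_sum_Ioc (x := x') (y := y') (s := s') (a := a) (b := b) (by omega)
    fun c hcI => have := Finset.mem_Ioc.1 hcI; hrec' c (by omega) (by omega)
  have hdiff : ∑ c ∈ Finset.Ioc a b, ((x' c - y' c) - (x c - y c)) =
      (x' t - y' t) - (x t - y t) := by
    refine Finset.sum_eq_single_of_mem t (Finset.mem_Ioc.2 ⟨hat, htb⟩) fun c hcI hct => ?_
    obtain ⟨hac, hcb⟩ := Finset.mem_Ioc.1 hcI
    rw [hflow c (by omega) (by omega) fun hST => hct (honly c hST ⟨hac, hcb⟩), sub_self]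
  rw [Finset.sum_sub_distrib] at hdiff
  linarith [hstock a ha, hstock b hb]

lemma eq_of_mem_openSegment_of_isCriticalPoint (hLx : ∀ t, 1 ≤ t → t ≤ T → 0 ≤ Lx t)
    (hLy : ∀ t, 1 ≤ t → t ≤ T → 0 ≤ Ly t) {p q r : (ℕ → ℝ) × (ℕ → ℝ) × (ℕ → ℝ)}
    (hp : p ∈ Qwz T s0 Ls Us Lx Ux Ly Uy) (hc : IsCriticalPoint T Ls Us Lx Ux Ly Uy p.1 p.2.1 p.2.2)
    (hq : q ∈ QwzRelaxation T s0 Ls Us Lx Ux Ly Uy) (hr : r ∈ QwzRelaxation T s0 Ls Us Lx Ux Ly Uy)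
    (hseg : p ∈ openSegment ℝ q r) : q = p := by
  have hfixx : ∀ t, 1 ≤ t → t ≤ T → (p.1 t = Lx t ∨ p.1 t = Ux t) → q.1 t = p.1 t :=
    fun t h1 hT => (QwzRelaxation.eq_of_mem_openSegment_of_bound hq hr hseg h1 hT).1
  have hfixy : ∀ t, 1 ≤ t → t ≤ T → (p.2.1 t = Ly t ∨ p.2.1 t = Uy t) → q.2.1 t = p.2.1 t :=
    fun t h1 hT => (QwzRelaxation.eq_of_mem_openSegment_of_bound hq hr hseg h1 hT).2.1
  have hstock : ∀ c ∈ stockExtremeTimes T Ls Us p.2.2, q.2.2 c = p.2.2 c := by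
    rintro c (rfl | ⟨h1, hT, hbd⟩)
    · rw [hq.1, hp.1]
    · exact (QwzRelaxation.eq_of_mem_openSegment_of_bound hq hr hseg h1 hT).2.2 hbd
  have hflow : ∀ t, 1 ≤ t → t ≤ T → t ∉ subExtremeTimes T Lx Ux Ly Uy p.1 p.2.1 →
      q.1 t = p.1 t ∧ q.2.1 t = p.2.1 t := fun t h1 hT ht =>
    have hbd := bounds_of_notMem_subExtremeTimes hp h1 hT ht
    ⟨hfixx t h1 hT hbd.1, hfixy t h1 hT hbd.2⟩
  refine QwzRelaxation.eq_of_flows_eq (Qwz_subset_QwzRelaxation hp) hq fun t h1 hT => ?_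
  by_cases ht : t ∈ subExtremeTimes T Lx Ux Ly Uy p.1 p.2.1
  · have hnet := hc.netFlow_eq (fun t h1 hT => (hp.2.1 t h1 hT).1)
      (fun t h1 hT => (hq.2.1 t h1 hT).1) hstock
      (fun c h1 hT hc => by rw [(hflow c h1 hT hc).1, (hflow c h1 hT hc).2]) ht
    obtain ⟨-, -, -, -, hyL, -, hxL, -⟩ := hp.2.1 t h1 hT
    rcases subExtremeTimes_cases hLx hLy hp ht with ⟨-, hy0, -⟩ | ⟨-, hx0, -⟩
    · have hqy := hfixy t h1 hT (Or.inl (by linarith [hLy t h1 hT]))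
      exact ⟨by linarith, hqy⟩
    · have hqx := hfixx t h1 hT (Or.inl (by linarith [hLx t h1 hT]))
      exact ⟨hqx, by linarith⟩
  · exact hflow t h1 hT ht

lemma mem_extremePoints_of_isCriticalPoint (hLx : ∀ t, 1 ≤ t → t ≤ T → 0 ≤ Lx t)
    (hLy : ∀ t, 1 ≤ t → t ≤ T → 0 ≤ Ly t) {p : (ℕ → ℝ) × (ℕ → ℝ) × (ℕ → ℝ)}
    (hp : p ∈ Qwz T s0 Ls Us Lx Ux Ly Uy)
    (hc : IsCriticalPoint T Ls Us Lx Ux Ly Uy p.1 p.2.1 p.2.2) :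
    p ∈ extremePoints ℝ (convexHull ℝ (Qwz T s0 Ls Us Lx Ux Ly Uy)) := by
  have hrelax : p ∈ extremePoints ℝ (QwzRelaxation T s0 Ls Us Lx Ux Ly Uy) :=
    mem_extremePoints_iff_left.2 ⟨Qwz_subset_QwzRelaxation hp, fun _ hq _ hr =>
      eq_of_mem_openSegment_of_isCriticalPoint hLx hLy hp hc hq hr⟩
  exact inter_extremePoints_subset_extremePoints_of_subset
    (convexHull_min Qwz_subset_QwzRelaxation convex_QwzRelaxation)
    ⟨subset_convexHull ℝ _ hp, hrelax⟩

lemma eventually_add_smul_mem_Qwz {p d : (ℕ → ℝ) × (ℕ → ℝ) × (ℕ → ℝ)}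
    (hp : p ∈ Qwz T s0 Ls Us Lx Ux Ly Uy)
    (hout : ∀ t, ¬(1 ≤ t ∧ t ≤ T) → d.1 t = 0 ∧ d.2.1 t = 0 ∧ d.2.2 t = 0)
    (hrec : ∀ t, 1 ≤ t → t ≤ T → d.2.2 t = d.2.2 (t - 1) - d.2.1 t + d.1 t)
    (hcompl : ∀ t, 1 ≤ t → t ≤ T →
      d.1 t * p.2.1 t = 0 ∧ p.1 t * d.2.1 t = 0 ∧ d.1 t * d.2.1 t = 0)
    (hx : ∀ t, 1 ≤ t → t ≤ T → d.1 t ≠ 0 → p.1 t ∈ Ioo (Lx t) (Ux t))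
    (hy : ∀ t, 1 ≤ t → t ≤ T → d.2.1 t ≠ 0 → p.2.1 t ∈ Ioo (Ly t) (Uy t))
    (hs : ∀ t, 1 ≤ t → t ≤ T → d.2.2 t ≠ 0 → p.2.2 t ∈ Ioo (Ls t) (Us t)) :
    ∀ᶠ δ in 𝓝 (0 : ℝ), p + δ • d ∈ Qwz T s0 Ls Us Lx Ux Ly Uy := by
  obtain ⟨hp0, hpmid, hpout⟩ := hp
  simp only [Qwz, Qwzmem, mem_ofPred_eq, Prod.fst_add, Prod.snd_add, Prod.smul_fst,
    Prod.smul_snd, Pi.add_apply, Pi.smul_apply, smul_eq_mul, eventually_and]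
  refine ⟨.of_forall fun δ => by rw [hp0, (hout 0 (by omega)).2.2, mul_zero, add_zero], ?_,
    .of_forall fun δ t ht => ?_⟩
  · simp only [← and_imp, ← Finset.mem_Icc, Finset.eventually_all]
    intro t ht
    obtain ⟨h1, hT⟩ := Finset.mem_Icc.1 ht
    obtain ⟨hpt, hxy, hsL, hsU, hyL, hyU, hxL, hxU⟩ := hpmid t h1 hT
    obtain ⟨c₁, c₂, c₃⟩ := hcompl t h1 hT
    filter_upwards [eventually_add_mul_mem_Icc ⟨hsL, hsU⟩ (hs t h1 hT),
      eventually_add_mul_mem_Icc ⟨hyL, hyU⟩ (hy t h1 hT),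
      eventually_add_mul_mem_Icc ⟨hxL, hxU⟩ (hx t h1 hT)] with δ hδs hδy hδx
    exact ⟨by rw [hpt, hrec t h1 hT]; ring,
      by linear_combination hxy + δ * c₁ + δ * c₂ + δ ^ 2 * c₃,
      hδs.1, hδs.2, hδy.1, hδy.2, hδx.1, hδx.2⟩
  · obtain ⟨hpx, hpy, hps⟩ := hpout t ht
    obtain ⟨hdx, hdy, hds⟩ := hout t ht
    exact ⟨by rw [hpx, hdx]; ring, by rw [hpy, hdy]; ring, fun h => by rw [hps h, hds]; ring⟩

def netShift (t₁ t₂ : ℕ) (r : ℕ) : ℝ := (if r = t₁ then 1 else 0) - (if r = t₂ then 1 else 0)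

lemma mem_of_netShift_ne_zero {S : Set ℕ} {t₁ t₂ r : ℕ} (ht₁ : t₁ ∈ S) (ht₂ : t₂ ≤ T → t₂ ∈ S)
    (hr : r ≤ T) (hσ : netShift t₁ t₂ r ≠ 0) : r ∈ S := by
  by_cases hr₁ : r = t₁
  · exact hr₁ ▸ ht₁
  · by_cases hr₂ : r = t₂
    · exact hr₂ ▸ ht₂ (hr₂ ▸ hr)
    · simp [netShift, hr₁, hr₂] at hσ

/-- One unit of net flow is moved from period `t₂` to period `t₁`, through whichever of
`x`, `y` is positive there; the stock rises by one on `[t₁, t₂)`. -/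
def shiftDirection (x y : ℕ → ℝ) (t₁ t₂ : ℕ) : (ℕ → ℝ) × (ℕ → ℝ) × (ℕ → ℝ) :=
  (fun r => if 0 < x r then netShift t₁ t₂ r else 0,
    fun r => if 0 < y r then -netShift t₁ t₂ r else 0,
    fun r => if t₁ ≤ r ∧ r < t₂ then 1 else 0)

lemma shiftDirection_stock_sub {x y : ℕ → ℝ} {t₁ t₂ r : ℕ} (h12 : t₁ < t₂) (hr : 1 ≤ r) :
    (shiftDirection x y t₁ t₂).2.2 r - (shiftDirection x y t₁ t₂).2.2 (r - 1) =
      netShift t₁ t₂ r := by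
  simp only [shiftDirection, netShift]
  split_ifs <;> first | omega | norm_num

lemma shiftDirection_fst_sub_snd (hLx : ∀ t, 1 ≤ t → t ≤ T → 0 ≤ Lx t)
    (hLy : ∀ t, 1 ≤ t → t ≤ T → 0 ≤ Ly t) {p : (ℕ → ℝ) × (ℕ → ℝ) × (ℕ → ℝ)}
    (hp : p ∈ Qwz T s0 Ls Us Lx Ux Ly Uy) {t₁ t₂ r : ℕ}
    (ht₁ : t₁ ∈ subExtremeTimes T Lx Ux Ly Uy p.1 p.2.1)
    (ht₂ : t₂ ≤ T → t₂ ∈ subExtremeTimes T Lx Ux Ly Uy p.1 p.2.1) (hr : r ≤ T) :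
    (shiftDirection p.1 p.2.1 t₁ t₂).1 r - (shiftDirection p.1 p.2.1 t₁ t₂).2.1 r =
      netShift t₁ t₂ r := by
  by_cases hσ : netShift t₁ t₂ r = 0
  · simp [shiftDirection, hσ]
  · rcases subExtremeTimes_cases hLx hLy hp (mem_of_netShift_ne_zero ht₁ ht₂ hr hσ) with
      ⟨hx0, hy0, -⟩ | ⟨hy0, hx0, -⟩ <;> simp [shiftDirection, hx0, hy0]

lemma eventually_add_smul_shiftDirection_mem_Qwz (hLx : ∀ t, 1 ≤ t → t ≤ T → 0 ≤ Lx t)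
    (hLy : ∀ t, 1 ≤ t → t ≤ T → 0 ≤ Ly t) {p : (ℕ → ℝ) × (ℕ → ℝ) × (ℕ → ℝ)}
    (hp : p ∈ Qwz T s0 Ls Us Lx Ux Ly Uy) {t₁ t₂ : ℕ} (h12 : t₁ < t₂) (h2 : t₂ ≤ T + 1)
    (ht₁ : t₁ ∈ subExtremeTimes T Lx Ux Ly Uy p.1 p.2.1)
    (ht₂ : t₂ ≤ T → t₂ ∈ subExtremeTimes T Lx Ux Ly Uy p.1 p.2.1)
    (hgap : ∀ c, t₁ ≤ c → c < t₂ → c ∉ stockExtremeTimes T Ls Us p.2.2) :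
    ∀ᶠ δ in 𝓝 (0 : ℝ), p + δ • shiftDirection p.1 p.2.1 t₁ t₂ ∈ Qwz T s0 Ls Us Lx Ux Ly Uy := by
  have hcases := fun r hr hσ =>
    subExtremeTimes_cases hLx hLy hp (mem_of_netShift_ne_zero (r := r) ht₁ ht₂ hr hσ)
  refine eventually_add_smul_mem_Qwz hp (fun r hr => ?_) (fun r h1 hT => ?_)
    (fun r h1 hT => ?_) (fun r h1 hT hr => ?_) (fun r h1 hT hr => ?_) (fun r h1 hT hr => ?_)
  · obtain ⟨hx0, hy0, -⟩ := hp.2.2 r hr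
    have : ¬(t₁ ≤ r ∧ r < t₂) := by have := ht₁.1; omega
    simp [shiftDirection, hx0, hy0, this]
  · linarith [shiftDirection_fst_sub_snd hLx hLy hp ht₁ ht₂ hT (r := r),
      shiftDirection_stock_sub (x := p.1) (y := p.2.1) h12 h1]
  · have hxy : p.1 r * p.2.1 r = 0 := (hp.2.1 r h1 hT).2.1
    by_cases hx0 : 0 < p.1 r
    · have hy0 : p.2.1 r = 0 := (mul_eq_zero.1 hxy).resolve_left hx0.ne'
      simp [shiftDirection, hx0, hy0]
    · by_cases hy0 : 0 < p.2.1 r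
      · have hx0' : p.1 r = 0 := (mul_eq_zero.1 hxy).resolve_right hy0.ne'
        simp [shiftDirection, hx0']
      · simp [shiftDirection, hx0, hy0]
  · have hx0 : 0 < p.1 r := by by_contra h; simp [shiftDirection, h] at hr
    have hσ : netShift t₁ t₂ r ≠ 0 := by intro h; simp [shiftDirection, h] at hr
    rcases hcases r hT hσ with ⟨-, -, hIoo⟩ | ⟨-, hx0', -⟩
    exacts [hIoo, absurd hx0' hx0.ne']
  · have hy0 : 0 < p.2.1 r := by by_contra h; simp [shiftDirection, h] at hr
    have hσ : netShift t₁ t₂ r ≠ 0 := by intro h; simp [shiftDirection, h] at hr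
    rcases hcases r hT hσ with ⟨-, hy0', -⟩ | ⟨-, -, hIoo⟩
    exacts [absurd hy0' hy0.ne', hIoo]
  · have hr' : t₁ ≤ r ∧ r < t₂ := by by_contra h; simp [shiftDirection, h] at hr
    exact mem_Ioo_of_notMem_stockExtremeTimes hp h1 hT (hgap r hr'.1 hr'.2)

lemma notMem_extremePoints_of_shift (hLx : ∀ t, 1 ≤ t → t ≤ T → 0 ≤ Lx t)
    (hLy : ∀ t, 1 ≤ t → t ≤ T → 0 ≤ Ly t) {p : (ℕ → ℝ) × (ℕ → ℝ) × (ℕ → ℝ)}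
    (hp : p ∈ Qwz T s0 Ls Us Lx Ux Ly Uy) {t₁ t₂ : ℕ} (h12 : t₁ < t₂) (h2 : t₂ ≤ T + 1)
    (ht₁ : t₁ ∈ subExtremeTimes T Lx Ux Ly Uy p.1 p.2.1)
    (ht₂ : t₂ ≤ T → t₂ ∈ subExtremeTimes T Lx Ux Ly Uy p.1 p.2.1)
    (hgap : ∀ c, t₁ ≤ c → c < t₂ → c ∉ stockExtremeTimes T Ls Us p.2.2) :
    p ∉ extremePoints ℝ (convexHull ℝ (Qwz T s0 Ls Us Lx Ux Ly Uy)) := by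
  have hd0 : shiftDirection p.1 p.2.1 t₁ t₂ ≠ 0 := by
    intro h0
    have hσ := shiftDirection_fst_sub_snd hLx hLy hp ht₁ ht₂ ht₁.2.1
    simp [h0, netShift, h12.ne] at hσ
  exact notMem_extremePoints_of_eventually_add_smul_mem hd0
    ((eventually_add_smul_shiftDirection_mem_Qwz hLx hLy hp h12 h2 ht₁ ht₂ hgap).mono
      fun _ h => subset_convexHull ℝ _ h)

lemma exists_shift_of_not_isCriticalPoint {x y s : ℕ → ℝ}
    (hnc : ¬IsCriticalPoint T Ls Us Lx Ux Ly Uy x y s) :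
    ∃ t₁ t₂, t₁ < t₂ ∧ t₂ ≤ T + 1 ∧ t₁ ∈ subExtremeTimes T Lx Ux Ly Uy x y ∧
      (t₂ ≤ T → t₂ ∈ subExtremeTimes T Lx Ux Ly Uy x y) ∧
      ∀ c, t₁ ≤ c → c < t₂ → c ∉ stockExtremeTimes T Ls Us s := by
  rw [IsCriticalPoint, not_and_or] at hnc
  rcases hnc with hpair | hlast
  · push Not at hpair
    obtain ⟨a, -, b, hb, -, hcons, hnt⟩ := hpair
    obtain ⟨t₁, ⟨ht₁, hat₁, -⟩, t₂, ⟨ht₂, -, ht₂b⟩, h12⟩ :=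
      hnt.exists_lt
    exact ⟨t₁, t₂, h12, by have := le_of_mem_stockExtremeTimes hb; omega, ht₁, fun _ => ht₂,
      fun c h1c hc2 hc => by have := hcons c hc (by omega); omega⟩
  · obtain ⟨t, ht, hMt, -⟩ := nonempty_iff_ne_empty.2 hlast
    exact ⟨t, T + 1, by have := ht.2.1; omega, le_rfl, ht, fun h => by omega,
      fun c htc _ hc => (le_csSup (bddAbove_stockExtremeTimes s) hc).not_gt (by omega)⟩

end

lemma primedBound_nonneg {L b : ℕ → ℝ} {t : ℕ} (h : 0 ≤ L t) : 0 ≤ primedBound L b t := by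
  unfold primedBound
  split_ifs
  exacts [h, le_rfl]

theorem extremePoints_Qwz_eq_criticalPoints_general
    (T : ℕ) (s0 : ℝ) (Ls Us Lx Ux Ly Uy : ℕ → ℝ)
    (hnn : ∀ t, 1 ≤ t → t ≤ T →
      0 ≤ Ls t ∧ 0 ≤ Us t ∧ 0 ≤ Lx t ∧ 0 ≤ Ux t ∧ 0 ≤ Ly t ∧ 0 ≤ Uy t)
    (wb zb : ℕ → ℝ) :
    Set.extremePoints ℝ (convexHull ℝ (Qwz T s0 Ls Us
        (primedBound Lx wb) (primedBound Ux wb)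
        (primedBound Ly zb) (primedBound Uy zb))) =
      {p | p ∈ Qwz T s0 Ls Us
          (primedBound Lx wb) (primedBound Ux wb)
          (primedBound Ly zb) (primedBound Uy zb) ∧
        IsCriticalPoint T Ls Us
          (primedBound Lx wb) (primedBound Ux wb)
          (primedBound Ly zb) (primedBound Uy zb) p.1 p.2.1 p.2.2} := by
  have hLx : ∀ t, 1 ≤ t → t ≤ T → 0 ≤ primedBound Lx wb t :=
    fun t h1 hT => primedBound_nonneg (hnn t h1 hT).2.2.1
  have hLy : ∀ t, 1 ≤ t → t ≤ T → 0 ≤ primedBound Ly zb t :=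
    fun t h1 hT => primedBound_nonneg (hnn t h1 hT).2.2.2.2.1
  ext p
  refine ⟨fun hext => ⟨extremePoints_convexHull_subset hext, ?_⟩,
    fun ⟨hp, hc⟩ => mem_extremePoints_of_isCriticalPoint hLx hLy hp hc⟩
  by_contra hnc
  obtain ⟨t₁, t₂, h12, h2, ht₁, ht₂, hgap⟩ := exists_shift_of_not_isCriticalPoint hnc
  exact notMem_extremePoints_of_shift hLx hLy (extremePoints_convexHull_subset hext)
    h12 h2 ht₁ ht₂ hgap hext

/-- **Theorem**: the extreme points of `P(w̄,z̄) = conv(Q(w̄,z̄))` are exactly the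
critical points of `Q(w̄,z̄)`. -/
theorem extremePoints_Qwz_eq_criticalPoints
    (T : ℕ) (hT : 1 ≤ T) (s0 : ℝ) (Ls Us Lx Ux Ly Uy : ℕ → ℝ)
    (hnn : ∀ t, 1 ≤ t → t ≤ T →
      0 ≤ Ls t ∧ 0 ≤ Us t ∧ 0 ≤ Lx t ∧ 0 ≤ Ux t ∧ 0 ≤ Ly t ∧ 0 ≤ Uy t)
    (wb zb : ℕ → ℝ)
    (hwb : ∀ t, wb t = 0 ∨ wb t = 1) (hzb : ∀ t, zb t = 0 ∨ zb t = 1) :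
    Set.extremePoints ℝ (convexHull ℝ (Qwz T s0 Ls Us
        (primedBound Lx wb) (primedBound Ux wb)
        (primedBound Ly zb) (primedBound Uy zb))) =
      {p | p ∈ Qwz T s0 Ls Us
          (primedBound Lx wb) (primedBound Ux wb)
          (primedBound Ly zb) (primedBound Uy zb) ∧
        IsCriticalPoint T Ls Us
          (primedBound Lx wb) (primedBound Ux wb)
          (primedBound Ly zb) (primedBound Uy zb) p.1 p.2.1 p.2.2} :=
  extremePoints_Qwz_eq_criticalPoints_general T s0 Ls Us Lx Ux Ly Uy hnn wb zb
end
end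

section
/- For every t ∈ {1,…,T} and every extreme point (x, y, s) of the polytope P(w̄,z̄) = conv(Q(w̄,z̄)), the stock level s_t belongs to the set S_t^aux, defined as the union of (a) all numbers K − Σ_{i=1}^t (v¹_i L'^y_i + v²_i U'^y_i) + Σ_{i=1}^t (u¹_i L'^x_i + u²_i U'^x_i) with K ∈ {s_0, U^s_1, …, U^s_t, L^s_1, …, L^s_t} and v¹, v², u¹, u² ∈ {0,1}-vectors satisfying v¹_i + v²_i + u¹_i + u²_i ≤ 1 for every i, and (b) all numbers K' + Σ_{i=t+1}^T (v³_i L'^y_i + v⁴_i U'^y_i) − Σ_{i=t+1}^T (u³_i L'^x_i + u⁴_i U'^x_i) with K' ∈ {U^s_{t+1}, …, U^s_T, L^s_{t+1}, …, L^s_T} and v³, v⁴, u³, u⁴ ∈ {0,1}-vectors satisfying v³_i + v⁴_i + u³_i + u⁴_i ≤ 1 for every i, intersected with the interval [L^s_t, U^s_t]. -/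
noncomputable section

/-- `v` is a `{0,1}`-vector. -/
def IsBinaryVec (v : ℕ → ℝ) : Prop := ∀ i, v i = 0 ∨ v i = 1

/-- The set of potential stock levels at the end of period `t` (the set
`S_t^aux` for primed bounds, and `S_t` for the original bounds). -/
def stockLevelSet (T t : ℕ) (s0 : ℝ) (Ls Us Lx Ux Ly Uy : ℕ → ℝ) : Set ℝ :=
  ({r | ∃ K, (K = s0 ∨ (∃ i, 1 ≤ i ∧ i ≤ t ∧ K = Us i) ∨
        (∃ i, 1 ≤ i ∧ i ≤ t ∧ K = Ls i)) ∧
      ∃ v1 v2 u1 u2 : ℕ → ℝ,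
        IsBinaryVec v1 ∧ IsBinaryVec v2 ∧ IsBinaryVec u1 ∧ IsBinaryVec u2 ∧
        (∀ i, v1 i + v2 i + u1 i + u2 i ≤ 1) ∧
        r = K - (∑ i ∈ Finset.Icc 1 t, (v1 i * Ly i + v2 i * Uy i))
              + ∑ i ∈ Finset.Icc 1 t, (u1 i * Lx i + u2 i * Ux i)} ∪
    {r | ∃ K', ((∃ i, t + 1 ≤ i ∧ i ≤ T ∧ K' = Us i) ∨
        (∃ i, t + 1 ≤ i ∧ i ≤ T ∧ K' = Ls i)) ∧
      ∃ v3 v4 u3 u4 : ℕ → ℝ,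
        IsBinaryVec v3 ∧ IsBinaryVec v4 ∧ IsBinaryVec u3 ∧ IsBinaryVec u4 ∧
        (∀ i, v3 i + v4 i + u3 i + u4 i ≤ 1) ∧
        r = K' + (∑ i ∈ Finset.Icc (t + 1) T, (v3 i * Ly i + v4 i * Uy i))
              - ∑ i ∈ Finset.Icc (t + 1) T, (u3 i * Lx i + u4 i * Ux i)}) ∩
    Set.Icc (Ls t) (Us t)

-- my auxiliaries

def PinnedAt (Lx' Ux' Ly' Uy' x y : ℕ → ℝ) (i : ℕ) : Prop :=
  (x i = 0 ∨ x i = Lx' i ∨ x i = Ux' i) ∧ (y i = 0 ∨ y i = Ly' i ∨ y i = Uy' i)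

lemma extreme_no_dir {E : Type*} [AddCommGroup E] [Module ℝ E] {A : Set E} {p d : E}
    (hp : p ∈ Set.extremePoints ℝ (convexHull ℝ A))
    (h1 : p + d ∈ convexHull ℝ A) (h2 : p - d ∈ convexHull ℝ A) : d = 0 := by
  rw [mem_extremePoints] at hp
  have hmem : p ∈ openSegment ℝ (p + d) (p - d) := by
    refine ⟨1/2, 1/2, by norm_num, by norm_num, by norm_num, ?_⟩
    rw [smul_add, smul_sub]; module
  have h := (hp.2 _ h1 _ h2 hmem).1
  have h2 := congrArg (fun z => z - p) h
  simpa using h2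

lemma teles {T : ℕ} {x y s : ℕ → ℝ}
    (hrec : ∀ i, 1 ≤ i → i ≤ T → s i = s (i - 1) - y i + x i)
    (j : ℕ) : ∀ m, j ≤ m → m ≤ T →
      s m = s j + ∑ i ∈ Finset.Icc (j + 1) m, (x i - y i) := by
  intro m
  induction m with
  | zero => intro hj _; interval_cases j; simp
  | succ n ih =>
    intro hj hn
    rcases Nat.lt_or_ge j (n+1) with h | h
    · have hjn : j ≤ n := by omega
      have := ih hjn (by omega)
      have hr := hrec (n+1) (by omega) hn
      rw [Finset.sum_Icc_succ_top (by omega : j + 1 ≤ n + 1)]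
      have : (n + 1 : ℕ) - 1 = n := by omega
      rw [hr, this, ih hjn (by omega)]
      ring
    · have : j = n + 1 := by omega
      subst this
      simp

lemma freeDir (Lx' Ux' Ly' Uy' x y : ℕ → ℝ) (i : ℕ)
    (hb1 : Lx' i ≤ x i) (hb2 : x i ≤ Ux' i) (hb3 : Ly' i ≤ y i) (hb4 : y i ≤ Uy' i)
    (hc : x i * y i = 0)
    (hfree : ¬ PinnedAt Lx' Ux' Ly' Uy' x y i) :
    ∃ a b δ : ℝ, 0 < δ ∧ a - b = 1 ∧ ∀ η : ℝ, |η| ≤ δ →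
      Lx' i ≤ x i + η * a ∧ x i + η * a ≤ Ux' i ∧
      Ly' i ≤ y i + η * b ∧ y i + η * b ≤ Uy' i ∧
      (x i + η * a) * (y i + η * b) = 0 := by
  rw [PinnedAt, not_and_or] at hfree
  rcases hfree with h | h
  · push_neg at h
    obtain ⟨hx0, hxl, hxu⟩ := h
    have hy0 : y i = 0 := by
      rcases mul_eq_zero.1 hc with h | h
      · exact absurd h hx0
      · exact h
    refine ⟨1, 0, min (x i - Lx' i) (Ux' i - x i), ?_, by ring, ?_⟩
    · have h1 : Lx' i < x i := lt_of_le_of_ne hb1 (Ne.symm hxl)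
      have h2 : x i < Ux' i := lt_of_le_of_ne hb2 hxu
      simp [h1, h2, sub_pos]
    · intro η hη
      have h1 : |η| ≤ x i - Lx' i := le_trans hη (min_le_left _ _)
      have h2 : |η| ≤ Ux' i - x i := le_trans hη (min_le_right _ _)
      rw [abs_le] at h1 h2
      refine ⟨by linarith, by linarith, by simpa [hy0] using hb3, by simpa [hy0] using hb4, ?_⟩
      simp [hy0]
  · push_neg at h
    obtain ⟨hy0, hyl, hyu⟩ := h
    have hx0 : x i = 0 := by
      rcases mul_eq_zero.1 hc with h | h
      · exact h
      · exact absurd h hy0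
    refine ⟨0, -1, min (y i - Ly' i) (Uy' i - y i), ?_, by ring, ?_⟩
    · have h1 : Ly' i < y i := lt_of_le_of_ne hb3 (Ne.symm hyl)
      have h2 : y i < Uy' i := lt_of_le_of_ne hb4 hyu
      simp [h1, h2, sub_pos]
    · intro η hη
      have h1 : |η| ≤ y i - Ly' i := le_trans hη (min_le_left _ _)
      have h2 : |η| ≤ Uy' i - y i := le_trans hη (min_le_right _ _)
      rw [abs_le] at h1 h2
      refine ⟨by simpa [hx0] using hb1, by simpa [hx0] using hb2, by linarith, by linarith, ?_⟩
      simp [hx0]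

lemma pert (T : ℕ) (s0 : ℝ) (Ls Us Lx' Ux' Ly' Uy' x y s : ℕ → ℝ)
    (hQ : Qwzmem T s0 Ls Us Lx' Ux' Ly' Uy' x y s)
    (istar e : ℕ) (h1i : 1 ≤ istar) (hie : istar < e) (heT : e ≤ T + 1)
    (hsint : ∀ j, istar ≤ j → j < e → Ls j < s j ∧ s j < Us j)
    (hfree_i : ¬ PinnedAt Lx' Ux' Ly' Uy' x y istar)
    (hfree_e : e ≤ T → ¬ PinnedAt Lx' Ux' Ly' Uy' x y e) :
    ∃ (dx dy ds : ℕ → ℝ) (ε : ℝ), 0 < ε ∧ ds istar = 1 ∧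
      ∀ η : ℝ, |η| ≤ ε → Qwzmem T s0 Ls Us Lx' Ux' Ly' Uy'
        (fun i => x i + η * dx i) (fun i => y i + η * dy i)
        (fun i => s i + η * ds i) := by
  obtain ⟨hs0, hmain, hout⟩ := hQ
  have hiT : istar ≤ T := by omega
  -- direction at istar
  obtain ⟨ai, bi, δi, hδi, habi, hfi⟩ := by
    obtain ⟨-, -, -, -, hb3, hb4, hb1, hb2⟩ := hmain istar h1i hiT
    obtain ⟨-, hc, -⟩ := hmain istar h1i hiT
    exact freeDir Lx' Ux' Ly' Uy' x y istar hb1 hb2 hb3 hb4 hc hfree_i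
  -- direction at e (or trivial if e = T+1)
  obtain ⟨ae, be, δe, hδe, hae0, habe⟩ :
      ∃ ae be δe : ℝ, 0 < δe ∧ (e = T + 1 → ae = 0 ∧ be = 0) ∧
        (e ≤ T → (ae - be = 1 ∧ ∀ η : ℝ, |η| ≤ δe →
          Lx' e ≤ x e + η * ae ∧ x e + η * ae ≤ Ux' e ∧
          Ly' e ≤ y e + η * be ∧ y e + η * be ≤ Uy' e ∧
          (x e + η * ae) * (y e + η * be) = 0)) := by
    rcases Nat.lt_or_ge e (T + 1) with h | h
    · have heT' : e ≤ T := by omega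
      have h1e : 1 ≤ e := by omega
      obtain ⟨-, hc, -, -, hb3, hb4, hb1, hb2⟩ := hmain e h1e heT'
      obtain ⟨a, b, δ, hδ, hab, hf⟩ :=
        freeDir Lx' Ux' Ly' Uy' x y e hb1 hb2 hb3 hb4 hc (hfree_e heT')
      exact ⟨a, b, δ, hδ, fun hcontra => absurd hcontra (by omega), fun _ => ⟨hab, hf⟩⟩
    · exact ⟨0, 0, 1, one_pos, fun _ => ⟨rfl, rfl⟩, fun h' => absurd h' (by omega)⟩
  -- slack for s
  have hne : (Finset.Icc istar (e - 1)).Nonempty := by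
    rw [Finset.nonempty_Icc]; omega
  set δs := (Finset.Icc istar (e - 1)).inf' hne (fun j => min (s j - Ls j) (Us j - s j)) with hδs_def
  have hδs : 0 < δs := by
    rw [hδs_def, Finset.lt_inf'_iff]
    intro j hj
    rw [Finset.mem_Icc] at hj
    obtain ⟨h1, h2⟩ := hsint j hj.1 (by omega)
    simp [sub_pos, h1, h2]
  have hδs_le : ∀ j, istar ≤ j → j < e →
      δs ≤ s j - Ls j ∧ δs ≤ Us j - s j := by
    intro j hj1 hj2
    have hmem : j ∈ Finset.Icc istar (e - 1) := by rw [Finset.mem_Icc]; omega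
    constructor
    · exact le_trans (Finset.inf'_le _ hmem) (min_le_left _ _)
    · exact le_trans (Finset.inf'_le _ hmem) (min_le_right _ _)
  refine ⟨(fun i => if i = istar then ai else if i = e then -ae else 0),
          (fun i => if i = istar then bi else if i = e then -be else 0),
          (fun j => if istar ≤ j ∧ j < e then 1 else 0),
          min δi (min δe δs), by positivity, by simp only []; rw [if_pos ⟨le_refl _, hie⟩], ?_⟩
  intro η hη
  have hηi : |η| ≤ δi := le_trans hη (min_le_left _ _)
  have hηe : |η| ≤ δe := le_trans hη (le_trans (min_le_right _ _) (min_le_left _ _))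
  have hηs : |η| ≤ δs := le_trans hη (le_trans (min_le_right _ _) (min_le_right _ _))
  have hηs' := abs_le.1 hηs
  have hine : istar ≠ e := by omega
  refine ⟨?_, ?_, ?_⟩
  · -- s 0 = s0
    dsimp only
    have : ¬ (istar ≤ 0 ∧ 0 < e) := by omega
    rw [if_neg this]
    rw [hs0]; ring
  · -- main constraints
    intro i h1' hT'
    dsimp only
    obtain ⟨hrec, hc, hls, hus, hly, huy, hlx, hux⟩ := hmain i h1' hT'
    -- ds balance
    have hbal : (if istar ≤ i ∧ i < e then (1:ℝ) else 0)
        = (if istar ≤ i - 1 ∧ i - 1 < e then (1:ℝ) else 0)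
          + (if i = istar then ai else if i = e then -ae else 0)
          - (if i = istar then bi else if i = e then -be else 0) := by
      rcases Nat.lt_trichotomy i istar with h | h | h
      · rw [if_neg (by omega), if_neg (by omega), if_neg (by omega : ¬ i = istar),
            if_neg (by omega : ¬ i = e), if_neg (by omega : ¬ i = istar),
            if_neg (by omega : ¬ i = e)]
        ring
      · subst h
        rw [if_pos ⟨le_refl _, hie⟩, if_neg (by omega), if_pos rfl, if_pos rfl]
        linarith [habi]
      · rcases Nat.lt_trichotomy i e with h2 | h2 | h2
        · rw [if_pos ⟨by omega, h2⟩, if_pos ⟨by omega, by omega⟩,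
              if_neg (by omega : ¬ i = istar), if_neg (by omega : ¬ i = e),
              if_neg (by omega : ¬ i = istar), if_neg (by omega : ¬ i = e)]
          ring
        · subst h2
          have hab := (habe (by omega)).1
          rw [if_neg (by omega), if_pos ⟨by omega, by omega⟩,
              if_neg (by omega : ¬ i = istar), if_pos rfl,
              if_neg (by omega : ¬ i = istar), if_pos rfl]
          linarith
        · rw [if_neg (by omega), if_neg (by omega),
              if_neg (by omega : ¬ i = istar), if_neg (by omega : ¬ i = e),
              if_neg (by omega : ¬ i = istar), if_neg (by omega : ¬ i = e)]
          ring
    refine ⟨?_, ?_, ?_, ?_, ?_, ?_, ?_, ?_⟩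
    · -- recurrence
      rw [hrec, hbal]
      have hsub : (fun i => s i + η * if istar ≤ i ∧ i < e then 1 else 0) (i-1)
          = s (i-1) + η * (if istar ≤ i - 1 ∧ i - 1 < e then (1:ℝ) else 0) := rfl
      ring
    · -- complementarity
      by_cases h : i = istar
      · subst h
        rw [if_pos rfl, if_pos rfl]
        exact (hfi η hηi).2.2.2.2
      · by_cases h2 : i = e
        · subst h2
          rw [if_neg h, if_pos rfl, if_neg h, if_pos rfl]
          have := ((habe hT').2 (-η) (by simpa using hηe)).2.2.2.2
          have h3 : x i + η * -ae = x i + -η * ae := by ring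
          have h4 : y i + η * -be = y i + -η * be := by ring
          rw [h3, h4]; exact this
        · rw [if_neg h, if_neg h2, if_neg h, if_neg h2]
          simpa using hc
    · -- Ls ≤ s
      by_cases h : istar ≤ i ∧ i < e
      · rw [if_pos h]
        have := (hδs_le i h.1 h.2).1
        linarith [hηs'.1]
      · rw [if_neg h]; simpa using hls
    · by_cases h : istar ≤ i ∧ i < e
      · rw [if_pos h]
        have := (hδs_le i h.1 h.2).2
        linarith [hηs'.2]
      · rw [if_neg h]; simpa using hus
    · -- y bounds
      by_cases h : i = istar
      · subst h; rw [if_pos rfl]; exact (hfi η hηi).2.2.1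
      · by_cases h2 : i = e
        · subst h2; rw [if_neg h, if_pos rfl]
          have := ((habe hT').2 (-η) (by simpa using hηe)).2.2.1
          convert this using 2; ring
        · rw [if_neg h, if_neg h2]; simpa using hly
    · by_cases h : i = istar
      · subst h; rw [if_pos rfl]; exact (hfi η hηi).2.2.2.1
      · by_cases h2 : i = e
        · subst h2; rw [if_neg h, if_pos rfl]
          have := ((habe hT').2 (-η) (by simpa using hηe)).2.2.2.1
          convert this using 2; ring
        · rw [if_neg h, if_neg h2]; simpa using huy
    · -- x bounds
      by_cases h : i = istar
      · subst h; rw [if_pos rfl]; exact (hfi η hηi).1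
      · by_cases h2 : i = e
        · subst h2; rw [if_neg h, if_pos rfl]
          have := ((habe hT').2 (-η) (by simpa using hηe)).1
          convert this using 2; ring
        · rw [if_neg h, if_neg h2]; simpa using hlx
    · by_cases h : i = istar
      · subst h; rw [if_pos rfl]; exact (hfi η hηi).2.1
      · by_cases h2 : i = e
        · subst h2; rw [if_neg h, if_pos rfl]
          have := ((habe hT').2 (-η) (by simpa using hηe)).2.1
          convert this using 2; ring
        · rw [if_neg h, if_neg h2]; simpa using hux
  · -- outside
    intro i hi
    dsimp only
    obtain ⟨hx0, hy0, hs0'⟩ := hout i hi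
    have hne1 : i ≠ istar := by omega
    have hds : ¬ (istar ≤ i ∧ i < e) := by omega
    constructor
    · by_cases h2 : i = e
      · subst h2
        have := (hae0 (by omega)).1
        rw [if_neg hne1, if_pos rfl, hx0, this]; ring
      · rw [if_neg hne1, if_neg h2, hx0]; ring
    constructor
    · by_cases h2 : i = e
      · subst h2
        have := (hae0 (by omega)).2
        rw [if_neg hne1, if_pos rfl, hy0, this]; ring
      · rw [if_neg hne1, if_neg h2, hy0]; ring
    · intro hi0
      rw [if_neg hds, hs0' hi0]; ring

lemma sum_support_eq {f : ℕ → ℝ} {a b c : ℕ} (hab : a ≤ b + 1)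
    (h0 : ∀ i, i ∈ Finset.Icc a c → i ∉ Finset.Icc (b+1) c → f i = 0) :
    ∑ i ∈ Finset.Icc a c, f i = ∑ i ∈ Finset.Icc (b+1) c, f i := by
  refine (Finset.sum_subset ?_ h0).symm
  intro i hi
  rw [Finset.mem_Icc] at *
  omega

lemma caseA (T t : ℕ) (s0 : ℝ) (Ls Us Lx' Ux' Ly' Uy' x y s : ℕ → ℝ)
    (hQ : Qwzmem T s0 Ls Us Lx' Ux' Ly' Uy' x y s)
    (htT : t ≤ T) (j : ℕ) (hjt : j ≤ t)
    (hK : s j = s0 ∨ (∃ i, 1 ≤ i ∧ i ≤ t ∧ s j = Us i) ∨ (∃ i, 1 ≤ i ∧ i ≤ t ∧ s j = Ls i))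
    (hpin : ∀ i, j < i → i ≤ t → PinnedAt Lx' Ux' Ly' Uy' x y i) :
    ∃ K, (K = s0 ∨ (∃ i, 1 ≤ i ∧ i ≤ t ∧ K = Us i) ∨
        (∃ i, 1 ≤ i ∧ i ≤ t ∧ K = Ls i)) ∧
      ∃ v1 v2 u1 u2 : ℕ → ℝ,
        IsBinaryVec v1 ∧ IsBinaryVec v2 ∧ IsBinaryVec u1 ∧ IsBinaryVec u2 ∧
        (∀ i, v1 i + v2 i + u1 i + u2 i ≤ 1) ∧
        s t = K - (∑ i ∈ Finset.Icc 1 t, (v1 i * Ly' i + v2 i * Uy' i))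
              + ∑ i ∈ Finset.Icc 1 t, (u1 i * Lx' i + u2 i * Ux' i) := by
  classical
  obtain ⟨hs0, hmain, hout⟩ := hQ
  refine ⟨s j, hK,
    (fun i => if j < i ∧ i ≤ t ∧ x i = 0 ∧ y i ≠ 0 ∧ y i = Ly' i then 1 else 0),
    (fun i => if j < i ∧ i ≤ t ∧ x i = 0 ∧ y i ≠ 0 ∧ y i ≠ Ly' i then 1 else 0),
    (fun i => if j < i ∧ i ≤ t ∧ x i ≠ 0 ∧ x i = Lx' i then 1 else 0),
    (fun i => if j < i ∧ i ≤ t ∧ x i ≠ 0 ∧ x i ≠ Lx' i then 1 else 0),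
    fun i => by dsimp only; split_ifs <;> simp,
    fun i => by dsimp only; split_ifs <;> simp,
    fun i => by dsimp only; split_ifs <;> simp,
    fun i => by dsimp only; split_ifs <;> simp,
    ?_, ?_⟩
  · intro i
    dsimp only
    by_cases hx : x i = 0
    · have hu1 : ¬(j < i ∧ i ≤ t ∧ x i ≠ 0 ∧ x i = Lx' i) := fun h => h.2.2.1 hx
      have hu2 : ¬(j < i ∧ i ≤ t ∧ x i ≠ 0 ∧ x i ≠ Lx' i) := fun h => h.2.2.1 hx
      rw [if_neg hu1, if_neg hu2]
      by_cases hy : y i = Ly' i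
      · have hv2 : ¬(j < i ∧ i ≤ t ∧ x i = 0 ∧ y i ≠ 0 ∧ y i ≠ Ly' i) :=
          fun h => h.2.2.2.2 hy
        rw [if_neg hv2]
        split_ifs <;> norm_num
      · have hv1 : ¬(j < i ∧ i ≤ t ∧ x i = 0 ∧ y i ≠ 0 ∧ y i = Ly' i) :=
          fun h => hy h.2.2.2.2
        rw [if_neg hv1]
        split_ifs <;> norm_num
    · have hv1 : ¬(j < i ∧ i ≤ t ∧ x i = 0 ∧ y i ≠ 0 ∧ y i = Ly' i) := fun h => hx h.2.2.1
      have hv2 : ¬(j < i ∧ i ≤ t ∧ x i = 0 ∧ y i ≠ 0 ∧ y i ≠ Ly' i) := fun h => hx h.2.2.1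
      rw [if_neg hv1, if_neg hv2]
      by_cases hxl : x i = Lx' i
      · have hu2 : ¬(j < i ∧ i ≤ t ∧ x i ≠ 0 ∧ x i ≠ Lx' i) := fun h => h.2.2.2 hxl
        rw [if_neg hu2]
        split_ifs <;> norm_num
      · have hu1 : ¬(j < i ∧ i ≤ t ∧ x i ≠ 0 ∧ x i = Lx' i) := fun h => hxl h.2.2.2
        rw [if_neg hu1]
        split_ifs <;> norm_num
  have hid : ∀ i ∈ Finset.Icc (j+1) t,
      ((if j < i ∧ i ≤ t ∧ x i = 0 ∧ y i ≠ 0 ∧ y i = Ly' i then (1:ℝ) else 0) * Ly' i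
        + (if j < i ∧ i ≤ t ∧ x i = 0 ∧ y i ≠ 0 ∧ y i ≠ Ly' i then (1:ℝ) else 0) * Uy' i = y i)
      ∧ ((if j < i ∧ i ≤ t ∧ x i ≠ 0 ∧ x i = Lx' i then (1:ℝ) else 0) * Lx' i
        + (if j < i ∧ i ≤ t ∧ x i ≠ 0 ∧ x i ≠ Lx' i then (1:ℝ) else 0) * Ux' i = x i) := by
    intro i hi
    rw [Finset.mem_Icc] at hi
    have hji : j < i := by omega
    have hit : i ≤ t := hi.2
    obtain ⟨-, hc, -⟩ := hmain i (by omega) (by omega)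
    obtain ⟨hpx, hpy⟩ := hpin i hji hit
    by_cases hx0 : x i = 0
    · have hu1 : ¬(j < i ∧ i ≤ t ∧ x i ≠ 0 ∧ x i = Lx' i) := fun h => h.2.2.1 hx0
      have hu2 : ¬(j < i ∧ i ≤ t ∧ x i ≠ 0 ∧ x i ≠ Lx' i) := fun h => h.2.2.1 hx0
      constructor
      · by_cases hy0 : y i = 0
        · have hv1 : ¬(j < i ∧ i ≤ t ∧ x i = 0 ∧ y i ≠ 0 ∧ y i = Ly' i) :=
            fun h => h.2.2.2.1 hy0
          have hv2 : ¬(j < i ∧ i ≤ t ∧ x i = 0 ∧ y i ≠ 0 ∧ y i ≠ Ly' i) :=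
            fun h => h.2.2.2.1 hy0
          rw [if_neg hv1, if_neg hv2, hy0]; ring
        · by_cases hyl : y i = Ly' i
          · have hv2 : ¬(j < i ∧ i ≤ t ∧ x i = 0 ∧ y i ≠ 0 ∧ y i ≠ Ly' i) :=
              fun h => h.2.2.2.2 hyl
            rw [if_pos ⟨hji, hit, hx0, hy0, hyl⟩, if_neg hv2, hyl]; ring
          · have hyu : y i = Uy' i := by
              rcases hpy with h | h | h
              · exact absurd h hy0
              · exact absurd h hyl
              · exact h
            have hv1 : ¬(j < i ∧ i ≤ t ∧ x i = 0 ∧ y i ≠ 0 ∧ y i = Ly' i) :=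
              fun h => hyl h.2.2.2.2
            rw [if_neg hv1, if_pos ⟨hji, hit, hx0, hy0, hyl⟩, hyu]; ring
      · rw [if_neg hu1, if_neg hu2, hx0]; ring
    · have hy0 : y i = 0 := by
        rcases mul_eq_zero.1 hc with h | h
        · exact absurd h hx0
        · exact h
      have hv1 : ¬(j < i ∧ i ≤ t ∧ x i = 0 ∧ y i ≠ 0 ∧ y i = Ly' i) := fun h => hx0 h.2.2.1
      have hv2 : ¬(j < i ∧ i ≤ t ∧ x i = 0 ∧ y i ≠ 0 ∧ y i ≠ Ly' i) := fun h => hx0 h.2.2.1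
      constructor
      · rw [if_neg hv1, if_neg hv2, hy0]; ring
      · by_cases hxl : x i = Lx' i
        · have hu2 : ¬(j < i ∧ i ≤ t ∧ x i ≠ 0 ∧ x i ≠ Lx' i) := fun h => h.2.2.2 hxl
          rw [if_pos ⟨hji, hit, hx0, hxl⟩, if_neg hu2, hxl]; ring
        · have hxu : x i = Ux' i := by
            rcases hpx with h | h | h
            · exact absurd h hx0
            · exact absurd h hxl
            · exact h
          have hu1 : ¬(j < i ∧ i ≤ t ∧ x i ≠ 0 ∧ x i = Lx' i) := fun h => hxl h.2.2.2
          rw [if_neg hu1, if_pos ⟨hji, hit, hx0, hxl⟩, hxu]; ring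
  have hsum1 : ∑ i ∈ Finset.Icc 1 t,
      ((if j < i ∧ i ≤ t ∧ x i = 0 ∧ y i ≠ 0 ∧ y i = Ly' i then (1:ℝ) else 0) * Ly' i
        + (if j < i ∧ i ≤ t ∧ x i = 0 ∧ y i ≠ 0 ∧ y i ≠ Ly' i then (1:ℝ) else 0) * Uy' i)
      = ∑ i ∈ Finset.Icc (j+1) t, y i := by
    rw [sum_support_eq (by omega : 1 ≤ j + 1)]
    · exact Finset.sum_congr rfl (fun i hi => (hid i hi).1)
    · intro i hi hni
      rw [Finset.mem_Icc] at hi hni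
      rw [if_neg (by omega), if_neg (by omega)]; ring
  have hsum2 : ∑ i ∈ Finset.Icc 1 t,
      ((if j < i ∧ i ≤ t ∧ x i ≠ 0 ∧ x i = Lx' i then (1:ℝ) else 0) * Lx' i
        + (if j < i ∧ i ≤ t ∧ x i ≠ 0 ∧ x i ≠ Lx' i then (1:ℝ) else 0) * Ux' i)
      = ∑ i ∈ Finset.Icc (j+1) t, x i := by
    rw [sum_support_eq (by omega : 1 ≤ j + 1)]
    · exact Finset.sum_congr rfl (fun i hi => (hid i hi).2)
    · intro i hi hni
      rw [Finset.mem_Icc] at hi hni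
      rw [if_neg (by omega), if_neg (by omega)]; ring
  have htel := teles (fun i h1 h2 => (hmain i h1 h2).1) j t hjt htT
  rw [htel, hsum1, hsum2, Finset.sum_sub_distrib]
  ring

lemma sum_support_eq2 {f : ℕ → ℝ} {a b c : ℕ} (hbc : b ≤ c)
    (h0 : ∀ i, i ∈ Finset.Icc a c → i ∉ Finset.Icc a b → f i = 0) :
    ∑ i ∈ Finset.Icc a c, f i = ∑ i ∈ Finset.Icc a b, f i := by
  refine (Finset.sum_subset ?_ h0).symm
  intro i hi
  rw [Finset.mem_Icc] at *
  omega

lemma caseB (T t : ℕ) (s0 : ℝ) (Ls Us Lx' Ux' Ly' Uy' x y s : ℕ → ℝ)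
    (hQ : Qwzmem T s0 Ls Us Lx' Ux' Ly' Uy' x y s)
    (j : ℕ) (htj : t + 1 ≤ j) (hjT : j ≤ T)
    (hK : (∃ i, t + 1 ≤ i ∧ i ≤ T ∧ s j = Us i) ∨ (∃ i, t + 1 ≤ i ∧ i ≤ T ∧ s j = Ls i))
    (hpin : ∀ i, t < i → i ≤ j → PinnedAt Lx' Ux' Ly' Uy' x y i) :
    ∃ K', ((∃ i, t + 1 ≤ i ∧ i ≤ T ∧ K' = Us i) ∨
        (∃ i, t + 1 ≤ i ∧ i ≤ T ∧ K' = Ls i)) ∧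
      ∃ v3 v4 u3 u4 : ℕ → ℝ,
        IsBinaryVec v3 ∧ IsBinaryVec v4 ∧ IsBinaryVec u3 ∧ IsBinaryVec u4 ∧
        (∀ i, v3 i + v4 i + u3 i + u4 i ≤ 1) ∧
        s t = K' + (∑ i ∈ Finset.Icc (t + 1) T, (v3 i * Ly' i + v4 i * Uy' i))
              - ∑ i ∈ Finset.Icc (t + 1) T, (u3 i * Lx' i + u4 i * Ux' i) := by
  classical
  obtain ⟨hs0, hmain, hout⟩ := hQ
  refine ⟨s j, hK,
    (fun i => if t < i ∧ i ≤ j ∧ x i = 0 ∧ y i ≠ 0 ∧ y i = Ly' i then 1 else 0),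
    (fun i => if t < i ∧ i ≤ j ∧ x i = 0 ∧ y i ≠ 0 ∧ y i ≠ Ly' i then 1 else 0),
    (fun i => if t < i ∧ i ≤ j ∧ x i ≠ 0 ∧ x i = Lx' i then 1 else 0),
    (fun i => if t < i ∧ i ≤ j ∧ x i ≠ 0 ∧ x i ≠ Lx' i then 1 else 0),
    fun i => by dsimp only; split_ifs <;> simp,
    fun i => by dsimp only; split_ifs <;> simp,
    fun i => by dsimp only; split_ifs <;> simp,
    fun i => by dsimp only; split_ifs <;> simp,
    ?_, ?_⟩
  · intro i
    dsimp only
    by_cases hx : x i = 0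
    · have hu1 : ¬(t < i ∧ i ≤ j ∧ x i ≠ 0 ∧ x i = Lx' i) := fun h => h.2.2.1 hx
      have hu2 : ¬(t < i ∧ i ≤ j ∧ x i ≠ 0 ∧ x i ≠ Lx' i) := fun h => h.2.2.1 hx
      rw [if_neg hu1, if_neg hu2]
      by_cases hy : y i = Ly' i
      · have hv2 : ¬(t < i ∧ i ≤ j ∧ x i = 0 ∧ y i ≠ 0 ∧ y i ≠ Ly' i) :=
          fun h => h.2.2.2.2 hy
        rw [if_neg hv2]
        split_ifs <;> norm_num
      · have hv1 : ¬(t < i ∧ i ≤ j ∧ x i = 0 ∧ y i ≠ 0 ∧ y i = Ly' i) :=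
          fun h => hy h.2.2.2.2
        rw [if_neg hv1]
        split_ifs <;> norm_num
    · have hv1 : ¬(t < i ∧ i ≤ j ∧ x i = 0 ∧ y i ≠ 0 ∧ y i = Ly' i) := fun h => hx h.2.2.1
      have hv2 : ¬(t < i ∧ i ≤ j ∧ x i = 0 ∧ y i ≠ 0 ∧ y i ≠ Ly' i) := fun h => hx h.2.2.1
      rw [if_neg hv1, if_neg hv2]
      by_cases hxl : x i = Lx' i
      · have hu2 : ¬(t < i ∧ i ≤ j ∧ x i ≠ 0 ∧ x i ≠ Lx' i) := fun h => h.2.2.2 hxl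
        rw [if_neg hu2]
        split_ifs <;> norm_num
      · have hu1 : ¬(t < i ∧ i ≤ j ∧ x i ≠ 0 ∧ x i = Lx' i) := fun h => hxl h.2.2.2
        rw [if_neg hu1]
        split_ifs <;> norm_num
  have hid : ∀ i ∈ Finset.Icc (t+1) j,
      ((if t < i ∧ i ≤ j ∧ x i = 0 ∧ y i ≠ 0 ∧ y i = Ly' i then (1:ℝ) else 0) * Ly' i
        + (if t < i ∧ i ≤ j ∧ x i = 0 ∧ y i ≠ 0 ∧ y i ≠ Ly' i then (1:ℝ) else 0) * Uy' i = y i)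
      ∧ ((if t < i ∧ i ≤ j ∧ x i ≠ 0 ∧ x i = Lx' i then (1:ℝ) else 0) * Lx' i
        + (if t < i ∧ i ≤ j ∧ x i ≠ 0 ∧ x i ≠ Lx' i then (1:ℝ) else 0) * Ux' i = x i) := by
    intro i hi
    rw [Finset.mem_Icc] at hi
    have hji : t < i := by omega
    have hit : i ≤ j := hi.2
    obtain ⟨-, hc, -⟩ := hmain i (by omega) (by omega)
    obtain ⟨hpx, hpy⟩ := hpin i hji hit
    by_cases hx0 : x i = 0
    · have hu1 : ¬(t < i ∧ i ≤ j ∧ x i ≠ 0 ∧ x i = Lx' i) := fun h => h.2.2.1 hx0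
      have hu2 : ¬(t < i ∧ i ≤ j ∧ x i ≠ 0 ∧ x i ≠ Lx' i) := fun h => h.2.2.1 hx0
      constructor
      · by_cases hy0 : y i = 0
        · have hv1 : ¬(t < i ∧ i ≤ j ∧ x i = 0 ∧ y i ≠ 0 ∧ y i = Ly' i) :=
            fun h => h.2.2.2.1 hy0
          have hv2 : ¬(t < i ∧ i ≤ j ∧ x i = 0 ∧ y i ≠ 0 ∧ y i ≠ Ly' i) :=
            fun h => h.2.2.2.1 hy0
          rw [if_neg hv1, if_neg hv2, hy0]; ring
        · by_cases hyl : y i = Ly' i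
          · have hv2 : ¬(t < i ∧ i ≤ j ∧ x i = 0 ∧ y i ≠ 0 ∧ y i ≠ Ly' i) :=
              fun h => h.2.2.2.2 hyl
            rw [if_pos ⟨hji, hit, hx0, hy0, hyl⟩, if_neg hv2, hyl]; ring
          · have hyu : y i = Uy' i := by
              rcases hpy with h | h | h
              · exact absurd h hy0
              · exact absurd h hyl
              · exact h
            have hv1 : ¬(t < i ∧ i ≤ j ∧ x i = 0 ∧ y i ≠ 0 ∧ y i = Ly' i) :=
              fun h => hyl h.2.2.2.2
            rw [if_neg hv1, if_pos ⟨hji, hit, hx0, hy0, hyl⟩, hyu]; ring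
      · rw [if_neg hu1, if_neg hu2, hx0]; ring
    · have hy0 : y i = 0 := by
        rcases mul_eq_zero.1 hc with h | h
        · exact absurd h hx0
        · exact h
      have hv1 : ¬(t < i ∧ i ≤ j ∧ x i = 0 ∧ y i ≠ 0 ∧ y i = Ly' i) := fun h => hx0 h.2.2.1
      have hv2 : ¬(t < i ∧ i ≤ j ∧ x i = 0 ∧ y i ≠ 0 ∧ y i ≠ Ly' i) := fun h => hx0 h.2.2.1
      constructor
      · rw [if_neg hv1, if_neg hv2, hy0]; ring
      · by_cases hxl : x i = Lx' i
        · have hu2 : ¬(t < i ∧ i ≤ j ∧ x i ≠ 0 ∧ x i ≠ Lx' i) := fun h => h.2.2.2 hxl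
          rw [if_pos ⟨hji, hit, hx0, hxl⟩, if_neg hu2, hxl]; ring
        · have hxu : x i = Ux' i := by
            rcases hpx with h | h | h
            · exact absurd h hx0
            · exact absurd h hxl
            · exact h
          have hu1 : ¬(t < i ∧ i ≤ j ∧ x i ≠ 0 ∧ x i = Lx' i) := fun h => hxl h.2.2.2
          rw [if_neg hu1, if_pos ⟨hji, hit, hx0, hxl⟩, hxu]; ring
  have hsum1 : ∑ i ∈ Finset.Icc (t+1) T,
      ((if t < i ∧ i ≤ j ∧ x i = 0 ∧ y i ≠ 0 ∧ y i = Ly' i then (1:ℝ) else 0) * Ly' i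
        + (if t < i ∧ i ≤ j ∧ x i = 0 ∧ y i ≠ 0 ∧ y i ≠ Ly' i then (1:ℝ) else 0) * Uy' i)
      = ∑ i ∈ Finset.Icc (t+1) j, y i := by
    rw [sum_support_eq2 hjT]
    · exact Finset.sum_congr rfl (fun i hi => (hid i hi).1)
    · intro i hi hni
      rw [Finset.mem_Icc] at hi hni
      rw [if_neg (by omega), if_neg (by omega)]; ring
  have hsum2 : ∑ i ∈ Finset.Icc (t+1) T,
      ((if t < i ∧ i ≤ j ∧ x i ≠ 0 ∧ x i = Lx' i then (1:ℝ) else 0) * Lx' i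
        + (if t < i ∧ i ≤ j ∧ x i ≠ 0 ∧ x i ≠ Lx' i then (1:ℝ) else 0) * Ux' i)
      = ∑ i ∈ Finset.Icc (t+1) j, x i := by
    rw [sum_support_eq2 hjT]
    · exact Finset.sum_congr rfl (fun i hi => (hid i hi).2)
    · intro i hi hni
      rw [Finset.mem_Icc] at hi hni
      rw [if_neg (by omega), if_neg (by omega)]; ring
  have htel := teles (fun i h1 h2 => (hmain i h1 h2).1) t j (by omega) hjT
  rw [hsum1, hsum2]
  rw [Finset.sum_sub_distrib] at htel
  linarith

/-- **Theorem**: at every extreme point of `P(w̄,z̄) = conv(Q(w̄,z̄))`, the stock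
level at the end of period `t` lies in the set `S_t^aux`. -/
theorem stock_of_extremePoint_mem_stockLevelSet_aux
    (T : ℕ) (hT : 1 ≤ T) (s0 : ℝ) (Ls Us Lx Ux Ly Uy : ℕ → ℝ)
    (hnn : ∀ t, 1 ≤ t → t ≤ T →
      0 ≤ Ls t ∧ 0 ≤ Us t ∧ 0 ≤ Lx t ∧ 0 ≤ Ux t ∧ 0 ≤ Ly t ∧ 0 ≤ Uy t)
    (wb zb : ℕ → ℝ)
    (hwb : ∀ t, wb t = 0 ∨ wb t = 1) (hzb : ∀ t, zb t = 0 ∨ zb t = 1)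
    (t : ℕ) (ht1 : 1 ≤ t) (htT : t ≤ T) (x y s : ℕ → ℝ)
    (hext : (x, y, s) ∈ Set.extremePoints ℝ (convexHull ℝ (Qwz T s0 Ls Us
      (primedBound Lx wb) (primedBound Ux wb)
      (primedBound Ly zb) (primedBound Uy zb)))) :
    s t ∈ stockLevelSet T t s0 Ls Us
      (primedBound Lx wb) (primedBound Ux wb)
      (primedBound Ly zb) (primedBound Uy zb) := by
  classical
  set Lx' := primedBound Lx wb
  set Ux' := primedBound Ux wb
  set Ly' := primedBound Ly zb
  set Uy' := primedBound Uy zb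
  have hQ : (x, y, s) ∈ Qwz T s0 Ls Us Lx' Ux' Ly' Uy' :=
    extremePoints_convexHull_subset hext
  obtain ⟨hs0, hmain, hout⟩ := hQ
  have hQ' : Qwzmem T s0 Ls Us Lx' Ux' Ly' Uy' x y s := ⟨hs0, hmain, hout⟩
  refine ⟨?_, (hmain t ht1 htT).2.2.1, (hmain t ht1 htT).2.2.2.1⟩
  by_cases hA : ∃ j, j ≤ t ∧
      (s j = s0 ∨ (∃ i, 1 ≤ i ∧ i ≤ t ∧ s j = Us i) ∨
        (∃ i, 1 ≤ i ∧ i ≤ t ∧ s j = Ls i)) ∧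
      (∀ i, j < i → i ≤ t → PinnedAt Lx' Ux' Ly' Uy' x y i)
  · left
    obtain ⟨j, hjt, hK, hpin⟩ := hA
    obtain ⟨K, hKmem, v1, v2, u1, u2, hb1, hb2, hb3, hb4, hle, heq⟩ :=
      caseA T t s0 Ls Us Lx' Ux' Ly' Uy' x y s hQ' htT j hjt hK hpin
    exact ⟨K, hKmem, v1, v2, u1, u2, hb1, hb2, hb3, hb4, hle, heq⟩
  by_cases hB : ∃ j, t + 1 ≤ j ∧ j ≤ T ∧
      ((∃ i, t + 1 ≤ i ∧ i ≤ T ∧ s j = Us i) ∨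
        (∃ i, t + 1 ≤ i ∧ i ≤ T ∧ s j = Ls i)) ∧
      (∀ i, t < i → i ≤ j → PinnedAt Lx' Ux' Ly' Uy' x y i)
  · right
    obtain ⟨j, htj, hjT, hK, hpin⟩ := hB
    obtain ⟨K, hKmem, v1, v2, u1, u2, hb1, hb2, hb3, hb4, hle, heq⟩ :=
      caseB T t s0 Ls Us Lx' Ux' Ly' Uy' x y s hQ' j htj hjT hK hpin
    exact ⟨K, hKmem, v1, v2, u1, u2, hb1, hb2, hb3, hb4, hle, heq⟩
  exfalso
  -- find the largest unpinned index in [1, t]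
  set F := (Finset.Icc 1 t).filter (fun i => ¬ PinnedAt Lx' Ux' Ly' Uy' x y i) with hF
  have hFne : F.Nonempty := by
    by_contra hFe
    rw [Finset.not_nonempty_iff_eq_empty] at hFe
    refine hA ⟨0, by omega, Or.inl hs0, fun i hi1 hi2 => ?_⟩
    by_contra hnp
    have : i ∈ F := by
      rw [hF, Finset.mem_filter, Finset.mem_Icc]
      exact ⟨⟨by omega, hi2⟩, hnp⟩
    rw [hFe] at this
    exact absurd this (Finset.notMem_empty i)
  set istar := F.max' hFne with histar
  have histarF : istar ∈ F := F.max'_mem hFne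
  have histar1 : 1 ≤ istar ∧ istar ≤ t := by
    have := histarF
    rw [hF, Finset.mem_filter, Finset.mem_Icc] at this
    exact this.1
  have hfree_i : ¬ PinnedAt Lx' Ux' Ly' Uy' x y istar := by
    have := histarF
    rw [hF, Finset.mem_filter] at this
    exact this.2
  have hmaxpin : ∀ i, istar < i → i ≤ t → PinnedAt Lx' Ux' Ly' Uy' x y i := by
    intro i hi1 hi2
    by_contra hnp
    have hiF : i ∈ F := by
      rw [hF, Finset.mem_filter, Finset.mem_Icc]
      exact ⟨⟨by omega, hi2⟩, hnp⟩
    have := F.le_max' i hiF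
    omega
  have hsintA : ∀ jj, istar ≤ jj → jj ≤ t → Ls jj < s jj ∧ s jj < Us jj := by
    intro jj h1 h2
    obtain ⟨-, -, hl, hu, -⟩ := hmain jj (by omega) (by omega)
    by_contra hns
    have hbnd : s jj = Ls jj ∨ s jj = Us jj := by
      rcases lt_or_eq_of_le hl with h | h
      · rcases lt_or_eq_of_le hu with h' | h'
        · exact absurd ⟨h, h'⟩ hns
        · exact Or.inr h'
      · exact Or.inl h.symm
    refine hA ⟨jj, h2, ?_, fun i hi1 hi2 => hmaxpin i (by omega) hi2⟩
    rcases hbnd with h | h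
    · exact Or.inr (Or.inr ⟨jj, by omega, h2, h⟩)
    · exact Or.inr (Or.inl ⟨jj, by omega, h2, h⟩)
  -- the forward side
  set G := (Finset.Icc (t+1) T).filter (fun i => ¬ PinnedAt Lx' Ux' Ly' Uy' x y i) with hG
  have hGfacts : ∃ e, istar < e ∧ e ≤ T + 1 ∧
      (e ≤ T → ¬ PinnedAt Lx' Ux' Ly' Uy' x y e) ∧
      (∀ jj, t + 1 ≤ jj → jj < e → Ls jj < s jj ∧ s jj < Us jj) := by
    rcases G.eq_empty_or_nonempty with hGe | hGne
    · refine ⟨T + 1, by omega, le_refl _, fun h => absurd h (by omega), ?_⟩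
      intro jj h1 h2
      obtain ⟨-, -, hl, hu, -⟩ := hmain jj (by omega) (by omega)
      by_contra hns
      have hbnd : s jj = Ls jj ∨ s jj = Us jj := by
        rcases lt_or_eq_of_le hl with h | h
        · rcases lt_or_eq_of_le hu with h' | h'
          · exact absurd ⟨h, h'⟩ hns
          · exact Or.inr h'
        · exact Or.inl h.symm
      have hpinG : ∀ i, t < i → i ≤ jj → PinnedAt Lx' Ux' Ly' Uy' x y i := by
        intro i hi1 hi2
        by_contra hnp
        have : i ∈ G := by
          rw [hG, Finset.mem_filter, Finset.mem_Icc]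
          exact ⟨⟨by omega, by omega⟩, hnp⟩
        rw [hGe] at this
        exact absurd this (Finset.notMem_empty i)
      refine hB ⟨jj, h1, by omega, ?_, hpinG⟩
      rcases hbnd with h | h
      · exact Or.inr ⟨jj, h1, by omega, h⟩
      · exact Or.inl ⟨jj, h1, by omega, h⟩
    · set e := G.min' hGne with he
      have heF : e ∈ G := G.min'_mem hGne
      have heb : t + 1 ≤ e ∧ e ≤ T := by
        have := heF
        rw [hG, Finset.mem_filter, Finset.mem_Icc] at this
        exact this.1
      have hfe : ¬ PinnedAt Lx' Ux' Ly' Uy' x y e := by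
        have := heF
        rw [hG, Finset.mem_filter] at this
        exact this.2
      refine ⟨e, by omega, by omega, fun _ => hfe, ?_⟩
      intro jj h1 h2
      obtain ⟨-, -, hl, hu, -⟩ := hmain jj (by omega) (by omega)
      by_contra hns
      have hbnd : s jj = Ls jj ∨ s jj = Us jj := by
        rcases lt_or_eq_of_le hl with h | h
        · rcases lt_or_eq_of_le hu with h' | h'
          · exact absurd ⟨h, h'⟩ hns
          · exact Or.inr h'
        · exact Or.inl h.symm
      have hpinG : ∀ i, t < i → i ≤ jj → PinnedAt Lx' Ux' Ly' Uy' x y i := by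
        intro i hi1 hi2
        by_contra hnp
        have hiG : i ∈ G := by
          rw [hG, Finset.mem_filter, Finset.mem_Icc]
          exact ⟨⟨by omega, by omega⟩, hnp⟩
        have := G.min'_le i hiG
        omega
      refine hB ⟨jj, h1, by omega, ?_, hpinG⟩
      rcases hbnd with h | h
      · exact Or.inr ⟨jj, h1, by omega, h⟩
      · exact Or.inl ⟨jj, h1, by omega, h⟩
  obtain ⟨e, hie, heT', hfree_e, hsintB⟩ := hGfacts
  have hsint : ∀ jj, istar ≤ jj → jj < e → Ls jj < s jj ∧ s jj < Us jj := by
    intro jj h1 h2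
    rcases le_or_gt jj t with h | h
    · exact hsintA jj h1 h
    · exact hsintB jj (by omega) h2
  obtain ⟨dx, dy, ds, ε, hε, hds1, hfeas⟩ :=
    pert T s0 Ls Us Lx' Ux' Ly' Uy' x y s ⟨hs0, hmain, hout⟩ istar e histar1.1
      (by omega) heT' hsint hfree_i hfree_e
  have habs : |ε| ≤ ε := by rw [abs_of_pos hε]
  have habs' : |(-ε)| ≤ ε := by rw [abs_neg, abs_of_pos hε]
  set d : (ℕ → ℝ) × (ℕ → ℝ) × (ℕ → ℝ) :=
    ((fun i => ε * dx i), (fun i => ε * dy i), (fun i => ε * ds i)) with hd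
  have h1 : (x, y, s) + d ∈ convexHull ℝ (Qwz T s0 Ls Us Lx' Ux' Ly' Uy') := by
    apply subset_convexHull
    exact hfeas ε habs
  have h2 : (x, y, s) - d ∈ convexHull ℝ (Qwz T s0 Ls Us Lx' Ux' Ly' Uy') := by
    apply subset_convexHull
    have heq : (x, y, s) - d = ((fun i => x i + (-ε) * dx i), (fun i => y i + (-ε) * dy i),
        (fun i => s i + (-ε) * ds i)) := by
      rw [hd]
      refine Prod.ext ?_ (Prod.ext ?_ ?_) <;> funext i <;>
        simp only [Prod.fst_sub, Prod.snd_sub, Pi.sub_apply] <;> ring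
    rw [heq]
    exact hfeas (-ε) habs'
  have hd0 := extreme_no_dir hext h1 h2
  have := congrFun (congrArg (fun p => p.2.2) hd0) istar
  simp only [hd, hds1, Prod.snd_zero, Pi.zero_apply, mul_one] at this
  exact absurd this (ne_of_gt hε)
end
end

section
/- For every t ∈ {1,…,T} and every extreme point (x, y, s, w, z) of the polytope P1 = conv(Q1), the stock level s_t belongs to the set S_t. -/
/-!
Let `a ≤ t` be the last period whose stock level sits at a bound (or `a = 0`) and `b > t` the
first one after `t`. If every period in `(a, t]` has its flow at a bound, telescoping the balance
equations from `s a` yields the first description of `S_t`; likewise for `(t, b]` and `s b` with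
the second. Otherwise some period `i ∈ (a, t]` has a flow strictly inside its bounds, and so does
some `j ∈ (t, b]`, unless no stock after `t` sits at a bound. Raising the stock by `δ` on `[i, j)`,
compensated by the flows at `i` and `j`, keeps the point feasible for all small `δ` of either
sign, which contradicts extremality.
-/

noncomputable section

open Set Filter Topology

def FlowFeasible (Lx Ux Ly Uy w z x y : ℝ) : Prop :=
  x * y = 0 ∧ y ∈ Icc (Ly * z) (Uy * z) ∧ x ∈ Icc (Lx * w) (Ux * w)

def IsFlexible (Lx Ux Ly Uy w z x y : ℝ) : Prop :=
  ∃ a b : ℝ, a - b = 1 ∧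
    ∀ᶠ δ in 𝓝 (0 : ℝ), FlowFeasible Lx Ux Ly Uy w z (x + δ * a) (y + δ * b)

def boundaryFlows (Lx Ux Ly Uy : ℝ) : Set ℝ := {0, Lx, Ux, -Ly, -Uy}

theorem eq_zero_of_eventually_add_smul_mem {E : Type*} [AddCommGroup E] [Module ℝ E]
    {A : Set E} {p d : E} (hp : p ∈ (convexHull ℝ A).extremePoints ℝ)
    (h : ∀ᶠ δ in 𝓝 (0 : ℝ), p + δ • d ∈ A) : d = 0 := by
  have hneg : ∀ᶠ δ in 𝓝 (0 : ℝ), p + (-δ) • d ∈ A :=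
    (continuous_neg.tendsto' (0 : ℝ) 0 neg_zero).eventually h
  obtain ⟨δ, ⟨hplus, hminus⟩, hδ⟩ :=
    (((h.and hneg).filter_mono nhdsWithin_le_nhds).and (self_mem_nhdsWithin (s := Ioi 0))).exists
  have hmid : p ∈ openSegment ℝ (p + (-δ) • d) (p + δ • d) :=
    ⟨1 / 2, 1 / 2, by norm_num, by norm_num, by norm_num, by module⟩
  have hδd : δ • d = 0 := by
    simpa using ((mem_extremePoints.1 hp).2 _ (subset_convexHull ℝ A hminus) _
      (subset_convexHull ℝ A hplus) hmid).2
  exact (smul_eq_zero.1 hδd).resolve_left (ne_of_gt hδ)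

theorem eventually_add_mul_mem_Ioo {l u b : ℝ} (hb : b ∈ Ioo l u) (d : ℝ) :
    ∀ᶠ δ in 𝓝 (0 : ℝ), b + δ * d ∈ Ioo l u := by
  have hcont : ContinuousAt (fun δ : ℝ => b + δ * d) 0 := by fun_prop
  exact hcont.eventually_mem (by simpa using Ioo_mem_nhds hb.1 hb.2)

theorem Nat.exists_last_le {P : ℕ → Prop} (h0 : P 0) (t : ℕ) :
    ∃ a ≤ t, P a ∧ ∀ k, a < k → k ≤ t → ¬P k := by
  classical
  exact ⟨_, Nat.findGreatest_le t, Nat.findGreatest_spec (Nat.zero_le t) h0,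
    fun _ => Nat.findGreatest_is_greatest⟩

theorem Nat.exists_first_gt {P : ℕ → Prop} {t m : ℕ} (htm : t < m) (hm : P m) :
    ∃ b, t < b ∧ P b ∧ ∀ k, t < k → k < b → ¬P k := by
  classical
  have hex : ∃ k, t < k ∧ P k := ⟨m, htm, hm⟩
  obtain ⟨htb, hb⟩ := Nat.find_spec hex
  exact ⟨Nat.find hex, htb, hb,
    fun k htk hkb hk => Nat.find_min hex hkb ⟨htk, hk⟩⟩

theorem exists_coeff_of_mem_boundaryFlows {Lx Ux Ly Uy r : ℝ}
    (h : r ∈ boundaryFlows Lx Ux Ly Uy) :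
    ∃ v1 v2 u1 u2 : ℝ, (v1 = 0 ∨ v1 = 1) ∧ (v2 = 0 ∨ v2 = 1) ∧ (u1 = 0 ∨ u1 = 1) ∧
      (u2 = 0 ∨ u2 = 1) ∧ v1 + v2 + u1 + u2 ≤ 1 ∧
      u1 * Lx + u2 * Ux - (v1 * Ly + v2 * Uy) = r := by
  rcases h with rfl | rfl | rfl | rfl | rfl
  exacts [⟨0, 0, 0, 0, by norm_num⟩, ⟨0, 0, 1, 0, by norm_num⟩, ⟨0, 0, 0, 1, by norm_num⟩,
    ⟨1, 0, 0, 0, by norm_num⟩, ⟨0, 1, 0, 0, by norm_num⟩]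

theorem exists_binaryVec_sum_sub_sum_eq {Lx Ux Ly Uy r : ℕ → ℝ} {F G : Finset ℕ}
    (hFG : F ⊆ G) (hr : ∀ i ∈ F, r i ∈ boundaryFlows (Lx i) (Ux i) (Ly i) (Uy i)) :
    ∃ v1 v2 u1 u2 : ℕ → ℝ,
      IsBinaryVec v1 ∧ IsBinaryVec v2 ∧ IsBinaryVec u1 ∧ IsBinaryVec u2 ∧
      (∀ i, v1 i + v2 i + u1 i + u2 i ≤ 1) ∧
      ∑ i ∈ G, (u1 i * Lx i + u2 i * Ux i) - ∑ i ∈ G, (v1 i * Ly i + v2 i * Uy i) =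
        ∑ i ∈ F, r i := by
  classical
  have hcoeff (i : ℕ) := exists_coeff_of_mem_boundaryFlows
    (Lx := Lx i) (Ux := Ux i) (Ly := Ly i) (Uy := Uy i) (r := if i ∈ F then r i else 0)
    (by split_ifs with hi; exacts [hr i hi, Or.inl rfl])
  choose v1 v2 u1 u2 hv1 hv2 hu1 hu2 hle heq using hcoeff
  refine ⟨v1, v2, u1, u2, hv1, hv2, hu1, hu2, hle, ?_⟩
  rw [← Finset.sum_sub_distrib, Finset.sum_congr rfl fun i _ => heq i, Finset.sum_ite_mem,
    Finset.inter_eq_right.2 hFG]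

theorem FlowFeasible.mem_boundaryFlows_or_isFlexible {Lx Ux Ly Uy w z x y : ℝ}
    (h : FlowFeasible Lx Ux Ly Uy w z x y) (hw : w = 0 ∨ w = 1) (hz : z = 0 ∨ z = 1) :
    x - y ∈ boundaryFlows Lx Ux Ly Uy ∨ IsFlexible Lx Ux Ly Uy w z x y := by
  obtain ⟨hxy, hy, hx⟩ := h
  rcases mul_eq_zero.1 hxy with rfl | rfl
  · rcases hz with rfl | rfl
    · obtain rfl : y = 0 := by simp only [mul_zero, Icc_self, mem_singleton_iff] at hy; exact hy
      simp [boundaryFlows]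
    rcases eq_endpoints_or_mem_Ioo_of_mem_Icc hy with rfl | rfl | hy'
    · simp [boundaryFlows]
    · simp [boundaryFlows]
    exact Or.inr ⟨0, -1, by norm_num, (eventually_add_mul_mem_Ioo hy' _).mono fun δ hδ =>
      ⟨by simp, Ioo_subset_Icc_self hδ, by simpa using hx⟩⟩
  · rcases hw with rfl | rfl
    · obtain rfl : x = 0 := by simp only [mul_zero, Icc_self, mem_singleton_iff] at hx; exact hx
      simp [boundaryFlows]
    rcases eq_endpoints_or_mem_Ioo_of_mem_Icc hx with rfl | rfl | hx'
    · simp [boundaryFlows]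
    · simp [boundaryFlows]
    exact Or.inr ⟨1, 0, by norm_num, (eventually_add_mul_mem_Ioo hx' _).mono fun δ hδ =>
      ⟨by simp, by simpa using hy, Ioo_subset_Icc_self hδ⟩⟩

theorem FlowFeasible.exists_sub_eq_eventually {Lx Ux Ly Uy w z x y c : ℝ}
    (h : FlowFeasible Lx Ux Ly Uy w z x y) (hc : c ≠ 0 → IsFlexible Lx Ux Ly Uy w z x y) :
    ∃ a b : ℝ, a - b = c ∧
      ∀ᶠ δ in 𝓝 (0 : ℝ), FlowFeasible Lx Ux Ly Uy w z (x + δ * a) (y + δ * b) := by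
  rcases eq_or_ne c 0 with rfl | hc0
  · exact ⟨0, 0, sub_zero 0, Eventually.of_forall fun δ => by simpa using h⟩
  obtain ⟨a, b, hab, hev⟩ := hc hc0
  refine ⟨c * a, c * b, by rw [← mul_sub, hab, mul_one], ?_⟩
  have hlim : Tendsto (fun δ : ℝ => δ * c) (𝓝 0) (𝓝 0) := by
    simpa using (tendsto_id (x := 𝓝 (0 : ℝ))).mul_const c
  simpa only [mul_assoc] using hlim.eventually hev

namespace Q1mem

variable {T : ℕ} {s0 : ℝ} {Ls Us Lx Ux Ly Uy x y s w z : ℕ → ℝ}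

theorem of_mem_extremePoints
    (hext : (x, y, s, w, z) ∈ (convexHull ℝ (Q1 T s0 Ls Us Lx Ux Ly Uy)).extremePoints ℝ) :
    Q1mem T s0 Ls Us Lx Ux Ly Uy x y s w z :=
  (extremePoints_convexHull_subset hext : (x, y, s, w, z) ∈ Q1 T s0 Ls Us Lx Ux Ly Uy)

theorem stock_mem_Icc (hQ : Q1mem T s0 Ls Us Lx Ux Ly Uy x y s w z) {k : ℕ}
    (hk1 : 1 ≤ k) (hkT : k ≤ T) : s k ∈ Icc (Ls k) (Us k) :=
  ⟨(hQ.2.1 k hk1 hkT).2.2.1, (hQ.2.1 k hk1 hkT).2.2.2.1⟩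

theorem stock_eq_or_eq (hQ : Q1mem T s0 Ls Us Lx Ux Ly Uy x y s w z) {k : ℕ}
    (hk1 : 1 ≤ k) (hkT : k ≤ T) (hk : s k ∉ Ioo (Ls k) (Us k)) :
    s k = Ls k ∨ s k = Us k :=
  (eq_endpoints_or_mem_Ioo_of_mem_Icc (hQ.stock_mem_Icc hk1 hkT)).imp_right
    (·.resolve_right hk)

theorem flowFeasible (hQ : Q1mem T s0 Ls Us Lx Ux Ly Uy x y s w z) {k : ℕ}
    (hk1 : 1 ≤ k) (hkT : k ≤ T) :
    FlowFeasible (Lx k) (Ux k) (Ly k) (Uy k) (w k) (z k) (x k) (y k) := by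
  obtain ⟨-, hxy, -, -, hy1, hy2, hx1, hx2, -⟩ := hQ.2.1 k hk1 hkT
  exact ⟨hxy, ⟨hy1, hy2⟩, hx1, hx2⟩

theorem mem_boundaryFlows_or_isFlexible (hQ : Q1mem T s0 Ls Us Lx Ux Ly Uy x y s w z)
    {k : ℕ} (hk1 : 1 ≤ k) (hkT : k ≤ T) :
    x k - y k ∈ boundaryFlows (Lx k) (Ux k) (Ly k) (Uy k) ∨
      IsFlexible (Lx k) (Ux k) (Ly k) (Uy k) (w k) (z k) (x k) (y k) :=
  (hQ.flowFeasible hk1 hkT).mem_boundaryFlows_or_isFlexible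
    (hQ.2.1 k hk1 hkT).2.2.2.2.2.2.2.2.1 (hQ.2.1 k hk1 hkT).2.2.2.2.2.2.2.2.2

theorem forall_mem_boundaryFlows_or_exists_isFlexible
    (hQ : Q1mem T s0 Ls Us Lx Ux Ly Uy x y s w z) (a : ℕ) {b : ℕ} (hbT : b ≤ T) :
    (∀ i ∈ Finset.Ioc a b, x i - y i ∈ boundaryFlows (Lx i) (Ux i) (Ly i) (Uy i)) ∨
      ∃ i, a < i ∧ i ≤ b ∧ IsFlexible (Lx i) (Ux i) (Ly i) (Uy i) (w i) (z i) (x i) (y i) := by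
  refine or_iff_not_imp_left.2 fun h => ?_
  push Not at h
  obtain ⟨i, hi, hflow⟩ := h
  rw [Finset.mem_Ioc] at hi
  exact ⟨i, hi.1, hi.2,
    (hQ.mem_boundaryFlows_or_isFlexible (by omega) (by omega)).resolve_left hflow⟩

theorem stock_eq_add_sum (hQ : Q1mem T s0 Ls Us Lx Ux Ly Uy x y s w z) {a c : ℕ}
    (hac : a ≤ c) (hcT : c ≤ T) : s c = s a + ∑ i ∈ Finset.Ioc a c, (x i - y i) := by
  induction c, hac using Nat.le_induction with
  | base => simp
  | succ c hac ih =>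
    rw [Finset.sum_Ioc_succ_top hac, (hQ.2.1 (c + 1) (by omega) hcT).1, Nat.add_sub_cancel,
      ih (by omega)]
    ring

theorem stock_mem_stockLevelSet_of_past (hQ : Q1mem T s0 Ls Us Lx Ux Ly Uy x y s w z)
    {a t : ℕ} (ht1 : 1 ≤ t) (htT : t ≤ T) (hat : a ≤ t) (ha : a = 0 ∨ s a ∉ Ioo (Ls a) (Us a))
    (hflow : ∀ i ∈ Finset.Ioc a t, x i - y i ∈ boundaryFlows (Lx i) (Ux i) (Ly i) (Uy i)) :
    s t ∈ stockLevelSet T t s0 Ls Us Lx Ux Ly Uy := by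
  obtain ⟨v1, v2, u1, u2, hv1, hv2, hu1, hu2, hle, hsum⟩ :=
    exists_binaryVec_sum_sub_sum_eq (G := Finset.Icc 1 t) (fun i hi => by
      simp only [Finset.mem_Ioc, Finset.mem_Icc] at hi ⊢; omega) hflow
  refine ⟨Or.inl ⟨s a, ?_, v1, v2, u1, u2, hv1, hv2, hu1, hu2, hle, ?_⟩,
    hQ.stock_mem_Icc ht1 htT⟩
  · rcases Nat.eq_zero_or_pos a with rfl | ha1
    · exact Or.inl hQ.1
    rcases hQ.stock_eq_or_eq ha1 (by omega) (ha.resolve_left (by omega)) with h | h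
    exacts [Or.inr (Or.inr ⟨a, ha1, hat, h⟩), Or.inr (Or.inl ⟨a, ha1, hat, h⟩)]
  · rw [hQ.stock_eq_add_sum hat htT]
    linarith

theorem stock_mem_stockLevelSet_of_future (hQ : Q1mem T s0 Ls Us Lx Ux Ly Uy x y s w z)
    {t b : ℕ} (ht1 : 1 ≤ t) (htb : t < b) (hbT : b ≤ T) (hb : s b ∉ Ioo (Ls b) (Us b))
    (hflow : ∀ i ∈ Finset.Ioc t b, x i - y i ∈ boundaryFlows (Lx i) (Ux i) (Ly i) (Uy i)) :
    s t ∈ stockLevelSet T t s0 Ls Us Lx Ux Ly Uy := by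
  obtain ⟨v3, v4, u3, u4, hv3, hv4, hu3, hu4, hle, hsum⟩ :=
    exists_binaryVec_sum_sub_sum_eq (G := Finset.Icc (t + 1) T) (fun i hi => by
      simp only [Finset.mem_Ioc, Finset.mem_Icc] at hi ⊢; omega) hflow
  refine ⟨Or.inr ⟨s b, ?_, v3, v4, u3, u4, hv3, hv4, hu3, hu4, hle, ?_⟩,
    hQ.stock_mem_Icc ht1 (by omega)⟩
  · rcases hQ.stock_eq_or_eq (by omega) hbT hb with h | h
    exacts [Or.inr ⟨b, htb, hbT, h⟩, Or.inl ⟨b, htb, hbT, h⟩]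
  · rw [hQ.stock_eq_add_sum htb.le hbT] at ⊢
    linarith

theorem add_smul {dx dy ds : ℕ → ℝ} {δ : ℝ} (hQ : Q1mem T s0 Ls Us Lx Ux Ly Uy x y s w z)
    (hout : ∀ k, ¬(1 ≤ k ∧ k ≤ T) → dx k = 0 ∧ dy k = 0 ∧ ds k = 0)
    (hbal : ∀ k, 1 ≤ k → k ≤ T → ds k = ds (k - 1) - dy k + dx k)
    (hper : ∀ k, 1 ≤ k → k ≤ T → s k + δ * ds k ∈ Icc (Ls k) (Us k) ∧
      FlowFeasible (Lx k) (Ux k) (Ly k) (Uy k) (w k) (z k) (x k + δ * dx k) (y k + δ * dy k)) :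
    Q1mem T s0 Ls Us Lx Ux Ly Uy (x + δ • dx) (y + δ • dy) (s + δ • ds) w z := by
  obtain ⟨hs0, hin, hout0⟩ := hQ
  refine ⟨?_, fun k hk1 hkT => ?_, fun k hk => ?_⟩
  · simp [hs0, (hout 0 (by omega)).2.2]
  · obtain ⟨hbalk, -, -, -, -, -, -, -, hw, hz⟩ := hin k hk1 hkT
    obtain ⟨⟨hs1, hs2⟩, hxy, ⟨hy1, hy2⟩, hx1, hx2⟩ := hper k hk1 hkT
    simp only [Pi.add_apply, Pi.smul_apply, smul_eq_mul]
    refine ⟨?_, hxy, hs1, hs2, hy1, hy2, hx1, hx2, hw, hz⟩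
    rw [hbalk, hbal k hk1 hkT]
    ring
  · obtain ⟨hx, hy, hw, hz, hs⟩ := hout0 k hk
    obtain ⟨hdx, hdy, hds⟩ := hout k hk
    refine ⟨by simp [hx, hdx], by simp [hy, hdy], hw, hz, fun hk0 => by simp [hs hk0, hds]⟩

end Q1mem

section

variable {T : ℕ} {s0 : ℝ} {Ls Us Lx Ux Ly Uy x y s w z : ℕ → ℝ}

theorem eq_zero_of_slack_of_isFlexible
    (hext : (x, y, s, w, z) ∈ (convexHull ℝ (Q1 T s0 Ls Us Lx Ux Ly Uy)).extremePoints ℝ)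
    {ds : ℕ → ℝ} (hout : ∀ k, ¬(1 ≤ k ∧ k ≤ T) → ds k = 0)
    (hslack : ∀ k, ds k ≠ 0 → s k ∈ Ioo (Ls k) (Us k))
    (hjump : ∀ k, 1 ≤ k → k ≤ T → ds k ≠ ds (k - 1) →
      IsFlexible (Lx k) (Ux k) (Ly k) (Uy k) (w k) (z k) (x k) (y k)) :
    ds = 0 := by
  have hQ := Q1mem.of_mem_extremePoints hext
  have hdir (k : ℕ) : ∃ a b : ℝ, (¬(1 ≤ k ∧ k ≤ T) → a = 0 ∧ b = 0) ∧
      (1 ≤ k → k ≤ T → a - b = ds k - ds (k - 1) ∧ ∀ᶠ δ in 𝓝 (0 : ℝ),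
        FlowFeasible (Lx k) (Ux k) (Ly k) (Uy k) (w k) (z k) (x k + δ * a) (y k + δ * b)) := by
    by_cases hk : 1 ≤ k ∧ k ≤ T
    · obtain ⟨a, b, hab, hev⟩ := (hQ.flowFeasible hk.1 hk.2).exists_sub_eq_eventually
        fun h => hjump k hk.1 hk.2 (sub_ne_zero.1 h)
      exact ⟨a, b, fun h => (h hk).elim, fun _ _ => ⟨hab, hev⟩⟩
    · exact ⟨0, 0, fun _ => ⟨rfl, rfl⟩, fun h1 h2 => (hk ⟨h1, h2⟩).elim⟩
  choose dx dy hdxy using hdir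
  have hper : ∀ k ∈ Finset.Icc 1 T, ∀ᶠ δ in 𝓝 (0 : ℝ), s k + δ * ds k ∈ Icc (Ls k) (Us k) ∧
      FlowFeasible (Lx k) (Ux k) (Ly k) (Uy k) (w k) (z k) (x k + δ * dx k) (y k + δ * dy k) := by
    intro k hk
    obtain ⟨hk1, hkT⟩ := Finset.mem_Icc.1 hk
    refine Eventually.and ?_ ((hdxy k).2 hk1 hkT).2
    rcases eq_or_ne (ds k) 0 with h0 | h0
    · exact Eventually.of_forall fun δ => by simpa [h0] using hQ.stock_mem_Icc hk1 hkT
    · exact (eventually_add_mul_mem_Ioo (hslack k h0) _).mono fun δ hδ => Ioo_subset_Icc_self hδ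
  have hev : ∀ᶠ δ in 𝓝 (0 : ℝ),
      (x, y, s, w, z) + δ • (dx, dy, ds, (0 : ℕ → ℝ), (0 : ℕ → ℝ)) ∈
        Q1 T s0 Ls Us Lx Ux Ly Uy := by
    filter_upwards [(eventually_all_finset _).2 hper] with δ hδ
    simp only [Prod.smul_mk, Prod.mk_add_mk, smul_zero, add_zero]
    refine hQ.add_smul (fun k hk => ⟨((hdxy k).1 hk).1, ((hdxy k).1 hk).2, hout k hk⟩)
      (fun k hk1 hkT => ?_) fun k hk1 hkT => hδ k (Finset.mem_Icc.2 ⟨hk1, hkT⟩)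
    linarith [((hdxy k).2 hk1 hkT).1]
  exact congrArg (fun d => d.2.2.1) (eq_zero_of_eventually_add_smul_mem hext hev)

theorem false_of_slack_between_isFlexible
    (hext : (x, y, s, w, z) ∈ (convexHull ℝ (Q1 T s0 Ls Us Lx Ux Ly Uy)).extremePoints ℝ)
    {i j : ℕ} (hi : 1 ≤ i) (hij : i < j) (hjT : j ≤ T + 1)
    (hfi : IsFlexible (Lx i) (Ux i) (Ly i) (Uy i) (w i) (z i) (x i) (y i))
    (hfj : j ≤ T → IsFlexible (Lx j) (Ux j) (Ly j) (Uy j) (w j) (z j) (x j) (y j))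
    (hslack : ∀ k, i ≤ k → k < j → s k ∈ Ioo (Ls k) (Us k)) : False := by
  have h := congrFun (eq_zero_of_slack_of_isFlexible hext
    (ds := fun k => if i ≤ k ∧ k < j then 1 else 0) ?_ ?_ ?_) i
  · simp [hij] at h
  · intro k hk
    rw [if_neg (by omega)]
  · intro k hk
    split_ifs at hk with hk'
    · exact hslack k hk'.1 hk'.2
    · exact (hk rfl).elim
  · intro k hk1 hkT hk
    obtain rfl | rfl : k = i ∨ k = j := by
      by_contra hne
      exact hk (if_congr (by omega) rfl rfl)
    exacts [hfi, hfj hkT]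

end

theorem stock_of_extremePoint_mem_stockLevelSet_general
    (T : ℕ) (s0 : ℝ) (Ls Us Lx Ux Ly Uy : ℕ → ℝ)
    (t : ℕ) (ht1 : 1 ≤ t) (htT : t ≤ T) (x y s w z : ℕ → ℝ)
    (hext : (x, y, s, w, z) ∈
      Set.extremePoints ℝ (convexHull ℝ (Q1 T s0 Ls Us Lx Ux Ly Uy))) :
    s t ∈ stockLevelSet T t s0 Ls Us Lx Ux Ly Uy := by
  have hQ := Q1mem.of_mem_extremePoints hext
  obtain ⟨a, hat, ha, hslack_a⟩ :=
    Nat.exists_last_le (P := fun k => k = 0 ∨ s k ∉ Ioo (Ls k) (Us k)) (Or.inl rfl) t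
  rcases hQ.forall_mem_boundaryFlows_or_exists_isFlexible a htT with hpast | ⟨i, hai, hit, hfi⟩
  · exact hQ.stock_mem_stockLevelSet_of_past ht1 htT hat ha hpast
  obtain ⟨b, htb, hb, hslack_b⟩ := Nat.exists_first_gt
    (P := fun k => T < k ∨ s k ∉ Ioo (Ls k) (Us k)) (Nat.lt_succ_of_le htT) (Or.inl T.lt_succ_self)
  have hslack (j : ℕ) (hjb : j ≤ b) (k : ℕ) (hik : i ≤ k) (hkj : k < j) :
      s k ∈ Ioo (Ls k) (Us k) := by
    rcases le_or_gt k t with hkt | hkt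
    · exact not_not.1 (not_or.1 (hslack_a k (by omega) hkt)).2
    · exact not_not.1 (not_or.1 (hslack_b k hkt (by omega))).2
  rcases le_or_gt b T with hbT | hTb
  · rcases hQ.forall_mem_boundaryFlows_or_exists_isFlexible t hbT with
      hfuture | ⟨j, htj, hjb, hfj⟩
    · exact hQ.stock_mem_stockLevelSet_of_future ht1 htb hbT (hb.resolve_left (by omega)) hfuture
    · exact (false_of_slack_between_isFlexible hext (by omega) (by omega) (by omega) hfi
        (fun _ => hfj) (hslack j hjb)).elim
  · exact (false_of_slack_between_isFlexible hext (j := T + 1) (by omega) (by omega) le_rfl hfi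
      (fun h => by omega) (hslack (T + 1) hTb)).elim

/-- **Theorem**: at every extreme point of `P1 = conv(Q1)`, the stock level at
the end of period `t` lies in the set `S_t`. -/
theorem stock_of_extremePoint_mem_stockLevelSet
    (T : ℕ) (hT : 1 ≤ T) (s0 : ℝ) (Ls Us Lx Ux Ly Uy : ℕ → ℝ)
    (hnn : ∀ t, 1 ≤ t → t ≤ T →
      0 ≤ Ls t ∧ 0 ≤ Us t ∧ 0 ≤ Lx t ∧ 0 ≤ Ux t ∧ 0 ≤ Ly t ∧ 0 ≤ Uy t)
    (t : ℕ) (ht1 : 1 ≤ t) (htT : t ≤ T) (x y s w z : ℕ → ℝ)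
    (hext : (x, y, s, w, z) ∈
      Set.extremePoints ℝ (convexHull ℝ (Q1 T s0 Ls Us Lx Ux Ly Uy))) :
    s t ∈ stockLevelSet T t s0 Ls Us Lx Ux Ly Uy :=
  stock_of_extremePoint_mem_stockLevelSet_general T s0 Ls Us Lx Ux Ly Uy t ht1 htT x y s w z hext
end
end

section
/- Let q' = (ᾱ, x̄, ȳ, w̄, z̄, s̄) be an extreme point of the polytope P' defined by constraints (i)–(x). Then ᾱ, w̄ and z̄ are integral, i.e., every coordinate of ᾱ, w̄ and z̄ is an integer. -/
noncomputable section

/-- The node layer `V_t` of the network: `V_0 = {s_0}` and `V_t = S_t`. -/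
def nodeSet (T : ℕ) (s0 : ℝ) (Ls Us Lx Ux Ly Uy : ℕ → ℝ) (t : ℕ) : Set ℝ :=
  if t = 0 then {s0} else stockLevelSet T t s0 Ls Us Lx Ux Ly Uy

/-- The arcs of the network: an arc `(t, s, s')` with `t ∈ {1,…,T}`, tail
`s ∈ V_{t-1}`, head `s' ∈ V_t`, and
`s' ∈ [s + L^x_t, s + U^x_t] ∪ {s} ∪ [s - U^y_t, s - L^y_t]`. -/
def arcSet (T : ℕ) (s0 : ℝ) (Ls Us Lx Ux Ly Uy : ℕ → ℝ) : Set (ℕ × ℝ × ℝ) :=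
  {a | 1 ≤ a.1 ∧ a.1 ≤ T ∧
    a.2.1 ∈ nodeSet T s0 Ls Us Lx Ux Ly Uy (a.1 - 1) ∧
    a.2.2 ∈ nodeSet T s0 Ls Us Lx Ux Ly Uy a.1 ∧
    (a.2.2 ∈ Set.Icc (a.2.1 + Lx a.1) (a.2.1 + Ux a.1) ∨ a.2.2 = a.2.1 ∨
      a.2.2 ∈ Set.Icc (a.2.1 - Uy a.1) (a.2.1 - Ly a.1))}

/-- The purchase quantity `q^x(a) = (s' - s)^+` associated with an arc. -/
def qx (a : ℕ × ℝ × ℝ) : ℝ := max (a.2.2 - a.2.1) 0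

/-- The sale quantity `q^y(a) = (s - s')^+` associated with an arc. -/
def qy (a : ℕ × ℝ × ℝ) : ℝ := max (a.2.1 - a.2.2) 0

/-- Membership in the polytope `P'` given by constraints (i)–(x): `α` is a unit
flow on the network, `x, y` are the arc-quantity aggregates, `s` obeys the
balance equations, and `w, z` are related to `α` by (vi)–(ix) and bounded by 1.
(The flow variable `α` vanishes off the arc set, and the remaining coordinates
vanish outside the planning horizon.) -/
def PprimeMem (T : ℕ) (s0 : ℝ) (Ls Us Lx Ux Ly Uy : ℕ → ℝ)
    (α : ℕ × ℝ × ℝ → ℝ) (x y w z s : ℕ → ℝ) : Prop :=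
  (∀ t, 1 ≤ t → t ≤ T - 1 → ∀ v ∈ nodeSet T s0 Ls Us Lx Ux Ly Uy t,
    ∑ᶠ a ∈ {a ∈ arcSet T s0 Ls Us Lx Ux Ly Uy | a.1 = t ∧ a.2.2 = v}, α a =
    ∑ᶠ a ∈ {a ∈ arcSet T s0 Ls Us Lx Ux Ly Uy | a.1 = t + 1 ∧ a.2.1 = v}, α a) ∧
  (∑ᶠ a ∈ {a ∈ arcSet T s0 Ls Us Lx Ux Ly Uy | a.1 = 1 ∧ a.2.1 = s0}, α a = 1) ∧
  (∀ a ∈ arcSet T s0 Ls Us Lx Ux Ly Uy, 0 ≤ α a) ∧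
  (∀ a, a ∉ arcSet T s0 Ls Us Lx Ux Ly Uy → α a = 0) ∧
  (∀ t, 1 ≤ t → t ≤ T →
    x t = ∑ᶠ a ∈ {a ∈ arcSet T s0 Ls Us Lx Ux Ly Uy | a.1 = t}, qx a * α a ∧
    y t = ∑ᶠ a ∈ {a ∈ arcSet T s0 Ls Us Lx Ux Ly Uy | a.1 = t}, qy a * α a) ∧
  (s 0 = s0 ∧ ∀ t, 1 ≤ t → t ≤ T → s t = s (t - 1) - y t + x t) ∧
  (∀ t, 1 ≤ t → t ≤ T → 0 < Lx t →
    w t = ∑ᶠ a ∈ {a ∈ arcSet T s0 Ls Us Lx Ux Ly Uy | a.1 = t ∧ 0 < qx a}, α a) ∧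
  (∀ t, 1 ≤ t → t ≤ T → Lx t = 0 →
    w t ≥ ∑ᶠ a ∈ {a ∈ arcSet T s0 Ls Us Lx Ux Ly Uy | a.1 = t ∧ 0 < qx a}, α a) ∧
  (∀ t, 1 ≤ t → t ≤ T → 0 < Ly t →
    z t = ∑ᶠ a ∈ {a ∈ arcSet T s0 Ls Us Lx Ux Ly Uy | a.1 = t ∧ 0 < qy a}, α a) ∧
  (∀ t, 1 ≤ t → t ≤ T → Ly t = 0 →
    z t ≥ ∑ᶠ a ∈ {a ∈ arcSet T s0 Ls Us Lx Ux Ly Uy | a.1 = t ∧ 0 < qy a}, α a) ∧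
  (∀ t, 1 ≤ t → t ≤ T → w t ≤ 1 ∧ z t ≤ 1) ∧
  (∀ t, ¬(1 ≤ t ∧ t ≤ T) →
    x t = 0 ∧ y t = 0 ∧ w t = 0 ∧ z t = 0 ∧ (t ≠ 0 → s t = 0))

/-- The polytope `P'` in the variables `(α, x, y, w, z, s)`. -/
def Pprime (T : ℕ) (s0 : ℝ) (Ls Us Lx Ux Ly Uy : ℕ → ℝ) :
    Set ((ℕ × ℝ × ℝ → ℝ) × (ℕ → ℝ) × (ℕ → ℝ) × (ℕ → ℝ) × (ℕ → ℝ) × (ℕ → ℝ)) :=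
  {p | PprimeMem T s0 Ls Us Lx Ux Ly Uy
    p.1 p.2.1 p.2.2.1 p.2.2.2.1 p.2.2.2.2.1 p.2.2.2.2.2}

open scoped Classical

namespace PPaux

/-- The set of sums `∑ i ∈ s, g i` with `g i ∈ G i` is finite. -/
lemma sum_choice_finite (s : Finset ℕ) (G : ℕ → Set ℝ) (hG : ∀ i, (G i).Finite) :
    {r : ℝ | ∃ g : ℕ → ℝ, (∀ i ∈ s, g i ∈ G i) ∧ r = ∑ i ∈ s, g i}.Finite := by
  classical
  induction s using Finset.induction with
  | empty =>
    apply Set.Finite.subset (Set.finite_singleton (0:ℝ))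
    rintro r ⟨g, -, rfl⟩; simp
  | @insert a s hns ih =>
    apply Set.Finite.subset (Set.Finite.image2 (· + ·) (hG a) ih)
    rintro r ⟨g, hg, rfl⟩
    rw [Finset.sum_insert hns]
    exact Set.mem_image2_of_mem (hg a (Finset.mem_insert_self a s))
      ⟨g, fun i hi => hg i (Finset.mem_insert_of_mem hi), rfl⟩

lemma stockLevelSet_finite (T t : ℕ) (s0 : ℝ) (Ls Us Lx Ux Ly Uy : ℕ → ℝ) :
    (stockLevelSet T t s0 Ls Us Lx Ux Ly Uy).Finite := by
  classical
  apply Set.Finite.inter_of_left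
  apply Set.Finite.union
  · -- first component
    have hG : ∀ i : ℕ, ({0, -Ly i, -Uy i, Lx i, Ux i} : Set ℝ).Finite := fun i =>
      (Set.finite_singleton _).insert _ |>.insert _ |>.insert _ |>.insert _
    have hK : ({s0} ∪ Us '' Set.Icc 1 t ∪ Ls '' Set.Icc 1 t : Set ℝ).Finite :=
      (((Set.finite_singleton s0).union ((Set.finite_Icc 1 t).image Us)).union
        ((Set.finite_Icc 1 t).image Ls))
    apply Set.Finite.subset (Set.Finite.image2 (· + ·) hK
      (sum_choice_finite (Finset.Icc 1 t) _ hG))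
    rintro r ⟨K, hKmem, v1, v2, u1, u2, hv1, hv2, hu1, hu2, hle, rfl⟩
    apply Set.mem_image2.2
    refine ⟨K, ?_, -(∑ i ∈ Finset.Icc 1 t, (v1 i * Ly i + v2 i * Uy i))
        + ∑ i ∈ Finset.Icc 1 t, (u1 i * Lx i + u2 i * Ux i),
      ⟨fun i => -(v1 i * Ly i + v2 i * Uy i) + (u1 i * Lx i + u2 i * Ux i),
        fun i _ => ?_, by simp only [Finset.sum_add_distrib, Finset.sum_neg_distrib]⟩, by ring⟩
    · rcases hKmem with rfl | ⟨i, h1, h2, rfl⟩ | ⟨i, h1, h2, rfl⟩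
      · exact Or.inl (Or.inl rfl)
      · exact Or.inl (Or.inr ⟨i, ⟨h1, h2⟩, rfl⟩)
      · exact Or.inr ⟨i, ⟨h1, h2⟩, rfl⟩
    · rcases hv1 i with h1 | h1 <;> rcases hv2 i with h2 | h2 <;>
        rcases hu1 i with h3 | h3 <;> rcases hu2 i with h4 | h4 <;>
        first
          | (exfalso; linarith [hle i])
          | simp [h1, h2, h3, h4]
  · have hG : ∀ i : ℕ, ({0, Ly i, Uy i, -Lx i, -Ux i} : Set ℝ).Finite := fun i =>
      (Set.finite_singleton _).insert _ |>.insert _ |>.insert _ |>.insert _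
    have hK : (Us '' Set.Icc (t+1) T ∪ Ls '' Set.Icc (t+1) T : Set ℝ).Finite :=
      ((Set.finite_Icc (t+1) T).image Us).union ((Set.finite_Icc (t+1) T).image Ls)
    apply Set.Finite.subset (Set.Finite.image2 (· + ·) hK
      (sum_choice_finite (Finset.Icc (t+1) T) _ hG))
    rintro r ⟨K, hKmem, v3, v4, u3, u4, hv3, hv4, hu3, hu4, hle, rfl⟩
    apply Set.mem_image2.2
    refine ⟨K, ?_, (∑ i ∈ Finset.Icc (t+1) T, (v3 i * Ly i + v4 i * Uy i))
        + -(∑ i ∈ Finset.Icc (t+1) T, (u3 i * Lx i + u4 i * Ux i)),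
      ⟨fun i => (v3 i * Ly i + v4 i * Uy i) + -(u3 i * Lx i + u4 i * Ux i),
        fun i _ => ?_, by simp only [Finset.sum_add_distrib, Finset.sum_neg_distrib]⟩, by ring⟩
    · rcases hKmem with ⟨i, h1, h2, rfl⟩ | ⟨i, h1, h2, rfl⟩
      · exact Or.inl ⟨i, ⟨h1, h2⟩, rfl⟩
      · exact Or.inr ⟨i, ⟨h1, h2⟩, rfl⟩
    · rcases hv3 i with h1 | h1 <;> rcases hv4 i with h2 | h2 <;>
        rcases hu3 i with h3 | h3 <;> rcases hu4 i with h4 | h4 <;>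
        first
          | (exfalso; linarith [hle i])
          | simp [h1, h2, h3, h4]

lemma nodeSet_finite (T : ℕ) (s0 : ℝ) (Ls Us Lx Ux Ly Uy : ℕ → ℝ) (t : ℕ) :
    (nodeSet T s0 Ls Us Lx Ux Ly Uy t).Finite := by
  unfold nodeSet
  split
  · exact Set.finite_singleton _
  · exact stockLevelSet_finite T t s0 Ls Us Lx Ux Ly Uy

lemma arcSet_finite (T : ℕ) (s0 : ℝ) (Ls Us Lx Ux Ly Uy : ℕ → ℝ) :
    (arcSet T s0 Ls Us Lx Ux Ly Uy).Finite := by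
  apply Set.Finite.subset
    (Set.Finite.biUnion (Set.finite_Icc 1 T) (fun t _ =>
      (Set.finite_singleton t |>.prod
        ((nodeSet_finite T s0 Ls Us Lx Ux Ly Uy (t-1)).prod
          (nodeSet_finite T s0 Ls Us Lx Ux Ly Uy t)))))
  rintro ⟨t, s, s'⟩ ⟨h1, h2, h3, h4, -⟩
  exact Set.mem_biUnion (Set.mem_Icc.2 ⟨h1, h2⟩) ⟨rfl, h3, h4⟩

end PPaux
namespace PPaux

section Flow

variable (T : ℕ) (s0 : ℝ) (Ls Us Lx Ux Ly Uy : ℕ → ℝ)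

/-- The (finite) arc set as a `Finset`. -/
def Afin : Finset (ℕ × ℝ × ℝ) := (arcSet_finite T s0 Ls Us Lx Ux Ly Uy).toFinset

variable {T s0 Ls Us Lx Ux Ly Uy}

lemma mem_Afin {a : ℕ × ℝ × ℝ} :
    a ∈ Afin T s0 Ls Us Lx Ux Ly Uy ↔ a ∈ arcSet T s0 Ls Us Lx Ux Ly Uy :=
  Set.Finite.mem_toFinset _

lemma finsum_filter_eq (P : ℕ × ℝ × ℝ → Prop) [DecidablePred P] (g : ℕ × ℝ × ℝ → ℝ) :
    ∑ᶠ a ∈ {a ∈ arcSet T s0 Ls Us Lx Ux Ly Uy | P a}, g a =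
      ∑ a ∈ (Afin T s0 Ls Us Lx Ux Ly Uy).filter P, g a := by
  rw [← finsum_mem_coe_finset]
  congr 1
  ext a
  simp [mem_Afin, Set.mem_setOf_eq]

variable {β : ℕ × ℝ × ℝ → ℝ}

/-- tail of a time-1 arc is `s0`. -/
lemma tail_eq_s0 {a : ℕ × ℝ × ℝ} (ha : a ∈ arcSet T s0 Ls Us Lx Ux Ly Uy)
    (h1 : a.1 = 1) : a.2.1 = s0 := by
  obtain ⟨-, -, h3, -, -⟩ := ha
  rw [h1] at h3
  simpa [nodeSet] using h3

lemma head_mem_nodeSet {a : ℕ × ℝ × ℝ} (ha : a ∈ arcSet T s0 Ls Us Lx Ux Ly Uy) :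
    a.2.2 ∈ nodeSet T s0 Ls Us Lx Ux Ly Uy a.1 := ha.2.2.2.1

lemma tail_mem_nodeSet {a : ℕ × ℝ × ℝ} (ha : a ∈ arcSet T s0 Ls Us Lx Ux Ly Uy) :
    a.2.1 ∈ nodeSet T s0 Ls Us Lx Ux Ly Uy (a.1 - 1) := ha.2.2.1

-- Hypotheses: conservation, unit source, nonnegativity — in `Finset` form.
variable (hcons : ∀ t, 1 ≤ t → t ≤ T - 1 → ∀ v ∈ nodeSet T s0 Ls Us Lx Ux Ly Uy t,
    ∑ a ∈ (Afin T s0 Ls Us Lx Ux Ly Uy).filter (fun a => a.1 = t ∧ a.2.2 = v), β a =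
    ∑ a ∈ (Afin T s0 Ls Us Lx Ux Ly Uy).filter (fun a => a.1 = t + 1 ∧ a.2.1 = v), β a)
  (hsrc : ∑ a ∈ (Afin T s0 Ls Us Lx Ux Ly Uy).filter
      (fun a => a.1 = 1 ∧ a.2.1 = s0), β a = 1)
  (hpos : ∀ a ∈ arcSet T s0 Ls Us Lx Ux Ly Uy, 0 ≤ β a)

include hcons hsrc in
/-- Total flow across each layer is 1. -/
lemma layer_total (hT : 1 ≤ T) :
    ∀ t, 1 ≤ t → t ≤ T →
      ∑ a ∈ (Afin T s0 Ls Us Lx Ux Ly Uy).filter (fun a => a.1 = t), β a = 1 := by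
  intro t
  induction t with
  | zero => omega
  | succ t ih =>
    intro h1 h2
    rcases Nat.eq_zero_or_pos t with rfl | ht
    · -- layer 1 equals source sum
      rw [← hsrc]
      apply Finset.sum_congr _ (fun _ _ => rfl)
      apply Finset.filter_congr
      intro a ha
      constructor
      · exact fun h => ⟨h, tail_eq_s0 ((mem_Afin).1 ha) h⟩
      · exact fun h => h.1
    · -- inductive step using conservation at layer t
      have hL := ih ht (by omega)
      set A := Afin T s0 Ls Us Lx Ux Ly Uy with hA
      set Vt : Finset ℝ :=
        ((A.filter (fun a => a.1 = t)).image (fun a => a.2.2)) ∪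
        ((A.filter (fun a => a.1 = t + 1)).image (fun a => a.2.1)) with hVt
      have hin : ∑ a ∈ A.filter (fun a => a.1 = t), β a =
          ∑ v ∈ Vt, ∑ a ∈ A.filter (fun a => a.1 = t ∧ a.2.2 = v), β a := by
        rw [← Finset.sum_fiberwise_of_maps_to (g := fun a => a.2.2)
          (t := Vt) (fun a ha => Finset.mem_union_left _
            (Finset.mem_image_of_mem _ ha)) β]
        congr 1
        ext v
        rw [Finset.filter_filter]
      have hout : ∑ a ∈ A.filter (fun a => a.1 = t + 1), β a =
          ∑ v ∈ Vt, ∑ a ∈ A.filter (fun a => a.1 = t + 1 ∧ a.2.1 = v), β a := by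
        rw [← Finset.sum_fiberwise_of_maps_to (g := fun a => a.2.1)
          (t := Vt) (fun a ha => Finset.mem_union_right _
            (Finset.mem_image_of_mem _ ha)) β]
        congr 1
        ext v
        rw [Finset.filter_filter]
      rw [hout, ← hL, hin]
      apply Finset.sum_congr rfl
      intro v hv
      have hvnode : v ∈ nodeSet T s0 Ls Us Lx Ux Ly Uy t := by
        rcases Finset.mem_union.1 hv with h | h
        · obtain ⟨a, ha, rfl⟩ := Finset.mem_image.1 h
          obtain ⟨haA, hat⟩ := Finset.mem_filter.1 ha
          have := head_mem_nodeSet ((mem_Afin).1 haA)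
          rwa [hat] at this
        · obtain ⟨a, ha, rfl⟩ := Finset.mem_image.1 h
          obtain ⟨haA, hat⟩ := Finset.mem_filter.1 ha
          have := tail_mem_nodeSet ((mem_Afin).1 haA)
          rw [hat] at this
          simpa using this
      exact (hcons t ht (by omega) v hvnode).symm

include hcons hsrc hpos in
/-- Any partial layer sum is at most 1. -/
lemma layer_subset_le (hT : 1 ≤ T) (t : ℕ) (h1 : 1 ≤ t) (h2 : t ≤ T)
    (P : ℕ × ℝ × ℝ → Prop) [DecidablePred P] :
    ∑ a ∈ (Afin T s0 Ls Us Lx Ux Ly Uy).filter (fun a => a.1 = t ∧ P a), β a ≤ 1 := by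
  rw [← layer_total hcons hsrc hT t h1 h2]
  apply Finset.sum_le_sum_of_subset_of_nonneg
  · intro a ha
    obtain ⟨haA, h, -⟩ := Finset.mem_filter.1 ha
    exact Finset.mem_filter.2 ⟨haA, h⟩
  · intro a ha _
    exact hpos a ((mem_Afin).1 (Finset.mem_filter.1 ha).1)

include hcons hpos in
/-- Backward step: an arc with positive flow at time `≥ 2` has a predecessor. -/
lemma backward_step {a : ℕ × ℝ × ℝ}
    (ha : a ∈ arcSet T s0 Ls Us Lx Ux Ly Uy) (hb : 0 < β a) (h2 : 2 ≤ a.1) :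
    ∃ b ∈ arcSet T s0 Ls Us Lx Ux Ly Uy,
      b.1 = a.1 - 1 ∧ b.2.2 = a.2.1 ∧ 0 < β b := by
  have hT2 : a.1 ≤ T := ha.2.1
  have hc := hcons (a.1 - 1) (by omega) (by omega) a.2.1 (tail_mem_nodeSet ha)
  have hstep : (a.1 - 1) + 1 = a.1 := by omega
  rw [hstep] at hc
  have hmem : a ∈ (Afin T s0 Ls Us Lx Ux Ly Uy).filter
      (fun b => b.1 = a.1 ∧ b.2.1 = a.2.1) :=
    Finset.mem_filter.2 ⟨(mem_Afin).2 ha, rfl, rfl⟩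
  have hout : 0 < ∑ b ∈ (Afin T s0 Ls Us Lx Ux Ly Uy).filter
      (fun b => b.1 = a.1 ∧ b.2.1 = a.2.1), β b := by
    have hle : β a ≤ _ := Finset.single_le_sum
      (f := β) (fun b hb' => hpos b ((mem_Afin).1 (Finset.mem_filter.1 hb').1)) hmem
    exact lt_of_lt_of_le hb hle
  rw [← hc] at hout
  obtain ⟨b, hbmem, hbne⟩ := Finset.exists_ne_zero_of_sum_ne_zero (ne_of_gt hout)
  obtain ⟨hbA, hb1, hb2⟩ := Finset.mem_filter.1 hbmem
  have hbarc := (mem_Afin (a := b)).1 hbA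
  exact ⟨b, hbarc, hb1, hb2, lt_of_le_of_ne (hpos b hbarc) (Ne.symm hbne)⟩

include hcons hpos in
/-- Forward step: an arc with positive flow at time `< T` has a successor. -/
lemma forward_step {a : ℕ × ℝ × ℝ}
    (ha : a ∈ arcSet T s0 Ls Us Lx Ux Ly Uy) (hb : 0 < β a) (h2 : a.1 + 1 ≤ T) :
    ∃ b ∈ arcSet T s0 Ls Us Lx Ux Ly Uy,
      b.1 = a.1 + 1 ∧ b.2.1 = a.2.2 ∧ 0 < β b := by
  have h1 : 1 ≤ a.1 := ha.1
  have hc := hcons a.1 h1 (by omega) a.2.2 (head_mem_nodeSet ha)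
  have hmem : a ∈ (Afin T s0 Ls Us Lx Ux Ly Uy).filter
      (fun b => b.1 = a.1 ∧ b.2.2 = a.2.2) :=
    Finset.mem_filter.2 ⟨(mem_Afin).2 ha, rfl, rfl⟩
  have hout : 0 < ∑ b ∈ (Afin T s0 Ls Us Lx Ux Ly Uy).filter
      (fun b => b.1 = a.1 ∧ b.2.2 = a.2.2), β b := by
    have hle : β a ≤ _ := Finset.single_le_sum
      (f := β) (fun b hb' => hpos b ((mem_Afin).1 (Finset.mem_filter.1 hb').1)) hmem
    exact lt_of_lt_of_le hb hle
  rw [hc] at hout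
  obtain ⟨b, hbmem, hbne⟩ := Finset.exists_ne_zero_of_sum_ne_zero (ne_of_gt hout)
  obtain ⟨hbA, hb1, hb2⟩ := Finset.mem_filter.1 hbmem
  have hbarc := (mem_Afin (a := b)).1 hbA
  exact ⟨b, hbarc, hb1, hb2, lt_of_le_of_ne (hpos b hbarc) (Ne.symm hbne)⟩

end Flow

end PPaux
namespace PPaux

section Path

variable {T : ℕ} {s0 : ℝ} {Ls Us Lx Ux Ly Uy : ℕ → ℝ} {β : ℕ × ℝ × ℝ → ℝ}

variable (hcons : ∀ t, 1 ≤ t → t ≤ T - 1 → ∀ v ∈ nodeSet T s0 Ls Us Lx Ux Ly Uy t,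
    ∑ a ∈ (Afin T s0 Ls Us Lx Ux Ly Uy).filter (fun a => a.1 = t ∧ a.2.2 = v), β a =
    ∑ a ∈ (Afin T s0 Ls Us Lx Ux Ly Uy).filter (fun a => a.1 = t + 1 ∧ a.2.1 = v), β a)
  (hpos : ∀ a ∈ arcSet T s0 Ls Us Lx Ux Ly Uy, 0 ≤ β a)

include hcons hpos in
lemma backward_chain :
    ∀ k (a : ℕ × ℝ × ℝ), a ∈ arcSet T s0 Ls Us Lx Ux Ly Uy → 0 < β a → a.1 = k →
    ∃ c : ℕ → ℕ × ℝ × ℝ, c k = a ∧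
      (∀ i, 1 ≤ i → i ≤ k →
        c i ∈ arcSet T s0 Ls Us Lx Ux Ly Uy ∧ (c i).1 = i ∧ 0 < β (c i)) ∧
      (∀ i, 1 ≤ i → i + 1 ≤ k → (c i).2.2 = (c (i + 1)).2.1) := by
  intro k
  induction k using Nat.strong_induction_on with
  | _ k ih =>
    intro a ha hb hk
    have h1 : 1 ≤ a.1 := ha.1
    rcases le_or_gt k 1 with hk1 | hk1
    · have hk1' : k = 1 := by omega
      subst hk1'
      exact ⟨fun _ => a, rfl,
        fun i hi1 hi2 => by
          have : i = 1 := by omega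
          subst this; exact ⟨ha, hk, hb⟩,
        fun i hi1 hi2 => by omega⟩
    · obtain ⟨b, hbarc, hb1, hb2, hbpos⟩ := backward_step hcons hpos ha hb (by omega)
      have hb1' : b.1 = k - 1 := by omega
      obtain ⟨c', hc'k, hc'props, hc'match⟩ := ih (k - 1) (by omega) b hbarc hbpos hb1'
      refine ⟨fun i => if i = k then a else c' i, by simp, ?_, ?_⟩
      · intro i hi1 hi2
        rcases eq_or_lt_of_le hi2 with rfl | hik
        · simp [hk, ha, hb]
        · have : i ≠ k := by omega
          simp only [this, if_false]
          exact hc'props i hi1 (by omega)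
      · intro i hi1 hi2
        rcases eq_or_lt_of_le hi2 with hik | hik
        · have hieq : i = k - 1 := by omega
          have hine : i ≠ k := by omega
          have hik' : i + 1 = k := by omega
          simp only [hine, if_false, hik', if_true, if_pos rfl]
          rw [hieq, hc'k, hb2]
        · have h1 : i ≠ k := by omega
          have h2 : i + 1 ≠ k := by omega
          simp only [h1, h2, if_false]
          exact hc'match i hi1 (by omega)

include hcons hpos in
lemma forward_chain :
    ∀ m (a : ℕ × ℝ × ℝ), a ∈ arcSet T s0 Ls Us Lx Ux Ly Uy → 0 < β a →
      T - a.1 = m →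
    ∃ c : ℕ → ℕ × ℝ × ℝ, c a.1 = a ∧
      (∀ i, a.1 ≤ i → i ≤ T →
        c i ∈ arcSet T s0 Ls Us Lx Ux Ly Uy ∧ (c i).1 = i ∧ 0 < β (c i)) ∧
      (∀ i, a.1 ≤ i → i + 1 ≤ T → (c i).2.2 = (c (i + 1)).2.1) := by
  intro m
  induction m with
  | zero =>
    intro a ha hb hm
    have haT : a.1 ≤ T := ha.2.1
    have haeq : a.1 = T := by omega
    exact ⟨fun _ => a, rfl,
      fun i hi1 hi2 => by
        have : i = a.1 := by omega
        subst this; exact ⟨ha, rfl, hb⟩,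
      fun i hi1 hi2 => by omega⟩
  | succ m ih =>
    intro a ha hb hm
    have ha1 : a.1 + 1 ≤ T := by omega
    obtain ⟨b, hbarc, hb1, hb2, hbpos⟩ := forward_step hcons hpos ha hb ha1
    obtain ⟨c', hc'k, hc'props, hc'match⟩ := ih b hbarc hbpos (by omega)
    refine ⟨fun i => if i = a.1 then a else c' i, by simp, ?_, ?_⟩
    · intro i hi1 hi2
      rcases eq_or_lt_of_le hi1 with rfl | hik
      · simp [ha, hb]
      · have hne : i ≠ a.1 := by omega
        simp only [hne, if_false]
        exact hc'props i (by omega) hi2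
    · intro i hi1 hi2
      rcases eq_or_lt_of_le hi1 with rfl | hik
      · have hne : a.1 + 1 ≠ a.1 := by omega
        show (if a.1 = a.1 then a else c' a.1).2.2 =
          (if a.1 + 1 = a.1 then a else c' (a.1 + 1)).2.1
        rw [if_pos rfl, if_neg hne, show a.1 + 1 = b.1 from hb1.symm, hc'k, hb2]
      · have h1 : i ≠ a.1 := by omega
        have h2 : i + 1 ≠ a.1 := by omega
        simp only [h1, h2, if_false]
        exact hc'match i (by omega) hi2

include hcons hpos in
/-- A full source-to-sink path of positive-flow arcs through a given arc. -/
lemma exists_path (hT : 1 ≤ T) {a0 : ℕ × ℝ × ℝ}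
    (ha0 : a0 ∈ arcSet T s0 Ls Us Lx Ux Ly Uy) (hb0 : 0 < β a0) :
    ∃ c : ℕ → ℕ × ℝ × ℝ, c a0.1 = a0 ∧
      (∀ i, 1 ≤ i → i ≤ T →
        c i ∈ arcSet T s0 Ls Us Lx Ux Ly Uy ∧ (c i).1 = i ∧ 0 < β (c i)) ∧
      (∀ i, 1 ≤ i → i + 1 ≤ T → (c i).2.2 = (c (i + 1)).2.1) := by
  obtain ⟨cb, hcbk, hcbprops, hcbmatch⟩ :=
    backward_chain hcons hpos a0.1 a0 ha0 hb0 rfl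
  obtain ⟨cf, hcfk, hcfprops, hcfmatch⟩ :=
    forward_chain hcons hpos (T - a0.1) a0 ha0 hb0 rfl
  have h1 : 1 ≤ a0.1 := ha0.1
  have h2 : a0.1 ≤ T := ha0.2.1
  refine ⟨fun i => if i ≤ a0.1 then cb i else cf i, by simp [hcbk], ?_, ?_⟩
  · intro i hi1 hi2
    by_cases h : i ≤ a0.1
    · simp only [h, if_true]; exact hcbprops i hi1 h
    · simp only [h, if_false]; exact hcfprops i (by omega) hi2
  · intro i hi1 hi2
    rcases lt_trichotomy i a0.1 with h | h | h
    · have hi1' : i + 1 ≤ a0.1 := by omega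
      simp only [le_of_lt h, if_true, hi1', if_true]
      exact hcbmatch i hi1 hi1'
    · have hA : ¬ (i + 1 ≤ a0.1) := by omega
      show (if i ≤ a0.1 then cb i else cf i).2.2 =
        (if i + 1 ≤ a0.1 then cb (i + 1) else cf (i + 1)).2.1
      rw [if_pos (le_of_eq h), if_neg hA, h, hcbk]
      have := hcfmatch a0.1 le_rfl (h ▸ hi2)
      rwa [hcfk] at this
    · have hA : ¬ (i ≤ a0.1) := by omega
      have hB : ¬ (i + 1 ≤ a0.1) := by omega
      simp only [hA, hB, if_false]
      exact hcfmatch i (by omega) hi2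

end Path

end PPaux
namespace PPaux

/-- Indicator (as a real function on arcs) of the arc family `c` within horizon `T`. -/
def pathInd (T : ℕ) (c : ℕ → ℕ × ℝ × ℝ) : ℕ × ℝ × ℝ → ℝ :=
  fun a => if 1 ≤ a.1 ∧ a.1 ≤ T ∧ a = c a.1 then 1 else 0

section PathInd

variable {T : ℕ} {s0 : ℝ} {Ls Us Lx Ux Ly Uy : ℕ → ℝ} {c : ℕ → ℕ × ℝ × ℝ}

lemma pathInd_eq_one {a : ℕ × ℝ × ℝ} (h1 : 1 ≤ a.1) (h2 : a.1 ≤ T)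
    (h3 : a = c a.1) : pathInd T c a = 1 := if_pos ⟨h1, h2, h3⟩

lemma pathInd_of_path (hc : ∀ i, 1 ≤ i → i ≤ T → (c i).1 = i)
    (t : ℕ) (h1 : 1 ≤ t) (h2 : t ≤ T) : pathInd T c (c t) = 1 := by
  have := hc t h1 h2
  exact pathInd_eq_one (by omega) (by omega) (by rw [this])

lemma pathInd_eq_zero_off (hc : ∀ i, 1 ≤ i → i ≤ T →
      c i ∈ arcSet T s0 Ls Us Lx Ux Ly Uy)
    {a : ℕ × ℝ × ℝ} (ha : a ∉ arcSet T s0 Ls Us Lx Ux Ly Uy) :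
    pathInd T c a = 0 := by
  apply if_neg
  rintro ⟨h1, h2, h3⟩
  exact ha (h3 ▸ hc a.1 h1 h2)

/-- The key computation: the sum of the path indicator over the arcs of layer `t`
satisfying `Q` is the indicator of `Q (c t)`. -/
lemma pathInd_sum (hc : ∀ i, 1 ≤ i → i ≤ T →
      c i ∈ arcSet T s0 Ls Us Lx Ux Ly Uy ∧ (c i).1 = i)
    (t : ℕ) (h1 : 1 ≤ t) (h2 : t ≤ T) (Q : ℕ × ℝ × ℝ → Prop) [DecidablePred Q] :
    ∑ a ∈ (Afin T s0 Ls Us Lx Ux Ly Uy).filter (fun a => a.1 = t ∧ Q a),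
      pathInd T c a = if Q (c t) then 1 else 0 := by
  have hct := (hc t h1 h2).2
  have hmemA : c t ∈ Afin T s0 Ls Us Lx Ux Ly Uy := (mem_Afin).2 (hc t h1 h2).1
  by_cases hQ : Q (c t)
  · rw [if_pos hQ]
    have hmem : c t ∈ (Afin T s0 Ls Us Lx Ux Ly Uy).filter
        (fun a => a.1 = t ∧ Q a) := Finset.mem_filter.2 ⟨hmemA, hct, hQ⟩
    rw [Finset.sum_eq_single_of_mem (c t) hmem]
    · exact pathInd_of_path (fun i hi1 hi2 => (hc i hi1 hi2).2) t h1 h2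
    · intro b hb hbne
      obtain ⟨-, hb1, -⟩ := Finset.mem_filter.1 hb
      apply if_neg
      rintro ⟨-, -, h3⟩
      rw [hb1] at h3
      exact hbne h3
  · rw [if_neg hQ]
    apply Finset.sum_eq_zero
    intro b hb
    obtain ⟨-, hb1, hbQ⟩ := Finset.mem_filter.1 hb
    apply if_neg
    rintro ⟨-, -, h3⟩
    rw [hb1] at h3
    rw [h3] at hbQ
    exact hQ hbQ

end PathInd

end PPaux
namespace PPaux

/-- Integrality is preserved under finite sums. -/
lemma sum_int {γ : Type*} (S : Finset γ) (f : γ → ℝ) (h : ∀ a, ∃ m : ℤ, f a = m) :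
    ∃ m : ℤ, ∑ a ∈ S, f a = m := by
  classical
  choose g hg using h
  exact ⟨∑ a ∈ S, g a, by rw [Finset.sum_congr rfl fun a _ => hg a]; push_cast; rfl⟩

section Pert

variable (T : ℕ) (s0 : ℝ) (Ls Us Lx Ux Ly Uy : ℕ → ℝ)

/-- Perturbation direction: difference of two path indicators. -/
def dPath (c1 c2 : ℕ → ℕ × ℝ × ℝ) : ℕ × ℝ × ℝ → ℝ :=
  fun a => pathInd T c1 a - pathInd T c2 a

/-- Perturbed `x`-aggregate (with weight `q`). -/
def xPert (q : ℕ × ℝ × ℝ → ℝ) (γ : ℕ × ℝ × ℝ → ℝ) : ℕ → ℝ := fun t =>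
  if 1 ≤ t ∧ t ≤ T then
    ∑ a ∈ (Afin T s0 Ls Us Lx Ux Ly Uy).filter (fun a => a.1 = t), q a * γ a
  else 0

/-- Perturbed stock levels. -/
def sPert (q q' : ℕ × ℝ × ℝ → ℝ) (γ : ℕ × ℝ × ℝ → ℝ) : ℕ → ℝ := fun t =>
  if t = 0 then s0 else if t ≤ T then
    s0 + ∑ i ∈ Finset.Icc 1 t,
      (xPert T s0 Ls Us Lx Ux Ly Uy q γ i - xPert T s0 Ls Us Lx Ux Ly Uy q' γ i)
  else 0

/-- Perturbed indicator-type variables (`w` and `z`). -/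
def wPert (w : ℕ → ℝ) (ct : ℕ → ℝ) (η : ℝ) : ℕ → ℝ := fun t =>
  if 1 ≤ t ∧ t ≤ T then (if w t = 1 then 1 else w t + η * ct t) else 0

/-- Per-layer contribution of the two paths to a `0 < q` filtered sum. -/
def cInd (q : ℕ × ℝ × ℝ → ℝ) (c1 c2 : ℕ → ℕ × ℝ × ℝ) : ℕ → ℝ := fun t =>
  (if 0 < q (c1 t) then (1:ℝ) else 0) - (if 0 < q (c2 t) then (1:ℝ) else 0)

end Pert

end PPaux

namespace PPaux

lemma half_smul {ι : Type*} (f : ι → ℝ) : (1/2 : ℝ) • f + (1/2 : ℝ) • f = f := by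
  funext a
  simp only [Pi.add_apply, Pi.smul_apply, smul_eq_mul]
  ring

lemma half_smul_if {t : ℕ} (f : ℕ → ℝ) (δ : ℝ) :
    (1/2 : ℝ) • (fun u => if u = t then f t + δ else f u)
      + (1/2 : ℝ) • (fun u => if u = t then f t + (-δ) else f u) = f := by
  funext u
  simp only [Pi.add_apply, Pi.smul_apply, smul_eq_mul]
  by_cases h : u = t
  · subst h; simp; ring
  · simp [h]; ring

end PPaux
open PPaux

/-- **Lemma**: at every extreme point `(ᾱ, x̄, ȳ, w̄, z̄, s̄)` of `P'`, the
coordinates of `ᾱ`, `w̄` and `z̄` are all integers. -/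
theorem extremePoint_Pprime_integral
    (T : ℕ) (hT : 1 ≤ T) (s0 : ℝ) (Ls Us Lx Ux Ly Uy : ℕ → ℝ)
    (hnn : ∀ t, 1 ≤ t → t ≤ T →
      0 ≤ Ls t ∧ 0 ≤ Us t ∧ 0 ≤ Lx t ∧ 0 ≤ Ux t ∧ 0 ≤ Ly t ∧ 0 ≤ Uy t)
    (α : ℕ × ℝ × ℝ → ℝ) (x y w z s : ℕ → ℝ)
    (hext : (α, x, y, w, z, s) ∈
      Set.extremePoints ℝ (Pprime T s0 Ls Us Lx Ux Ly Uy)) :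
    (∀ a, ∃ m : ℤ, α a = m) ∧ (∀ t, ∃ m : ℤ, w t = m) ∧
      (∀ t, ∃ m : ℤ, z t = m) := by
  classical
  obtain ⟨hmem, hextr⟩ := mem_extremePoints.1 hext
  have hmem' : PprimeMem T s0 Ls Us Lx Ux Ly Uy α x y w z s := hmem
  clear hmem
  obtain ⟨hc, hs1, hp, hvan, hxy, ⟨hs00, hsrec⟩, hweq, hwge, hzeq, hzge, hwz1, houth⟩ :=
    hmem'
  -- Finset-form conversions of the flow constraints
  have hconsF : ∀ t, 1 ≤ t → t ≤ T - 1 → ∀ v ∈ nodeSet T s0 Ls Us Lx Ux Ly Uy t,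
      ∑ a ∈ (Afin T s0 Ls Us Lx Ux Ly Uy).filter (fun a => a.1 = t ∧ a.2.2 = v), α a =
      ∑ a ∈ (Afin T s0 Ls Us Lx Ux Ly Uy).filter (fun a => a.1 = t + 1 ∧ a.2.1 = v),
        α a := by
    intro t h1 h2 v hv
    have := hc t h1 h2 v hv
    rwa [finsum_filter_eq, finsum_filter_eq] at this
  have hsrcF : ∑ a ∈ (Afin T s0 Ls Us Lx Ux Ly Uy).filter
      (fun a => a.1 = 1 ∧ a.2.1 = s0), α a = 1 := by
    have := hs1
    rwa [finsum_filter_eq] at this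
  -- Part 1: integrality of α
  have haint : ∀ a, ∃ m : ℤ, α a = m := by
    by_contra hcon
    push_neg at hcon
    obtain ⟨a1, ha1⟩ := hcon
    have ha1arc : a1 ∈ arcSet T s0 Ls Us Lx Ux Ly Uy := by
      by_contra h
      exact ha1 0 (by rw [hvan a1 h]; norm_num)
    have ht0a : 1 ≤ a1.1 := ha1arc.1
    have ht0b : a1.1 ≤ T := ha1arc.2.1
    have hpos1 : 0 < α a1 := by
      have h0 : α a1 ≠ 0 := fun h => ha1 0 (by rw [h]; norm_num)
      exact lt_of_le_of_ne (hp a1 ha1arc) (Ne.symm h0)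
    have hlt1 : α a1 < 1 := by
      have hle : α a1 ≤ 1 := by
        rw [← layer_total hconsF hsrcF hT a1.1 ht0a ht0b]
        apply Finset.single_le_sum (f := α)
          (fun b hb => hp b ((mem_Afin).1 (Finset.mem_filter.1 hb).1))
        exact Finset.mem_filter.2 ⟨(mem_Afin).2 ha1arc, rfl⟩
      exact lt_of_le_of_ne hle (fun h => ha1 1 (by rw [h]; norm_num))
    -- find a second positive arc in the same layer
    have hsum_erase : 0 < ∑ a ∈ ((Afin T s0 Ls Us Lx Ux Ly Uy).filter
        (fun a => a.1 = a1.1)).erase a1, α a := by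
      have hmem1 : a1 ∈ (Afin T s0 Ls Us Lx Ux Ly Uy).filter (fun a => a.1 = a1.1) :=
        Finset.mem_filter.2 ⟨(mem_Afin).2 ha1arc, rfl⟩
      have := Finset.add_sum_erase _ α hmem1
      have hlt := layer_total hconsF hsrcF hT a1.1 ht0a ht0b
      linarith [this.symm ▸ hlt]
    obtain ⟨a2, ha2mem, ha2ne⟩ :=
      Finset.exists_ne_zero_of_sum_ne_zero (ne_of_gt hsum_erase)
    have ha2ne1 : a2 ≠ a1 := Finset.ne_of_mem_erase ha2mem
    obtain ⟨ha2A, ha2t⟩ := Finset.mem_filter.1 (Finset.mem_of_mem_erase ha2mem)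
    have ha2arc : a2 ∈ arcSet T s0 Ls Us Lx Ux Ly Uy := (mem_Afin).1 ha2A
    have hpos2 : 0 < α a2 := lt_of_le_of_ne (hp a2 ha2arc) (Ne.symm ha2ne)
    -- two paths through a1 and a2
    obtain ⟨c1, hc1k, hc1props, hc1match⟩ := exists_path hconsF hp hT ha1arc hpos1
    obtain ⟨c2, hc2k, hc2props, hc2match⟩ := exists_path hconsF hp hT ha2arc hpos2
    set d : ℕ × ℝ × ℝ → ℝ := dPath T c1 c2 with hd
    -- the epsilon
    set B : Finset ℝ :=
      ((Finset.Icc 1 T).image fun i => α (c1 i)) ∪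
      ((Finset.Icc 1 T).image fun i => α (c2 i)) ∪
      (((Finset.Icc 1 T).filter fun u => w u < 1).image fun u => 1 - w u) ∪
      (((Finset.Icc 1 T).filter fun u => z u < 1).image fun u => 1 - z u) with hB
    have hBne : B.Nonempty := by
      refine ⟨α (c1 1), ?_⟩
      simp only [hB, Finset.mem_union]
      exact Or.inl (Or.inl (Or.inl (Finset.mem_image_of_mem _
        (Finset.mem_Icc.2 ⟨le_rfl, hT⟩))))
    set ε : ℝ := B.min' hBne with hε
    have hεpos : 0 < ε := by
      rw [hε, Finset.lt_min'_iff]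
      intro b hb
      simp only [hB, Finset.mem_union, Finset.mem_image, Finset.mem_filter,
        Finset.mem_Icc] at hb
      rcases hb with ((⟨i, hi, rfl⟩ | ⟨i, hi, rfl⟩) | ⟨u, hu, rfl⟩) | ⟨u, hu, rfl⟩
      · exact (hc1props i hi.1 hi.2).2.2
      · exact (hc2props i hi.1 hi.2).2.2
      · linarith [hu.2]
      · linarith [hu.2]
    -- abbreviations
    have hεB : ∀ b ∈ B, ε ≤ b := fun b hb => Finset.min'_le B b hb
    have hεnn : 0 ≤ ε := le_of_lt hεpos
    have hc1pair : ∀ i, 1 ≤ i → i ≤ T →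
        c1 i ∈ arcSet T s0 Ls Us Lx Ux Ly Uy ∧ (c1 i).1 = i :=
      fun i h1 h2 => ⟨(hc1props i h1 h2).1, (hc1props i h1 h2).2.1⟩
    have hc2pair : ∀ i, 1 ≤ i → i ≤ T →
        c2 i ∈ arcSet T s0 Ls Us Lx Ux Ly Uy ∧ (c2 i).1 = i :=
      fun i h1 h2 => ⟨(hc2props i h1 h2).1, (hc2props i h1 h2).2.1⟩
    -- d at a1 is 1
    have hda1 : d a1 = 1 := by
      have h1 : pathInd T c1 a1 = 1 := pathInd_eq_one ht0a ht0b (by rw [hc1k])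
      have h2 : pathInd T c2 a1 = 0 := by
        apply if_neg
        rintro ⟨-, -, h3⟩
        have : a1 = a2 := by rw [h3, ← ha2t, hc2k]
        exact ha2ne1 this.symm
      rw [hd]
      simp [dPath, h1, h2]
    -- d vanishes off the arc set
    have hdoff : ∀ a ∉ arcSet T s0 Ls Us Lx Ux Ly Uy, d a = 0 := by
      intro a ha
      rw [hd]
      simp [dPath,
        pathInd_eq_zero_off (fun i hi1 hi2 => (hc1props i hi1 hi2).1) ha,
        pathInd_eq_zero_off (fun i hi1 hi2 => (hc2props i hi1 hi2).1) ha]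
    -- structure of the support of d
    have hdsupp : ∀ a, d a = 0 ∨ ((d a = 1 ∨ d a = -1) ∧ ε ≤ α a) := by
      intro a
      rw [hd]
      by_cases h1 : 1 ≤ a.1 ∧ a.1 ≤ T ∧ a = c1 a.1 <;>
        by_cases h2 : 1 ≤ a.1 ∧ a.1 ≤ T ∧ a = c2 a.1
      · left
        show pathInd T c1 a - pathInd T c2 a = 0
        rw [pathInd, pathInd, if_pos h1, if_pos h2]; ring
      · right
        refine ⟨Or.inl (by
          show pathInd T c1 a - pathInd T c2 a = 1
          rw [pathInd, pathInd, if_pos h1, if_neg h2]; ring), ?_⟩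
        obtain ⟨hb1, hb2, hb3⟩ := h1
        have : α (c1 a.1) ∈ B := by
          simp only [hB, Finset.mem_union]
          exact Or.inl (Or.inl (Or.inl (Finset.mem_image_of_mem _
            (Finset.mem_Icc.2 ⟨hb1, hb2⟩))))
        rw [hb3]
        exact hεB _ this
      · right
        refine ⟨Or.inr (by
          show pathInd T c1 a - pathInd T c2 a = -1
          rw [pathInd, pathInd, if_neg h1, if_pos h2]; ring), ?_⟩
        obtain ⟨hb1, hb2, hb3⟩ := h2
        have : α (c2 a.1) ∈ B := by
          simp only [hB, Finset.mem_union]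
          exact Or.inl (Or.inl (Or.inr (Finset.mem_image_of_mem _
            (Finset.mem_Icc.2 ⟨hb1, hb2⟩))))
        rw [hb3]
        exact hεB _ this
      · left
        show pathInd T c1 a - pathInd T c2 a = 0
        rw [pathInd, pathInd, if_neg h1, if_neg h2]; ring
    -- layer sums of d
    have hdsum : ∀ (Q : ℕ × ℝ × ℝ → Prop) [DecidablePred Q], ∀ t, 1 ≤ t → t ≤ T →
        ∑ a ∈ (Afin T s0 Ls Us Lx Ux Ly Uy).filter (fun a => a.1 = t ∧ Q a), d a =
          (if Q (c1 t) then (1:ℝ) else 0) - (if Q (c2 t) then (1:ℝ) else 0) := by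
      intro Q _ t h1 h2
      rw [hd]
      simp only [dPath]
      rw [Finset.sum_sub_distrib, pathInd_sum hc1pair t h1 h2 Q,
        pathInd_sum hc2pair t h1 h2 Q]
    -- perturbed flows satisfy the flow constraints
    have hconsη : ∀ η : ℝ, ∀ t, 1 ≤ t → t ≤ T - 1 →
        ∀ v ∈ nodeSet T s0 Ls Us Lx Ux Ly Uy t,
        ∑ a ∈ (Afin T s0 Ls Us Lx Ux Ly Uy).filter (fun a => a.1 = t ∧ a.2.2 = v),
          (α a + η * d a) =
        ∑ a ∈ (Afin T s0 Ls Us Lx Ux Ly Uy).filter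
          (fun a => a.1 = t + 1 ∧ a.2.1 = v), (α a + η * d a) := by
      intro η t h1 h2 v hv
      rw [Finset.sum_add_distrib, Finset.sum_add_distrib, ← Finset.mul_sum,
        ← Finset.mul_sum, hconsF t h1 h2 v hv,
        hdsum (fun a => a.2.2 = v) t h1 (by omega),
        hdsum (fun a => a.2.1 = v) (t+1) (by omega) (by omega),
        hc1match t h1 (by omega), hc2match t h1 (by omega)]
    have hsrcη : ∀ η : ℝ,
        ∑ a ∈ (Afin T s0 Ls Us Lx Ux Ly Uy).filter
          (fun a => a.1 = 1 ∧ a.2.1 = s0), (α a + η * d a) = 1 := by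
      intro η
      rw [Finset.sum_add_distrib, ← Finset.mul_sum, hsrcF,
        hdsum (fun a => a.2.1 = s0) 1 le_rfl hT,
        tail_eq_s0 (hc1pair 1 le_rfl hT).1 (hc1pair 1 le_rfl hT).2,
        tail_eq_s0 (hc2pair 1 le_rfl hT).1 (hc2pair 1 le_rfl hT).2]
      simp
    have hposη : ∀ η : ℝ, |η| ≤ ε → ∀ a ∈ arcSet T s0 Ls Us Lx Ux Ly Uy,
        0 ≤ α a + η * d a := by
      intro η hη a ha
      rcases hdsupp a with h | ⟨hd1, hεa⟩
      · rw [h, mul_zero, add_zero]; exact hp a ha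
      · have habs : |η * d a| ≤ ε := by
          rw [abs_mul]
          rcases hd1 with h | h <;> rw [h] <;> simp [abs_of_nonneg] <;> exact hη
        have := abs_le.1 habs
        linarith
    have hvanη : ∀ η : ℝ, ∀ a, a ∉ arcSet T s0 Ls Us Lx Ux Ly Uy →
        α a + η * d a = 0 := by
      intro η a ha
      rw [hvan a ha, hdoff a ha, mul_zero, add_zero]
    have hboundη : ∀ η : ℝ, |η| ≤ ε → ∀ t, 1 ≤ t → t ≤ T →
        ∀ (Q : ℕ × ℝ × ℝ → Prop) [DecidablePred Q],
        ∑ a ∈ (Afin T s0 Ls Us Lx Ux Ly Uy).filter (fun a => a.1 = t ∧ Q a),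
          (α a + η * d a) ≤ 1 := by
      intro η hη t h1 h2 Q _
      exact layer_subset_le (hconsη η) (hsrcη η) (hposη η hη) hT t h1 h2 Q
    -- perturbed filtered sums
    have hSη : ∀ (q : ℕ × ℝ × ℝ → ℝ) (η : ℝ) (t : ℕ), 1 ≤ t → t ≤ T →
        ∑ a ∈ (Afin T s0 Ls Us Lx Ux Ly Uy).filter (fun a => a.1 = t ∧ 0 < q a),
          (α a + η * d a) =
        (∑ a ∈ (Afin T s0 Ls Us Lx Ux Ly Uy).filter (fun a => a.1 = t ∧ 0 < q a),
          α a) + η * cInd q c1 c2 t := by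
      intro q η t h1 h2
      rw [Finset.sum_add_distrib, ← Finset.mul_sum,
        hdsum (fun a => 0 < q a) t h1 h2]
      rfl
    have hcb : ∀ (q : ℕ × ℝ × ℝ → ℝ) (t : ℕ), |cInd q c1 c2 t| ≤ 1 := by
      intro q t
      unfold cInd
      by_cases h1 : 0 < q (c1 t) <;> by_cases h2 : 0 < q (c2 t) <;>
        simp [h1, h2]
    have hc0 : ∀ (q : ℕ × ℝ × ℝ → ℝ) (t : ℕ), 1 ≤ t → t ≤ T →
        (∑ a ∈ (Afin T s0 Ls Us Lx Ux Ly Uy).filter (fun a => a.1 = t ∧ 0 < q a),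
          α a) = 1 → cInd q c1 c2 t = 0 := by
      intro q t h1 h2 hS1
      have hup := hboundη ε (le_of_eq (abs_of_pos hεpos)) t h1 h2 (fun a => 0 < q a)
      have hdn := hboundη (-ε) (by rw [abs_neg]; exact le_of_eq (abs_of_pos hεpos))
        t h1 h2 (fun a => 0 < q a)
      rw [hSη q ε t h1 h2, hS1] at hup
      rw [hSη q (-ε) t h1 h2, hS1] at hdn
      have h3 : ε * cInd q c1 c2 t = 0 := by linarith
      rcases mul_eq_zero.1 h3 with h | h
      · exact absurd h (ne_of_gt hεpos)
      · exact h
    -- converted w/z constraints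
    have hweqF : ∀ t, 1 ≤ t → t ≤ T → 0 < Lx t →
        w t = ∑ a ∈ (Afin T s0 Ls Us Lx Ux Ly Uy).filter
          (fun a => a.1 = t ∧ 0 < qx a), α a := by
      intro t h1 h2 h3
      have := hweq t h1 h2 h3
      rwa [finsum_filter_eq] at this
    have hwgeF : ∀ t, 1 ≤ t → t ≤ T → Lx t = 0 →
        w t ≥ ∑ a ∈ (Afin T s0 Ls Us Lx Ux Ly Uy).filter
          (fun a => a.1 = t ∧ 0 < qx a), α a := by
      intro t h1 h2 h3
      have := hwge t h1 h2 h3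
      rwa [finsum_filter_eq] at this
    have hzeqF : ∀ t, 1 ≤ t → t ≤ T → 0 < Ly t →
        z t = ∑ a ∈ (Afin T s0 Ls Us Lx Ux Ly Uy).filter
          (fun a => a.1 = t ∧ 0 < qy a), α a := by
      intro t h1 h2 h3
      have := hzeq t h1 h2 h3
      rwa [finsum_filter_eq] at this
    have hzgeF : ∀ t, 1 ≤ t → t ≤ T → Ly t = 0 →
        z t ≥ ∑ a ∈ (Afin T s0 Ls Us Lx Ux Ly Uy).filter
          (fun a => a.1 = t ∧ 0 < qy a), α a := by
      intro t h1 h2 h3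
      have := hzge t h1 h2 h3
      rwa [finsum_filter_eq] at this
    -- the w/z constraints hold for the perturbed point: generic helper facts
    have hwz_bound : ∀ (q : ℕ × ℝ × ℝ → ℝ) (η : ℝ), |η| ≤ ε → ∀ t, 1 ≤ t → t ≤ T →
        (∑ a ∈ (Afin T s0 Ls Us Lx Ux Ly Uy).filter
          (fun a => a.1 = t ∧ 0 < q a), α a) + η * cInd q c1 c2 t ≤ 1 := by
      intro q η hη t h1 h2
      have := hboundη η hη t h1 h2 (fun a => 0 < q a)
      rwa [hSη q η t h1 h2] at this
    -- Feasibility of the perturbed points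
    have hfeas : ∀ η : ℝ, |η| ≤ ε →
        ((fun a => α a + η * d a),
          xPert T s0 Ls Us Lx Ux Ly Uy qx (fun a => α a + η * d a),
          xPert T s0 Ls Us Lx Ux Ly Uy qy (fun a => α a + η * d a),
          wPert T w (cInd qx c1 c2) η,
          wPert T z (cInd qy c1 c2) η,
          sPert T s0 Ls Us Lx Ux Ly Uy qx qy (fun a => α a + η * d a)) ∈
        Pprime T s0 Ls Us Lx Ux Ly Uy := by
      intro η hη
      show PprimeMem T s0 Ls Us Lx Ux Ly Uy (fun a => α a + η * d a)
        (xPert T s0 Ls Us Lx Ux Ly Uy qx (fun a => α a + η * d a))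
        (xPert T s0 Ls Us Lx Ux Ly Uy qy (fun a => α a + η * d a))
        (wPert T w (cInd qx c1 c2) η) (wPert T z (cInd qy c1 c2) η)
        (sPert T s0 Ls Us Lx Ux Ly Uy qx qy (fun a => α a + η * d a))
      refine ⟨?_, ?_, ?_, ?_, ?_, ⟨?_, ?_⟩, ?_, ?_, ?_, ?_, ?_, ?_⟩
      · intro t h1 h2 v hv
        rw [finsum_filter_eq, finsum_filter_eq]
        exact hconsη η t h1 h2 v hv
      · rw [finsum_filter_eq]
        exact hsrcη η
      · exact hposη η hη
      · exact hvanη η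
      · intro t h1 h2
        constructor
        · rw [finsum_filter_eq]
          simp only [xPert, if_pos (show 1 ≤ t ∧ t ≤ T from ⟨h1, h2⟩)]
        · rw [finsum_filter_eq]
          simp only [xPert, if_pos (show 1 ≤ t ∧ t ≤ T from ⟨h1, h2⟩)]
      · simp [sPert]
      · intro t h1 h2
        obtain ⟨u, rfl⟩ : ∃ u, t = u + 1 := ⟨t - 1, by omega⟩
        by_cases hu : u = 0
        · subst hu
          simp only [sPert, Nat.add_sub_cancel]
          rw [if_neg (by norm_num : ¬ (0:ℕ) + 1 = 0), if_pos (by omega : 0 + 1 ≤ T),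
            if_true, show Finset.Icc 1 (0+1) = {1} by rfl, Finset.sum_singleton]
          ring
        · simp only [sPert, Nat.add_sub_cancel]
          rw [if_neg (by omega : ¬ u + 1 = 0), if_pos h2, if_neg hu,
            if_pos (by omega : u ≤ T),
            Finset.sum_Icc_succ_top (by omega : 1 ≤ u + 1)]
          ring
      · intro t h1 h2 hLxt
        rw [finsum_filter_eq, hSη qx η t h1 h2]
        simp only [wPert, if_pos (show 1 ≤ t ∧ t ≤ T from ⟨h1, h2⟩)]
        have hwS := hweqF t h1 h2 hLxt
        by_cases hw1 : w t = 1
        · rw [if_pos hw1]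
          rw [hw1] at hwS
          rw [hc0 qx t h1 h2 hwS.symm, mul_zero, ← hwS, add_zero]
        · rw [if_neg hw1, hwS]
      · intro t h1 h2 hLx0
        rw [ge_iff_le, finsum_filter_eq, hSη qx η t h1 h2]
        simp only [wPert, if_pos (show 1 ≤ t ∧ t ≤ T from ⟨h1, h2⟩)]
        have hwS := hwgeF t h1 h2 hLx0
        by_cases hw1 : w t = 1
        · rw [if_pos hw1]
          rcases le_or_gt 0 (cInd qx c1 c2 t) with h | h
          · have h5 : η * cInd qx c1 c2 t ≤ ε * cInd qx c1 c2 t :=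
              mul_le_mul_of_nonneg_right (abs_le.1 hη).2 h
            have h6 := hwz_bound qx ε (le_of_eq (abs_of_pos hεpos)) t h1 h2
            linarith
          · have h5 : η * cInd qx c1 c2 t ≤ (-ε) * cInd qx c1 c2 t :=
              mul_le_mul_of_nonpos_right (abs_le.1 hη).1 h.le
            have h6 := hwz_bound qx (-ε)
              (by rw [abs_neg]; exact le_of_eq (abs_of_pos hεpos)) t h1 h2
            linarith
        · rw [if_neg hw1]
          linarith
      · intro t h1 h2 hLyt
        rw [finsum_filter_eq, hSη qy η t h1 h2]
        simp only [wPert, if_pos (show 1 ≤ t ∧ t ≤ T from ⟨h1, h2⟩)]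
        have hwS := hzeqF t h1 h2 hLyt
        by_cases hw1 : z t = 1
        · rw [if_pos hw1]
          rw [hw1] at hwS
          rw [hc0 qy t h1 h2 hwS.symm, mul_zero, ← hwS, add_zero]
        · rw [if_neg hw1, hwS]
      · intro t h1 h2 hLy0
        rw [ge_iff_le, finsum_filter_eq, hSη qy η t h1 h2]
        simp only [wPert, if_pos (show 1 ≤ t ∧ t ≤ T from ⟨h1, h2⟩)]
        have hwS := hzgeF t h1 h2 hLy0
        by_cases hw1 : z t = 1
        · rw [if_pos hw1]
          rcases le_or_gt 0 (cInd qy c1 c2 t) with h | h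
          · have h5 : η * cInd qy c1 c2 t ≤ ε * cInd qy c1 c2 t :=
              mul_le_mul_of_nonneg_right (abs_le.1 hη).2 h
            have h6 := hwz_bound qy ε (le_of_eq (abs_of_pos hεpos)) t h1 h2
            linarith
          · have h5 : η * cInd qy c1 c2 t ≤ (-ε) * cInd qy c1 c2 t :=
              mul_le_mul_of_nonpos_right (abs_le.1 hη).1 h.le
            have h6 := hwz_bound qy (-ε)
              (by rw [abs_neg]; exact le_of_eq (abs_of_pos hεpos)) t h1 h2
            linarith
        · rw [if_neg hw1]
          linarith
      · intro t h1 h2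
        have hb : ∀ (v : ℕ → ℝ) (q : ℕ × ℝ × ℝ → ℝ), v t ≤ 1 → (v t < 1 → ε ≤ 1 - v t) →
            wPert T v (cInd q c1 c2) η t ≤ 1 := by
          intro v q hv1 hv2
          simp only [wPert, if_pos (show 1 ≤ t ∧ t ≤ T from ⟨h1, h2⟩)]
          by_cases hw1 : v t = 1
          · rw [if_pos hw1]
          · rw [if_neg hw1]
            have hvlt : v t < 1 := lt_of_le_of_ne hv1 hw1
            have hεv := hv2 hvlt
            have h5 : η * cInd q c1 c2 t ≤ ε := by
              calc η * cInd q c1 c2 t ≤ |η * cInd q c1 c2 t| := le_abs_self _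
                _ = |η| * |cInd q c1 c2 t| := abs_mul _ _
                _ ≤ ε * 1 := mul_le_mul hη (hcb q t) (abs_nonneg _) hεnn
                _ = ε := mul_one ε
            linarith
        constructor
        · refine hb w qx (hwz1 t h1 h2).1 (fun hlt => ?_)
          apply hεB
          simp only [hB, Finset.mem_union]
          exact Or.inl (Or.inr (Finset.mem_image_of_mem _
            (Finset.mem_filter.2 ⟨Finset.mem_Icc.2 ⟨h1, h2⟩, hlt⟩)))
        · refine hb z qy (hwz1 t h1 h2).2 (fun hlt => ?_)
          apply hεB
          simp only [hB, Finset.mem_union]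
          exact Or.inr (Finset.mem_image_of_mem _
            (Finset.mem_filter.2 ⟨Finset.mem_Icc.2 ⟨h1, h2⟩, hlt⟩))
      · intro t htout
        have hT' : ¬ t ≤ T ∨ t = 0 := by omega
        refine ⟨?_, ?_, ?_, ?_, ?_⟩
        · simp [xPert, htout]
        · simp [xPert, htout]
        · simp [wPert, htout]
        · simp [wPert, htout]
        · intro hne0
          have : ¬ t ≤ T := by omega
          simp [sPert, hne0, this]
    -- closed form for s
    have hclosed : ∀ u, 1 ≤ u → u ≤ T →
        s u = s0 + ∑ i ∈ Finset.Icc 1 u, (x i - y i) := by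
      intro u
      induction u with
      | zero => omega
      | succ u ih =>
        intro h1 h2
        by_cases hu : u = 0
        · subst hu
          rw [hsrec (0+1) le_rfl h2, show Finset.Icc 1 (0+1) = {1} by rfl,
            Finset.sum_singleton, show (0+1) - 1 = 0 by omega, hs00]
          ring
        · rw [hsrec (u+1) h1 h2, Finset.sum_Icc_succ_top (by omega : 1 ≤ u + 1),
            Nat.add_sub_cancel, ih (by omega) (by omega)]
          ring
    -- split identity for perturbed aggregates
    have hsplit : ∀ (q : ℕ × ℝ × ℝ → ℝ) (η : ℝ) (u : ℕ),
        ∑ a ∈ (Afin T s0 Ls Us Lx Ux Ly Uy).filter (fun a => a.1 = u),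
          q a * (α a + η * d a) =
        (∑ a ∈ (Afin T s0 Ls Us Lx Ux Ly Uy).filter (fun a => a.1 = u),
          q a * α a) +
        η * ∑ a ∈ (Afin T s0 Ls Us Lx Ux Ly Uy).filter (fun a => a.1 = u),
          q a * d a := by
      intro q η u
      rw [Finset.mul_sum, ← Finset.sum_add_distrib]
      apply Finset.sum_congr rfl
      intro a _
      ring
    have hxPmid : ∀ (q : ℕ → ℝ) (qq : ℕ × ℝ × ℝ → ℝ)
        (hq : ∀ u, 1 ≤ u → u ≤ T → q u =
          ∑ a ∈ (Afin T s0 Ls Us Lx Ux Ly Uy).filter (fun a => a.1 = u), qq a * α a)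
        (hq0 : ∀ u, ¬(1 ≤ u ∧ u ≤ T) → q u = 0) (u : ℕ),
        xPert T s0 Ls Us Lx Ux Ly Uy qq (fun a => α a + ε * d a) u +
        xPert T s0 Ls Us Lx Ux Ly Uy qq (fun a => α a + (-ε) * d a) u = 2 * q u := by
      intro q qq hq hq0 u
      by_cases hu : 1 ≤ u ∧ u ≤ T
      · simp only [xPert, if_pos hu]
        rw [hsplit qq ε u, hsplit qq (-ε) u, hq u hu.1 hu.2]
        ring
      · simp only [xPert, if_neg hu]
        rw [hq0 u hu]
        ring
    have hxmid := hxPmid x qx (fun u h1 h2 => by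
        have := (hxy u h1 h2).1
        rwa [finsum_filter_eq] at this)
      (fun u hu => (houth u hu).1)
    have hymid := hxPmid y qy (fun u h1 h2 => by
        have := (hxy u h1 h2).2
        rwa [finsum_filter_eq] at this)
      (fun u hu => (houth u hu).2.1)
    -- midpoint identity
    have hmid : (1/2 : ℝ) •
        ((fun a => α a + ε * d a),
          xPert T s0 Ls Us Lx Ux Ly Uy qx (fun a => α a + ε * d a),
          xPert T s0 Ls Us Lx Ux Ly Uy qy (fun a => α a + ε * d a),
          wPert T w (cInd qx c1 c2) ε,
          wPert T z (cInd qy c1 c2) ε,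
          sPert T s0 Ls Us Lx Ux Ly Uy qx qy (fun a => α a + ε * d a)) +
        (1/2 : ℝ) •
        ((fun a => α a + (-ε) * d a),
          xPert T s0 Ls Us Lx Ux Ly Uy qx (fun a => α a + (-ε) * d a),
          xPert T s0 Ls Us Lx Ux Ly Uy qy (fun a => α a + (-ε) * d a),
          wPert T w (cInd qx c1 c2) (-ε),
          wPert T z (cInd qy c1 c2) (-ε),
          sPert T s0 Ls Us Lx Ux Ly Uy qx qy (fun a => α a + (-ε) * d a)) =
        (α, x, y, w, z, s) := by
      simp only [Prod.smul_mk, Prod.mk_add_mk, Prod.mk.injEq]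
      refine ⟨?_, ?_, ?_, ?_, ?_, ?_⟩
      · funext a
        simp only [Pi.add_apply, Pi.smul_apply, smul_eq_mul]
        ring
      · funext u
        simp only [Pi.add_apply, Pi.smul_apply, smul_eq_mul]
        have := hxmid u
        linarith
      · funext u
        simp only [Pi.add_apply, Pi.smul_apply, smul_eq_mul]
        have := hymid u
        linarith
      · funext u
        simp only [Pi.add_apply, Pi.smul_apply, smul_eq_mul, wPert]
        by_cases hu : 1 ≤ u ∧ u ≤ T
        · rw [if_pos hu, if_pos hu]
          by_cases hw1 : w u = 1
          · rw [if_pos hw1, if_pos hw1, hw1]; norm_num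
          · rw [if_neg hw1, if_neg hw1]; ring
        · rw [if_neg hu, if_neg hu, (houth u hu).2.2.1]; norm_num
      · funext u
        simp only [Pi.add_apply, Pi.smul_apply, smul_eq_mul, wPert]
        by_cases hu : 1 ≤ u ∧ u ≤ T
        · rw [if_pos hu, if_pos hu]
          by_cases hw1 : z u = 1
          · rw [if_pos hw1, if_pos hw1, hw1]; norm_num
          · rw [if_neg hw1, if_neg hw1]; ring
        · rw [if_neg hu, if_neg hu, (houth u hu).2.2.2.1]; norm_num
      · funext u
        simp only [Pi.add_apply, Pi.smul_apply, smul_eq_mul, sPert]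
        by_cases hu0 : u = 0
        · rw [if_pos hu0, if_pos hu0, hu0, hs00]; ring
        · rw [if_neg hu0, if_neg hu0]
          by_cases huT : u ≤ T
          · rw [if_pos huT, if_pos huT]
            have hsum2 : (∑ i ∈ Finset.Icc 1 u,
                (xPert T s0 Ls Us Lx Ux Ly Uy qx (fun a => α a + ε * d a) i -
                 xPert T s0 Ls Us Lx Ux Ly Uy qy (fun a => α a + ε * d a) i)) +
                (∑ i ∈ Finset.Icc 1 u,
                (xPert T s0 Ls Us Lx Ux Ly Uy qx (fun a => α a + (-ε) * d a) i -
                 xPert T s0 Ls Us Lx Ux Ly Uy qy (fun a => α a + (-ε) * d a) i)) =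
                2 * ∑ i ∈ Finset.Icc 1 u, (x i - y i) := by
              rw [← Finset.sum_add_distrib, Finset.mul_sum]
              apply Finset.sum_congr rfl
              intro i _
              have h1 := hxmid i
              have h2 := hymid i
              linarith
            rw [hclosed u (by omega) huT]
            linarith
          · rw [if_neg huT, if_neg huT,
              (houth u (by omega)).2.2.2.2 hu0]
            ring
    -- apply extremality
    obtain ⟨hp1, -⟩ := hextr _ (hfeas ε (le_of_eq (abs_of_pos hεpos)))
      _ (hfeas (-ε) (by rw [abs_neg]; exact le_of_eq (abs_of_pos hεpos)))
      ⟨1/2, 1/2, by norm_num, by norm_num, by norm_num, hmid⟩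
    have hfin := congrArg (fun p => p.1 a1) hp1
    simp only at hfin
    rw [hda1, mul_one] at hfin
    linarith
  refine ⟨haint, ?_, ?_⟩
  · -- integrality of w
    intro t
    by_cases ht : 1 ≤ t ∧ t ≤ T
    · rcases eq_or_lt_of_le (hnn t ht.1 ht.2).2.2.1 with hLx | hLx
      · -- inequality case
        have hge := hwge t ht.1 ht.2 hLx.symm
        rw [finsum_filter_eq] at hge
        set Sx : ℝ := ∑ a ∈ (Afin T s0 Ls Us Lx Ux Ly Uy).filter
          (fun a => a.1 = t ∧ 0 < qx a), α a with hSx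
        have hcases : w t = 1 ∨ w t = Sx := by
          by_contra hne
          push_neg at hne
          obtain ⟨hne1, hne2⟩ := hne
          have hgt : Sx < w t := lt_of_le_of_ne hge (Ne.symm hne2)
          have hlt : w t < 1 := lt_of_le_of_ne (hwz1 t ht.1 ht.2).1 hne1
          set δ : ℝ := min (w t - Sx) (1 - w t) with hδdef
          have hδ : 0 < δ := lt_min (by linarith) (by linarith)
          have hfeasw : ∀ δ' : ℝ, |δ'| ≤ δ →
              (α, x, y, fun u => if u = t then w t + δ' else w u, z, s) ∈
                Pprime T s0 Ls Us Lx Ux Ly Uy := by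
            intro δ' hδ'
            have habs := abs_le.1 hδ'
            have hδ1 := min_le_left (w t - Sx) (1 - w t)
            have hδ2 := min_le_right (w t - Sx) (1 - w t)
            rw [← hδdef] at hδ1 hδ2
            show PprimeMem T s0 Ls Us Lx Ux Ly Uy α x y
              (fun u => if u = t then w t + δ' else w u) z s
            refine ⟨hc, hs1, hp, hvan, hxy, ⟨hs00, hsrec⟩, ?_, ?_, hzeq, hzge, ?_, ?_⟩
            · intro u h1 h2 hLxu
              by_cases hu : u = t
              · subst hu; rw [← hLx] at hLxu; exact absurd hLxu (lt_irrefl 0)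
              · simp only [if_neg hu]; exact hweq u h1 h2 hLxu
            · intro u h1 h2 h0
              by_cases hu : u = t
              · subst hu
                simp only [eq_self_iff_true, if_true, ge_iff_le]
                rw [finsum_filter_eq, ← hSx]
                linarith
              · simp only [if_neg hu]; exact hwge u h1 h2 h0
            · intro u h1 h2
              refine ⟨?_, (hwz1 u h1 h2).2⟩
              by_cases hu : u = t
              · subst hu; simp only [eq_self_iff_true, if_true]; linarith
              · simp only [if_neg hu]; exact (hwz1 u h1 h2).1
            · intro u hu
              have hut : u ≠ t := fun h => hu (h ▸ ht)
              refine ⟨(houth u hu).1, (houth u hu).2.1, ?_, (houth u hu).2.2.2.1,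
                (houth u hu).2.2.2.2⟩
              simp only [if_neg hut]
              exact (houth u hu).2.2.1
          have hmid : (1/2 : ℝ) • (α, x, y, fun u => if u = t then w t + δ else w u, z, s)
              + (1/2 : ℝ) • (α, x, y, fun u => if u = t then w t + (-δ) else w u, z, s)
              = (α, x, y, w, z, s) := by
            simp only [Prod.smul_mk, Prod.mk_add_mk, Prod.mk.injEq]
            exact ⟨half_smul α, half_smul x, half_smul y, half_smul_if w δ,
              half_smul z, half_smul s⟩
          have := hextr _ (hfeasw δ (le_of_eq (abs_of_pos hδ)))
            _ (hfeasw (-δ) (by rw [abs_neg]; exact le_of_eq (abs_of_pos hδ)))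
            ⟨1/2, 1/2, by norm_num, by norm_num, by norm_num, hmid⟩
          have hw1 := congrArg (fun p => p.2.2.2.1 t) this.1
          simp at hw1
          linarith
        rcases hcases with h | h
        · exact ⟨1, by rw [h]; norm_num⟩
        · rw [h, hSx]
          exact sum_int _ _ haint
      · -- equality case
        have heq := hweq t ht.1 ht.2 hLx
        rw [finsum_filter_eq] at heq
        rw [heq]
        exact sum_int _ _ haint
    · exact ⟨0, by rw [(houth t ht).2.2.1]; norm_num⟩
  · -- integrality of z
    intro t
    by_cases ht : 1 ≤ t ∧ t ≤ T
    · rcases eq_or_lt_of_le (hnn t ht.1 ht.2).2.2.2.2.1 with hLy | hLy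
      · have hge := hzge t ht.1 ht.2 hLy.symm
        rw [finsum_filter_eq] at hge
        set Sy : ℝ := ∑ a ∈ (Afin T s0 Ls Us Lx Ux Ly Uy).filter
          (fun a => a.1 = t ∧ 0 < qy a), α a with hSy
        have hcases : z t = 1 ∨ z t = Sy := by
          by_contra hne
          push_neg at hne
          obtain ⟨hne1, hne2⟩ := hne
          have hgt : Sy < z t := lt_of_le_of_ne hge (Ne.symm hne2)
          have hlt : z t < 1 := lt_of_le_of_ne (hwz1 t ht.1 ht.2).2 hne1
          set δ : ℝ := min (z t - Sy) (1 - z t) with hδdef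
          have hδ : 0 < δ := lt_min (by linarith) (by linarith)
          have hfeasz : ∀ δ' : ℝ, |δ'| ≤ δ →
              (α, x, y, w, fun u => if u = t then z t + δ' else z u, s) ∈
                Pprime T s0 Ls Us Lx Ux Ly Uy := by
            intro δ' hδ'
            have habs := abs_le.1 hδ'
            have hδ1 := min_le_left (z t - Sy) (1 - z t)
            have hδ2 := min_le_right (z t - Sy) (1 - z t)
            rw [← hδdef] at hδ1 hδ2
            show PprimeMem T s0 Ls Us Lx Ux Ly Uy α x y w
              (fun u => if u = t then z t + δ' else z u) s
            refine ⟨hc, hs1, hp, hvan, hxy, ⟨hs00, hsrec⟩, hweq, hwge, ?_, ?_, ?_, ?_⟩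
            · intro u h1 h2 hLyu
              by_cases hu : u = t
              · subst hu; rw [← hLy] at hLyu; exact absurd hLyu (lt_irrefl 0)
              · simp only [if_neg hu]; exact hzeq u h1 h2 hLyu
            · intro u h1 h2 h0
              by_cases hu : u = t
              · subst hu
                simp only [eq_self_iff_true, if_true, ge_iff_le]
                rw [finsum_filter_eq, ← hSy]
                linarith
              · simp only [if_neg hu]; exact hzge u h1 h2 h0
            · intro u h1 h2
              refine ⟨(hwz1 u h1 h2).1, ?_⟩
              by_cases hu : u = t
              · subst hu; simp only [eq_self_iff_true, if_true]; linarith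
              · simp only [if_neg hu]; exact (hwz1 u h1 h2).2
            · intro u hu
              have hut : u ≠ t := fun h => hu (h ▸ ht)
              refine ⟨(houth u hu).1, (houth u hu).2.1, (houth u hu).2.2.1, ?_,
                (houth u hu).2.2.2.2⟩
              simp only [if_neg hut]
              exact (houth u hu).2.2.2.1
          have hmid : (1/2 : ℝ) • (α, x, y, w, fun u => if u = t then z t + δ else z u, s)
              + (1/2 : ℝ) • (α, x, y, w, fun u => if u = t then z t + (-δ) else z u, s)
              = (α, x, y, w, z, s) := by
            simp only [Prod.smul_mk, Prod.mk_add_mk, Prod.mk.injEq]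
            exact ⟨half_smul α, half_smul x, half_smul y, half_smul w,
              half_smul_if z δ, half_smul s⟩
          have := hextr _ (hfeasz δ (le_of_eq (abs_of_pos hδ)))
            _ (hfeasz (-δ) (by rw [abs_neg]; exact le_of_eq (abs_of_pos hδ)))
            ⟨1/2, 1/2, by norm_num, by norm_num, by norm_num, hmid⟩
          have hz1 := congrArg (fun p => p.2.2.2.2.1 t) this.1
          simp at hz1
          linarith
        rcases hcases with h | h
        · exact ⟨1, by rw [h]; norm_num⟩
        · rw [h, hSy]
          exact sum_int _ _ haint
      · have heq := hzeq t ht.1 ht.2 hLy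
        rw [finsum_filter_eq] at heq
        rw [heq]
        exact sum_int _ _ haint
    · exact ⟨0, by rw [(houth t ht).2.2.2.1]; norm_num⟩
end
end
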